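/- arXiv:1207.2591 — 13 statements merged into one kernel-verified Lean document; each statement's English description precedes it below -/
import Mathlib

section
/- For every ε > 0 there exists a constant c > 0 with the following property: for every M there exist an integer n and a family F of n sets whose Venn diagram V(F) has size m ≥ M such that every IE-vector x for F satisfies ‖x‖₁ ≥ c · m^{2−ε}. -/
open Finset
open scoped Classical

variable {ι S : Type*}

def region (F : ι → Set S) (τ : Finset ι) : Set S :=
  (⋂ i ∈ τ, F i) \ ⋃ i ∉ τ, F i

def venn (F : ι → Set S) : Set (Finset ι) :=
  {τ | τ.Nonempty ∧ (region F τ).Nonempty}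

def nerve (F : ι → Set S) : Set (Finset ι) :=
  {σ | σ.Nonempty ∧ (⋂ i ∈ σ, F i).Nonempty}

def IsIEVector (F : ι → Set S) (x : Finset ι → ℝ) : Prop :=
  (∀ σ, σ ∉ nerve F → x σ = 0) ∧
  ∀ τ ∈ venn F, (∑ σ ∈ τ.powerset.filter (· ∈ nerve F), x σ) = 1

/-!
Index a family by the vectors `v` of `V = 𝔽₂ᵈ` and put `F_v = {W ≤ V | 0 ≠ v ∈ W}` on the set of
subspaces of `V`. The nonempty regions are the sets of nonzero vectors of the nonzero subspaces,
so `m` is the number of nonzero subspaces, at most `(d + 1) 2^(d + d²/4)`, while the nerve consists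
of the sets of nonzero vectors.

The Möbius function of the subspace lattice gives a dual certificate: with `y_W = ±μ(W, V)`, the
sum of `y_W` over the `W` containing a simplex `σ` is `±[span σ = V]`, so by weak LP duality every
IE-vector has `ℓ₁`-norm at least `∑_{W ≠ 0} y_W = 2^(d choose 2)`, which beats `m^(2 - ε)` for
large `d`.

Both the Möbius identity and the count of subspaces come from cutting the subspaces of `A` by a
hyperplane `ker φ`: a `W ≰ ker φ` is `W' ⊔ ⟨v⟩` with `W' = W ⊓ ker φ`, and each `W'` extends in
exactly `q^(dim (A ⊓ ker φ) - dim W')` ways.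
-/

open Module
open LinearMap (ker mem_ker)

noncomputable section

/-- `μ(W, A)` in the lattice of subspaces of a vector space over `𝔽_q`, for `W` of codimension `c`
in `A`. -/
def subspaceMobius (q : ℝ) (c : ℕ) : ℝ := (-1) ^ c * q ^ c.choose 2

theorem subspaceMobius_succ (q : ℝ) (c : ℕ) :
    subspaceMobius q (c + 1) = -(q ^ c * subspaceMobius q c) := by
  rw [subspaceMobius, subspaceMobius, Nat.choose_succ_succ', Nat.choose_one_right, pow_succ,
    pow_add]
  ring

namespace Submodule

section Field

variable {K V : Type*} [Field K] [AddCommGroup V] [Module K V]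

theorem exists_mem_apply_eq_one {φ : Dual K V} {W : Submodule K V} (hW : ¬W ≤ ker φ) :
    ∃ v ∈ W, φ v = 1 := by
  obtain ⟨v, hvW, hv⟩ := SetLike.not_le_iff_exists.mp hW
  rw [mem_ker] at hv
  exact ⟨(φ v)⁻¹ • v, W.smul_mem _ hvW, by simp [hv]⟩

theorem exists_dual_le_ker_apply_eq_one {U : Submodule K V} {v : V} (hv : v ∉ U) :
    ∃ φ : Dual K V, U ≤ ker φ ∧ φ v = 1 := by
  obtain ⟨φ, hφv, hφU⟩ := U.exists_dual_map_eq_bot_of_notMem hv inferInstance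
  refine ⟨(φ v)⁻¹ • φ, fun u hu => ?_, by simp [hφv]⟩
  have : φ u ∈ U.map φ := mem_map_of_mem hu
  rw [hφU, mem_bot] at this
  simp [this]

theorem sup_span_singleton_inf_ker {φ : Dual K V} {W : Submodule K V} (hW : W ≤ ker φ) {v : V}
    (hv : φ v = 1) : (W ⊔ K ∙ v) ⊓ ker φ = W := by
  refine le_antisymm (fun z hz => ?_) (le_inf le_sup_left hW)
  obtain ⟨hz, hzφ⟩ := mem_inf.mp hz
  obtain ⟨w, hw, _, hs, rfl⟩ := mem_sup.mp hz
  obtain ⟨a, rfl⟩ := mem_span_singleton.mp hs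
  have ha : a = 0 := by simpa [hv, mem_ker.mp (hW hw)] using hzφ
  simpa [ha] using hw

theorem inf_ker_sup_span_singleton {φ : Dual K V} {W : Submodule K V} {v : V} (hvW : v ∈ W)
    (hv : φ v = 1) : W ⊓ ker φ ⊔ K ∙ v = W := by
  refine le_antisymm (sup_le inf_le_left ((span_singleton_le_iff_mem _ _).mpr hvW))
    (fun w hw => ?_)
  have hker : w - φ w • v ∈ W ⊓ ker φ :=
    mem_inf.mpr ⟨W.sub_mem hw (W.smul_mem _ hvW), by simp [hv]⟩
  exact mem_sup.mpr ⟨_, hker, φ w • v, mem_span_singleton.mpr ⟨_, rfl⟩, sub_add_cancel _ _⟩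

theorem finrank_inf_ker_add_one [FiniteDimensional K V] {φ : Dual K V} {W : Submodule K V}
    (hW : ¬W ≤ ker φ) : finrank K ↥(W ⊓ ker φ) + 1 = finrank K W := by
  obtain ⟨v, hvW, hv⟩ := exists_mem_apply_eq_one hW
  have hsup : W ⊔ ker φ = ⊤ := by
    rw [eq_top_iff, ← inf_ker_sup_span_singleton (mem_top (x := v)) hv, top_inf_eq]
    exact sup_le le_sup_right ((span_singleton_le_iff_mem _ _).mpr (mem_sup_left hvW))
  have hφ : φ ≠ 0 := fun h => by simp [h] at hv
  have := finrank_sup_add_finrank_inf_eq W (ker φ)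
  rw [hsup, finrank_top, ← Module.Dual.finrank_ker_add_one_of_ne_zero hφ] at this
  omega

end Field

section Finite

variable {K V : Type*} [Field K] [AddCommGroup V] [Module K V] [Fintype V]

instance : Fintype (Submodule K V) := Fintype.ofFinite _

variable [Fintype K]

theorem card_filter_mem (W : Submodule K V) :
    #{v | v ∈ W} = Fintype.card K ^ finrank K W := by
  rw [← Fintype.card_subtype, ← card_eq_pow_finrank (K := K) (V := W)]

theorem card_filter_mem_apply_eq_one {φ : Dual K V} {W : Submodule K V} {v₀ : V} (hv₀W : v₀ ∈ W)
    (hv₀ : φ v₀ = 1) : #{v | v ∈ W ∧ φ v = 1} = Fintype.card K ^ finrank K ↥(W ⊓ ker φ) := by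
  rw [← card_filter_mem]
  refine card_nbij' (· - v₀) (· + v₀) (fun v hv => ?_) (fun v hv => ?_) (fun _ _ => by simp)
    (fun _ _ => by simp)
  · simp only [coe_filter, mem_univ, true_and, Set.mem_ofPred_eq, mem_inf, mem_ker] at hv ⊢
    exact ⟨W.sub_mem hv.1 hv₀W, by simp [hv.2, hv₀]⟩
  · simp only [coe_filter, mem_univ, true_and, Set.mem_ofPred_eq, mem_inf, mem_ker] at hv ⊢
    exact ⟨W.add_mem hv.1 hv₀W, by simp [hv.2, hv₀]⟩

theorem card_filter_inf_ker_eq {φ : Dual K V} {A W' : Submodule K V} (hA : ¬A ≤ ker φ)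
    (hW' : W' ≤ A ⊓ ker φ) :
    #{W | W ≤ A ∧ ¬W ≤ ker φ ∧ W ⊓ ker φ = W'} =
      Fintype.card K ^ (finrank K ↥(A ⊓ ker φ) - finrank K W') := by
  obtain ⟨v₀, hv₀A, hv₀⟩ := exists_mem_apply_eq_one hA
  have hW'ker : W' ≤ ker φ := hW'.trans inf_le_right
  have hmaps : Set.MapsTo (fun v => W' ⊔ K ∙ v) ({v | v ∈ A ∧ φ v = 1} : Finset V)
      ({W | W ≤ A ∧ ¬W ≤ ker φ ∧ W ⊓ ker φ = W'} : Finset (Submodule K V)) := by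
    intro v hv
    simp only [coe_filter, mem_univ, true_and, Set.mem_ofPred_eq] at hv ⊢
    refine ⟨sup_le (hW'.trans inf_le_left) ((span_singleton_le_iff_mem _ _).mpr hv.1),
      fun h => ?_, sup_span_singleton_inf_ker hW'ker hv.2⟩
    have := h (mem_sup_right (mem_span_singleton_self v))
    simp [hv.2] at this
  have hfiber : ∀ W ∈ ({W | W ≤ A ∧ ¬W ≤ ker φ ∧ W ⊓ ker φ = W'} : Finset (Submodule K V)),
      #{v ∈ ({v | v ∈ A ∧ φ v = 1} : Finset V) | W' ⊔ K ∙ v = W} =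
        Fintype.card K ^ finrank K W' := by
    intro W hW
    simp only [mem_filter, mem_univ, true_and] at hW
    obtain ⟨hWA, hWker, rfl⟩ := hW
    obtain ⟨w, hwW, hw⟩ := exists_mem_apply_eq_one hWker
    rw [← card_filter_mem_apply_eq_one hwW hw, filter_filter]
    congr 1
    ext v
    simp only [mem_filter, mem_univ, true_and]
    constructor
    · rintro ⟨⟨-, hv⟩, hvW⟩
      exact ⟨hvW ▸ mem_sup_right (mem_span_singleton_self v), hv⟩
    · rintro ⟨hvW, hv⟩
      exact ⟨⟨hWA hvW, hv⟩, inf_ker_sup_span_singleton hvW hv⟩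
  have hcount := card_eq_sum_card_fiberwise hmaps
  rw [sum_congr rfl hfiber, sum_const, smul_eq_mul, card_filter_mem_apply_eq_one hv₀A hv₀,
    ← Nat.sub_add_cancel (finrank_mono hW'), pow_add] at hcount
  exact (Nat.eq_of_mul_eq_mul_right (pow_pos Fintype.card_pos _) hcount).symm

theorem sum_filter_not_le_ker {M : Type*} [AddCommMonoid M] {φ : Dual K V}
    {U A : Submodule K V} (hA : ¬A ≤ ker φ) (hU : U ≤ ker φ) (f : ℕ → M) :
    ∑ W ∈ {W | U ≤ W ∧ W ≤ A} with ¬W ≤ ker φ, f (finrank K W) =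
      ∑ W' with U ≤ W' ∧ W' ≤ A ⊓ ker φ,
        Fintype.card K ^ (finrank K ↥(A ⊓ ker φ) - finrank K W') • f (finrank K W' + 1) := by
  have hmaps : ∀ W ∈ ({W | U ≤ W ∧ W ≤ A} : Finset (Submodule K V)).filter (¬· ≤ ker φ),
      W ⊓ ker φ ∈ ({W' | U ≤ W' ∧ W' ≤ A ⊓ ker φ} : Finset (Submodule K V)) := by
    intro W hW
    simp only [mem_filter, mem_univ, true_and] at hW ⊢
    exact ⟨le_inf hW.1.1 hU, inf_le_inf_right _ hW.1.2⟩
  rw [← sum_fiberwise_of_maps_to hmaps]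
  refine sum_congr rfl fun W' hW' => ?_
  simp only [mem_filter, mem_univ, true_and] at hW'
  have hfiber : (({W | U ≤ W ∧ W ≤ A} : Finset (Submodule K V)).filter (¬· ≤ ker φ)).filter
      (· ⊓ ker φ = W') = ({W | W ≤ A ∧ ¬W ≤ ker φ ∧ W ⊓ ker φ = W'} : Finset _) := by
    ext W
    simp only [mem_filter, mem_univ, true_and]
    constructor
    · rintro ⟨⟨⟨-, hWA⟩, hW⟩, hW'⟩
      exact ⟨hWA, hW, hW'⟩
    · rintro ⟨hWA, hW, rfl⟩
      exact ⟨⟨⟨hW'.1.trans inf_le_left, hWA⟩, hW⟩, rfl⟩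
  rw [hfiber, ← card_filter_inf_ker_eq hA hW'.2, ← sum_const]
  refine sum_congr rfl fun W hW => ?_
  simp only [mem_filter, mem_univ, true_and] at hW
  obtain ⟨-, hWker, rfl⟩ := hW
  rw [finrank_inf_ker_add_one hWker]

theorem sum_subspaceMobius_of_lt {U A : Submodule K V} (hUA : U < A) :
    ∑ W with U ≤ W ∧ W ≤ A, subspaceMobius (Fintype.card K) (finrank K A - finrank K W) = 0 := by
  obtain ⟨v, hvA, hvU⟩ := SetLike.exists_of_lt hUA
  obtain ⟨φ, hUφ, hv⟩ := exists_dual_le_ker_apply_eq_one hvU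
  have hA : ¬A ≤ ker φ := fun h => by simpa [hv] using h hvA
  have hdimA := finrank_inf_ker_add_one hA
  have hin : ∑ W ∈ {W | U ≤ W ∧ W ≤ A} with W ≤ ker φ,
      subspaceMobius (Fintype.card K) (finrank K A - finrank K W) =
        ∑ W with U ≤ W ∧ W ≤ A ⊓ ker φ,
          subspaceMobius (Fintype.card K) (finrank K ↥(A ⊓ ker φ) - finrank K W + 1) := by
    rw [filter_filter]
    refine sum_congr (by ext W; simp [and_assoc]) fun W hW => ?_
    simp only [mem_filter, mem_univ, true_and] at hW
    rw [← hdimA, Nat.sub_add_comm (finrank_mono hW.2)]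
  rw [← sum_filter_add_sum_filter_not _ (· ≤ ker φ), hin,
    sum_filter_not_le_ker hA hUφ (fun n => subspaceMobius _ (finrank K A - n)), ← sum_add_distrib]
  refine sum_eq_zero fun W' _ => ?_
  rw [← hdimA, Nat.add_sub_add_right, subspaceMobius_succ, nsmul_eq_mul]
  push_cast
  ring

theorem sum_subspaceMobius {U A : Submodule K V} (hUA : U ≤ A) :
    ∑ W with U ≤ W ∧ W ≤ A, subspaceMobius (Fintype.card K) (finrank K A - finrank K W) =
      if U = A then 1 else 0 := by
  split_ifs with h
  · subst h
    rw [show ({W | U ≤ W ∧ W ≤ U} : Finset _) = {U} by ext; simp [le_antisymm_iff, and_comm],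
      sum_singleton, Nat.sub_self]
    simp [subspaceMobius]
  · exact sum_subspaceMobius_of_lt (lt_of_le_of_ne hUA h)

theorem card_filter_finrank_succ_eq {φ : Dual K V} {A : Submodule K V} (hA : ¬A ≤ ker φ)
    (c : ℕ) :
    #{W | W ≤ A ∧ finrank K W = c + 1} =
      #{W | W ≤ A ⊓ ker φ ∧ finrank K W = c + 1} +
        Fintype.card K ^ (finrank K ↥(A ⊓ ker φ) - c) * #{W | W ≤ A ⊓ ker φ ∧ finrank K W = c} := by
  rw [← card_filter_add_card_filter_not (· ≤ ker φ)]
  congr 1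
  · rw [filter_filter]
    congr 1
    ext W
    simp only [mem_filter, mem_univ, true_and, le_inf_iff]
    tauto
  · have h := sum_filter_not_le_ker hA bot_le (fun n => if n = c + 1 then 1 else 0)
    simp only [← card_filter, smul_eq_mul, mul_boole, Nat.add_right_cancel_iff, bot_le,
      true_and] at h
    rw [← sum_filter, sum_congr rfl (g := fun _ => Fintype.card K ^ (finrank K ↥(A ⊓ ker φ) - c))
      (fun W hW => by rw [(mem_filter.mp hW).2]), sum_const, smul_eq_mul, mul_comm] at h
    convert h using 2
    · ext W
      simp only [mem_filter, mem_univ, true_and]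
      tauto
    · rw [filter_filter]

theorem card_filter_finrank_eq_le (A : Submodule K V) (c : ℕ) :
    #{W | W ≤ A ∧ finrank K W = c} ≤
      2 ^ finrank K A * Fintype.card K ^ (c * (finrank K A - c)) := by
  set q := Fintype.card K
  induction hk : finrank K A generalizing A c with
  | zero =>
    have hA : A = ⊥ := finrank_eq_zero.mp hk
    calc #{W | W ≤ A ∧ finrank K W = c} ≤ #({⊥} : Finset (Submodule K V)) :=
          card_le_card fun W hW => by
            simp only [mem_filter, mem_univ, true_and, hA, le_bot_iff] at hW
            exact mem_singleton.mpr hW.1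
      _ = 2 ^ 0 * q ^ (c * (0 - c)) := by simp
  | succ k ih =>
    rcases c with _ | c
    · calc #{W | W ≤ A ∧ finrank K W = 0} ≤ #({⊥} : Finset (Submodule K V)) :=
            card_le_card fun W hW => by
              simp only [mem_filter, mem_univ, true_and, finrank_eq_zero] at hW
              exact mem_singleton.mpr hW.2
        _ ≤ 2 ^ (k + 1) * q ^ (0 * (k + 1 - 0)) := by simp [Nat.one_le_two_pow]
    obtain ⟨x, hxA, hx⟩ := (Submodule.ne_bot_iff A).mp (by rintro rfl; simp at hk)
    obtain ⟨φ, -, hφx⟩ :=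
      exists_dual_le_ker_apply_eq_one (U := (⊥ : Submodule K V)) (v := x) (by simpa using hx)
    have hA : ¬A ≤ ker φ := fun h => by simpa [hφx] using h hxA
    have hA' : finrank K ↥(A ⊓ ker φ) = k := by have := finrank_inf_ker_add_one hA; omega
    have hq : 1 ≤ q := Fintype.card_pos
    rw [card_filter_finrank_succ_eq hA, hA']
    calc _ ≤ 2 ^ k * q ^ ((c + 1) * (k - (c + 1))) + q ^ (k - c) * (2 ^ k * q ^ (c * (k - c))) :=
          add_le_add (ih _ _ hA') (Nat.mul_le_mul_left _ (ih _ _ hA'))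
      _ ≤ 2 ^ k * q ^ ((c + 1) * (k - c)) + 2 ^ k * q ^ ((c + 1) * (k - c)) := by
          refine add_le_add (Nat.mul_le_mul_left _ (Nat.pow_le_pow_right hq ?_)) (le_of_eq ?_)
          · exact Nat.mul_le_mul_left _ (by omega)
          · rw [add_one_mul c (k - c), pow_add]
            ring
      _ = 2 ^ (k + 1) * q ^ ((c + 1) * (k + 1 - (c + 1))) := by
          rw [Nat.add_sub_add_right]
          ring

end Finite

end Submodule

theorem Nat.mul_sub_le_mul_div_four (c d : ℕ) : c * (d - c) ≤ d * d / 4 := by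
  rw [Nat.le_div_iff_mul_le four_pos]
  rcases le_total c d with h | h
  · obtain ⟨b, rfl⟩ := Nat.exists_eq_add_of_le h
    rw [Nat.add_sub_cancel_left]
    nlinarith [sq_nonneg ((c : ℤ) - b)]
  · simp [Nat.sub_eq_zero_of_le h]

section

variable {K V : Type*} [Field K] [Fintype K] [AddCommGroup V] [Module K V] [Fintype V]

theorem card_submodule_le :
    Fintype.card (Submodule K V) ≤
      (finrank K V + 1) * 2 ^ finrank K V * Fintype.card K ^ (finrank K V * finrank K V / 4) := by
  set d := finrank K V
  have hmaps : ∀ W ∈ (univ : Finset (Submodule K V)), finrank K W ∈ range (d + 1) :=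
    fun W _ => mem_range.mpr (Nat.lt_succ_of_le (Submodule.finrank_le W))
  rw [← card_univ, card_eq_sum_card_fiberwise hmaps, mul_assoc]
  refine (sum_le_card_nsmul _ _ (2 ^ d * Fintype.card K ^ (d * d / 4)) fun c _ => ?_).trans
    (by simp)
  have h := Submodule.card_filter_finrank_eq_le (⊤ : Submodule K V) c
  simp only [le_top, true_and, finrank_top] at h
  refine h.trans ?_
  gcongr
  · exact Fintype.card_pos
  · exact Nat.mul_sub_le_mul_div_four c d

end

theorem IsIEVector.sum_le_sum_abs [Fintype ι] {F : ι → Set S} {x : Finset ι → ℝ}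
    (hx : IsIEVector F x) {J : Type*} (s : Finset J) (τ : J → Finset ι)
    (hτ : ∀ j ∈ s, τ j ∈ venn F) (y : J → ℝ)
    (hy : ∀ σ ∈ nerve F, |∑ j ∈ s with σ ⊆ τ j, y j| ≤ 1) :
    ∑ j ∈ s, y j ≤ ∑ σ ∈ univ.filter (· ∈ nerve F), |x σ| :=
  calc ∑ j ∈ s, y j = ∑ j ∈ s, ∑ σ ∈ (τ j).powerset.filter (· ∈ nerve F), y j * x σ :=
        sum_congr rfl fun j hj => by rw [← mul_sum, hx.2 _ (hτ j hj), mul_one]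
    _ = ∑ σ ∈ univ.filter (· ∈ nerve F), (∑ j ∈ s with σ ⊆ τ j, y j) * x σ := by
        rw [sum_comm' (t' := univ.filter (· ∈ nerve F)) (s' := fun σ => s.filter (σ ⊆ τ ·))]
        · simp only [sum_mul]
        · intro j σ
          simp only [mem_filter, mem_powerset, mem_univ, true_and]
          tauto
    _ ≤ ∑ σ ∈ univ.filter (· ∈ nerve F), |x σ| := by
        refine sum_le_sum fun σ hσ => ?_
        rw [mem_filter] at hσ
        calc _ ≤ |(∑ j ∈ s with σ ⊆ τ j, y j) * x σ| := le_abs_self _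
          _ ≤ 1 * |x σ| := by rw [abs_mul]; gcongr; exact hy σ hσ.2
          _ = |x σ| := one_mul _

section VectorFamily

variable {K V : Type*} [Field K] [AddCommGroup V] [Module K V]

def vectorFamily (e : ι → V) (i : ι) : Set (Submodule K V) := {W | e i ≠ 0 ∧ e i ∈ W}

theorem mem_nerve_vectorFamily (e : ι → V) {σ : Finset ι} :
    σ ∈ nerve (vectorFamily (K := K) e) ↔ σ.Nonempty ∧ ∀ i ∈ σ, e i ≠ 0 := by
  simp only [nerve, vectorFamily, Set.mem_ofPred_eq, Set.nonempty_def, Set.mem_iInter₂]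
  constructor
  · rintro ⟨hσ, W, hW⟩
    exact ⟨hσ, fun i hi => (hW i hi).1⟩
  · rintro ⟨hσ, he⟩
    exact ⟨hσ, ⊤, fun i hi => ⟨he i hi, Submodule.mem_top⟩⟩

variable [Fintype ι] (e : ι → V)

def nonzeroIndices (W : Submodule K V) : Finset ι := {i | e i ≠ 0 ∧ e i ∈ W}

theorem mem_region_vectorFamily {W : Submodule K V} {τ : Finset ι} :
    W ∈ region (vectorFamily e) τ ↔ τ = nonzeroIndices e W := by
  simp only [region, vectorFamily, Set.mem_sdiff, Set.mem_iInter₂, Set.mem_iUnion₂,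
    Set.mem_ofPred_eq, not_exists, not_and, Finset.ext_iff, nonzeroIndices, mem_filter, mem_univ,
    true_and]
  constructor
  · rintro ⟨hin, hout⟩ i
    exact ⟨hin i, fun hi => by_contra fun hiτ => hout i hiτ hi.1 hi.2⟩
  · intro h
    exact ⟨fun i => (h i).mp, fun i hiτ hi hiW => hiτ ((h i).mpr ⟨hi, hiW⟩)⟩

theorem subset_nonzeroIndices_iff {σ : Finset ι} (hσ : ∀ i ∈ σ, e i ≠ 0) (W : Submodule K V) :
    σ ⊆ nonzeroIndices e W ↔ Submodule.span K (e '' σ) ≤ W := by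
  simp only [Submodule.span_le, Set.image_subset_iff, subset_iff, nonzeroIndices, mem_filter,
    mem_univ, true_and]
  exact ⟨fun h i hi => (h hi).2, fun h i hi => ⟨hσ i hi, h hi⟩⟩

variable {e} (he : Function.Surjective e)
include he

theorem nonzeroIndices_injective : Function.Injective (nonzeroIndices (K := K) e) := by
  intro W W' h
  ext v
  rcases eq_or_ne v 0 with rfl | hv
  · simp only [Submodule.zero_mem]
  obtain ⟨i, rfl⟩ := he v
  have := Finset.ext_iff.mp h i
  simpa [nonzeroIndices, hv] using this

theorem venn_vectorFamily :
    venn (vectorFamily (K := K) e) = nonzeroIndices e '' {W : Submodule K V | W ≠ ⊥} := by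
  ext τ
  simp only [venn, Set.mem_ofPred_eq, Set.nonempty_def, mem_region_vectorFamily, Set.mem_image]
  constructor
  · rintro ⟨⟨i, hi⟩, W, rfl⟩
    simp only [nonzeroIndices, mem_filter, mem_univ, true_and] at hi
    exact ⟨W, (Submodule.ne_bot_iff W).mpr ⟨e i, hi.2, hi.1⟩, rfl⟩
  · rintro ⟨W, hW, rfl⟩
    obtain ⟨v, hvW, hv⟩ := (Submodule.ne_bot_iff W).mp hW
    obtain ⟨i, rfl⟩ := he v
    exact ⟨⟨i, by simp [nonzeroIndices, hv, hvW]⟩, W, rfl⟩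

end VectorFamily

section

variable {K V : Type*} [Field K] [AddCommGroup V] [Module K V] [Fintype V]

theorem finrank_le_card_ne_bot : finrank K V ≤ Fintype.card {W : Submodule K V // W ≠ ⊥} := by
  set b := Module.finBasis K V
  refine (Fintype.card_fin _).symm.le.trans (Fintype.card_le_of_injective
    (fun i => ⟨K ∙ b i, by simpa using b.ne_zero i⟩) fun i j hij => ?_)
  have hi : b i ∈ K ∙ b j := by
    have : K ∙ b i = K ∙ b j := congrArg Subtype.val hij
    exact this ▸ Submodule.mem_span_singleton_self _
  obtain ⟨a, ha⟩ := Submodule.mem_span_singleton.mp hi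
  by_contra hne
  simpa [Finsupp.single_apply, Ne.symm hne] using congrArg (fun v => b.repr v i) ha

variable [Fintype ι] {e : ι → V} (he : Function.Surjective e)
include he

theorem ncard_venn_vectorFamily :
    (venn (vectorFamily (K := K) e)).ncard = Fintype.card {W : Submodule K V // W ≠ ⊥} := by
  rw [venn_vectorFamily he, Set.ncard_image_of_injective _ (nonzeroIndices_injective he),
    ← Nat.card_coe_set_eq, Nat.card_eq_fintype_card]
  rfl

variable [Fintype K]

theorem pow_choose_two_le_sum_abs [Nontrivial V] {x : Finset ι → ℝ}
    (hx : IsIEVector (vectorFamily (K := K) e) x) :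
    (Fintype.card K : ℝ) ^ (finrank K V).choose 2 ≤
      ∑ σ ∈ univ.filter (· ∈ nerve (vectorFamily (K := K) e)), |x σ| := by
  set y := fun W : Submodule K V =>
    (-1) ^ (finrank K V + 1) * subspaceMobius (Fintype.card K) (finrank K V - finrank K W)
  have hsum : ∑ W with W ≠ ⊥, y W = (Fintype.card K : ℝ) ^ (finrank K V).choose 2 := by
    have h := Submodule.sum_subspaceMobius_of_lt (bot_lt_top : (⊥ : Submodule K V) < ⊤)
    simp only [finrank_top, bot_le, le_top, and_self, filter_true] at h
    have hsq : ((-1 : ℝ) ^ finrank K V) ^ 2 = 1 := by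
      rw [← pow_mul, mul_comm, pow_mul, neg_one_sq, one_pow]
    rw [← mul_sum, filter_ne', sum_erase_eq_sub (mem_univ _), h, finrank_bot, Nat.sub_zero,
      subspaceMobius]
    linear_combination ((Fintype.card K : ℝ) ^ (finrank K V).choose 2) * hsq
  rw [← hsum]
  refine hx.sum_le_sum_abs _ (nonzeroIndices e) (fun W hW => ?_) y fun σ hσ => ?_
  · rw [venn_vectorFamily he]
    exact ⟨W, (mem_filter.mp hW).2, rfl⟩
  · obtain ⟨⟨i, hi⟩, hσ0⟩ := (mem_nerve_vectorFamily e).mp hσ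
    have hfilter : ({W | W ≠ ⊥} : Finset (Submodule K V)).filter (σ ⊆ nonzeroIndices e ·) =
        ({W | Submodule.span K (e '' σ) ≤ W ∧ W ≤ ⊤} : Finset _) := by
      ext W
      simp only [mem_filter, mem_univ, true_and, le_top, and_true,
        subset_nonzeroIndices_iff e hσ0]
      refine ⟨And.right, fun h => ⟨(Submodule.ne_bot_iff W).mpr ⟨e i, ?_, hσ0 i hi⟩, h⟩⟩
      exact h (Submodule.subset_span (Set.mem_image_of_mem e hi))
    have h := Submodule.sum_subspaceMobius (le_top : Submodule.span K (e '' σ) ≤ ⊤)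
    rw [finrank_top] at h
    rw [hfilter, ← mul_sum, h, abs_mul, abs_pow, abs_neg, abs_one, one_pow, one_mul]
    split_ifs <;> norm_num

end

end

theorem exists_family_two_pow_choose_two_le (d : ℕ) (hd : 0 < d) :
    ∃ (n : ℕ) (S : Type) (F : Fin n → Set S),
      d ≤ (venn F).ncard ∧ (venn F).ncard ^ 4 ≤ 2 ^ (d * d + 8 * d) ∧
      ∀ x : Finset (Fin n) → ℝ, IsIEVector F x →
        (2 : ℝ) ^ d.choose 2 ≤ ∑ σ ∈ univ.filter (· ∈ nerve F), |x σ| := by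
  let V := Fin d → ZMod 2
  have : Nonempty (Fin d) := ⟨⟨0, hd⟩⟩
  have he := (Fintype.equivFin V).symm.surjective
  have hdim : finrank (ZMod 2) V = d := by simp [V]
  refine ⟨_, Submodule (ZMod 2) V, vectorFamily (Fintype.equivFin V).symm, ?_, ?_,
    fun x hx => ?_⟩
  · rw [ncard_venn_vectorFamily he]
    exact hdim.symm.le.trans finrank_le_card_ne_bot
  · have hcard := (Fintype.card_subtype_le (· ≠ ⊥)).trans (card_submodule_le (K := ZMod 2) (V := V))
    rw [hdim, ZMod.card, ← ncard_venn_vectorFamily he] at hcard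
    calc _ ≤ ((d + 1) * 2 ^ d * 2 ^ (d * d / 4)) ^ 4 := Nat.pow_le_pow_left hcard 4
      _ ≤ (2 ^ d * 2 ^ d * 2 ^ (d * d / 4)) ^ 4 := by
          gcongr
          exact Nat.lt_two_pow_self
      _ = 2 ^ (d * d / 4 * 4 + 8 * d) := by ring
      _ ≤ 2 ^ (d * d + 8 * d) :=
          Nat.pow_le_pow_right two_pos (by have := Nat.div_mul_le_self (d * d) 4; omega)
  · simpa [hdim] using pow_choose_two_le_sum_abs he hx

-- `18 ≤ ε d` is what makes `(d² + 8d)(2 - ε)/4 ≤ d(d - 1)/2`.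
theorem rpow_le_two_pow_choose_two {ε : ℝ} {m d : ℕ} (hm : 1 ≤ m)
    (hmd : m ^ 4 ≤ 2 ^ (d * d + 8 * d)) (hεd : 18 ≤ ε * d) :
    (m : ℝ) ^ (2 - ε) ≤ 2 ^ d.choose 2 := by
  have hm' : (1 : ℝ) ≤ m := by exact_mod_cast hm
  rcases le_or_gt (2 - ε) 0 with hε | hε
  · exact (Real.rpow_le_one_of_one_le_of_nonpos hm' hε).trans (one_le_pow₀ one_le_two)
  calc (m : ℝ) ^ (2 - ε) = ((m : ℝ) ^ 4) ^ ((2 - ε) / 4) := by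
        rw [← Real.rpow_natCast, ← Real.rpow_mul (by positivity)]
        ring_nf
    _ ≤ ((2 : ℝ) ^ (d * d + 8 * d)) ^ ((2 - ε) / 4) := by
        gcongr
        exact_mod_cast hmd
    _ = 2 ^ (((d * d + 8 * d : ℕ) : ℝ) * ((2 - ε) / 4)) := by
        rw [← Real.rpow_natCast, ← Real.rpow_mul (by norm_num)]
    _ ≤ 2 ^ (d.choose 2 : ℝ) := by
        gcongr
        · norm_num
        rw [Nat.cast_choose_two]
        push_cast
        nlinarith [mul_le_mul_of_nonneg_left hεd (Nat.cast_nonneg d : (0 : ℝ) ≤ d)]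
    _ = 2 ^ d.choose 2 := Real.rpow_natCast _ _

/-- for every `ε > 0` there is `c > 0` such that for every `M` there are a
family of `n` sets whose Venn diagram has size `m ≥ M` and such that every IE-vector has
`ℓ₁`-norm at least `c·m^(2-ε)`. -/
theorem stmt2 (ε : ℝ) (hε : 0 < ε) :
    ∃ c : ℝ, 0 < c ∧ ∀ M : ℕ,
      ∃ (n : ℕ) (S : Type) (F : Fin n → Set S),
        M ≤ (venn F).ncard ∧
        ∀ x : Finset (Fin n) → ℝ, IsIEVector F x →
          c * ((venn F).ncard : ℝ) ^ ((2 : ℝ) - ε) ≤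
            ∑ σ ∈ Finset.univ.filter (· ∈ nerve F), |x σ| := by
  obtain ⟨D, hD⟩ := exists_nat_ge (18 / ε)
  refine ⟨1, one_pos, fun M => ?_⟩
  set d := max (max M D) 1
  obtain ⟨n, S, F, hdm, hm4, hnorm⟩ := exists_family_two_pow_choose_two_le d (by positivity)
  refine ⟨n, S, F, ((le_max_left _ _).trans (le_max_left _ _)).trans hdm, fun x hx => ?_⟩
  have hεd : 18 ≤ ε * d :=
    calc (18 : ℝ) = ε * (18 / ε) := by field_simp
      _ ≤ ε * d := by
          gcongr
          exact hD.trans (by exact_mod_cast (le_max_right _ _).trans (le_max_left _ _))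
  rw [one_mul]
  exact (rpow_le_two_pow_choose_two ((le_max_right _ _).trans hdm) hm4 hεd).trans (hnorm x hx)
end

section
/- Let F = (F_1,…,F_n) be a family of subsets of a set S, equip S with the σ-algebra of all its subsets, and let x = (x_σ)_{σ∈N(F)} be a real vector. Then the identity μ(⋃_{i=1}^n F_i) = Σ_{σ∈N(F)} x_σ · μ(⋂_{i∈σ} F_i) holds for every finite measure μ on S if and only if for every τ ∈ V(F) one has Σ_{σ∈N(F), σ⊆τ} x_σ = 1. -/
open Finset
open scoped Classical

variable {ι S : Type*}

lemma mem_region_iff {F : ι → Set S} {τ : Finset ι} {p : S} :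
    p ∈ region F τ ↔ ∀ i, p ∈ F i ↔ i ∈ τ := by
  simp only [region, Set.mem_diff, Set.mem_iInter, Set.mem_iUnion, not_exists]
  constructor
  · rintro ⟨h1, h2⟩ i
    constructor
    · intro hpi
      by_contra hi
      exact h2 i hi hpi
    · exact fun hi => h1 i hi
  · intro h
    exact ⟨fun i hi => (h i).mpr hi, fun i hi hpi => hi ((h i).mp hpi)⟩

lemma filt_eq {n : ℕ} (F : Fin n → Set S) (τ : Finset (Fin n)) :
    (Finset.univ.filter (· ∈ nerve F)).filter (· ⊆ τ) =
      τ.powerset.filter (· ∈ nerve F) := by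
  ext σ
  simp only [mem_filter, mem_univ, true_and, mem_powerset]
  tauto

/-- with `S` carrying the σ-algebra of all subsets, the inclusion–exclusion
identity holds for every finite measure `μ` iff for every Venn-diagram cell `τ` the
coefficients of the nerve faces contained in `τ` sum to `1`. -/
theorem stmt3 {S : Type*} {n : ℕ} (F : Fin n → Set S) (x : Finset (Fin n) → ℝ) :
    (∀ μ : @MeasureTheory.Measure S ⊤, @MeasureTheory.IsFiniteMeasure S ⊤ μ →
      (μ (⋃ i, F i)).toReal =
        ∑ σ ∈ Finset.univ.filter (· ∈ nerve F), x σ * (μ (⋂ i ∈ σ, F i)).toReal) ↔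
    (∀ τ ∈ venn F, (∑ σ ∈ τ.powerset.filter (· ∈ nerve F), x σ) = 1) := by
  letI : MeasurableSpace S := ⊤
  have hmeas : ∀ s : Set S, MeasurableSet s := fun s => trivial
  constructor
  · -- forward: use Dirac measures
    intro h τ hτ
    obtain ⟨hτne, p, hp⟩ := hτ
    have hpF : ∀ i, p ∈ F i ↔ i ∈ τ := mem_region_iff.mp hp
    set μ := MeasureTheory.Measure.dirac p with hμ
    have := h μ inferInstance
    have hL : (μ (⋃ i, F i)).toReal = 1 := by
      obtain ⟨i, hi⟩ := hτne
      rw [MeasureTheory.Measure.dirac_apply_of_mem (Set.mem_iUnion.mpr ⟨i, (hpF i).mpr hi⟩)]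
      simp
    have hR : ∀ σ ∈ Finset.univ.filter (· ∈ nerve F),
        x σ * (μ (⋂ i ∈ σ, F i)).toReal = if σ ⊆ τ then x σ else 0 := by
      intro σ hσ
      by_cases hsub : σ ⊆ τ
      · have hpmem : p ∈ ⋂ i ∈ σ, F i :=
          Set.mem_iInter₂.mpr fun i hi => (hpF i).mpr (hsub hi)
        rw [MeasureTheory.Measure.dirac_apply_of_mem hpmem]
        simp [hsub]
      · obtain ⟨i, hiσ, hiτ⟩ := Finset.not_subset.mp hsub
        have hpnot : p ∉ ⋂ i ∈ σ, F i := by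
          intro hpmem
          exact hiτ ((hpF i).mp (Set.mem_iInter₂.mp hpmem i hiσ))
        rw [MeasureTheory.Measure.dirac_apply' _ (hmeas _),
          Set.indicator_of_notMem hpnot]
        simp [hsub]
    rw [hL, Finset.sum_congr rfl hR, Finset.sum_ite, Finset.sum_const_zero, add_zero,
      filt_eq] at this
    exact this.symm
  · -- backward: decompose into Venn regions
    intro h μ hfin
    set T : Finset (Finset (Fin n)) := Finset.univ.filter Finset.Nonempty with hT
    have hdisj : (T : Set (Finset (Fin n))).PairwiseDisjoint (region F) := by
      intro τ₁ _ τ₂ _ hne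
      rw [Function.onFun, Set.disjoint_left]
      intro p hp1 hp2
      apply hne
      ext i
      rw [← mem_region_iff.mp hp1 i, mem_region_iff.mp hp2 i]
    have hadd : ∀ s : Finset (Finset (Fin n)), s ⊆ T →
        (μ (⋃ τ ∈ s, region F τ)).toReal = ∑ τ ∈ s, (μ (region F τ)).toReal := by
      intro s hs
      rw [MeasureTheory.measure_biUnion_finset (hdisj.subset hs) (fun _ _ => hmeas _)]
      exact ENNReal.toReal_sum fun τ _ => MeasureTheory.measure_ne_top μ _
    -- the point's "type"
    have htype : ∀ p : S, ∀ τ : Finset (Fin n),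
        (∀ i, p ∈ F i ↔ i ∈ τ) → p ∈ region F τ := fun p τ ht => mem_region_iff.mpr ht
    have hU : (⋃ i, F i) = ⋃ τ ∈ T, region F τ := by
      ext p
      simp only [Set.mem_iUnion, hT, mem_filter, mem_univ, true_and]
      constructor
      · rintro ⟨i, hi⟩
        refine ⟨Finset.univ.filter (fun j => p ∈ F j), ⟨i, by simp [hi]⟩, ?_⟩
        exact htype p _ (by simp)
      · rintro ⟨τ, hτ, hp⟩
        obtain ⟨i, hi⟩ := hτ
        exact ⟨i, (mem_region_iff.mp hp i).mpr hi⟩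
    have hI : ∀ σ : Finset (Fin n), σ.Nonempty →
        (⋂ i ∈ σ, F i) = ⋃ τ ∈ T.filter (σ ⊆ ·), region F τ := by
      intro σ hσ
      ext p
      simp only [Set.mem_iUnion, Set.mem_iInter, hT, mem_filter, mem_univ, true_and]
      constructor
      · intro hp
        obtain ⟨i, hi⟩ := hσ
        refine ⟨Finset.univ.filter (fun j => p ∈ F j),
          ⟨⟨i, by simp [hp i hi]⟩, fun j hj => by simp [hp j hj]⟩, htype p _ (by simp)⟩
      · rintro ⟨τ, ⟨hτne, hστ⟩, hp⟩
        exact fun i hi => (mem_region_iff.mp hp i).mpr (hστ hi)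
    have keyU : (μ (⋃ i, F i)).toReal = ∑ τ ∈ T, (μ (region F τ)).toReal := by
      rw [hU]; exact hadd T (le_refl T)
    rw [keyU]
    have keyI : ∀ σ ∈ Finset.univ.filter (· ∈ nerve F),
        x σ * (μ (⋂ i ∈ σ, F i)).toReal =
          ∑ τ ∈ T, if σ ⊆ τ then x σ * (μ (region F τ)).toReal else 0 := by
      intro σ hσ
      have hσn : σ ∈ nerve F := (Finset.mem_filter.mp hσ).2
      rw [hI σ hσn.1, hadd _ (Finset.filter_subset _ _), Finset.mul_sum,
        ← Finset.sum_filter]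
    rw [Finset.sum_congr rfl keyI, Finset.sum_comm]
    refine (Finset.sum_congr rfl fun τ hτ => ?_).symm
    have hτne : τ.Nonempty := (Finset.mem_filter.mp hτ).2
    rw [← Finset.sum_filter]
    by_cases hreg : (region F τ).Nonempty
    · have hτv : τ ∈ venn F := ⟨hτne, hreg⟩
      rw [filt_eq, ← Finset.sum_mul, h τ hτv, one_mul]
    · rw [Set.not_nonempty_iff_eq_empty.mp hreg]
      simp
end

section
/- For every family F = (F_1,…,F_n) of subsets of a set S there is exactly one IE-vector α for F satisfying α_σ = 0 for all σ ∈ N(F) \ V(F), and all entries of this IE-vector α are integers. -/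
open Finset
open scoped Classical

variable {ι S : Type*}

lemma venn_subset_nerve (F : ι → Set S) : venn F ⊆ nerve F := by
  rintro τ ⟨hne, s, hs⟩
  exact ⟨hne, s, hs.1⟩

noncomputable def alphaZ {n : ℕ} (F : Fin n → Set S) (τ : Finset (Fin n)) : ℤ :=
  if τ ∈ venn F then
    1 - ∑ σ ∈ (τ.powerset.erase τ).attach, alphaZ F σ.1
  else 0
termination_by τ.card
decreasing_by
  have h := σ.2
  rw [Finset.mem_erase, Finset.mem_powerset] at h
  exact Finset.card_lt_card (lt_of_le_of_ne h.2 h.1)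

lemma alphaZ_not_venn {n : ℕ} (F : Fin n → Set S) {τ : Finset (Fin n)}
    (h : τ ∉ venn F) : alphaZ F τ = 0 := by
  rw [alphaZ, if_neg h]

lemma alphaZ_sum {n : ℕ} (F : Fin n → Set S) {τ : Finset (Fin n)}
    (h : τ ∈ venn F) : ∑ σ ∈ τ.powerset, alphaZ F σ = 1 := by
  have hτ : τ ∈ τ.powerset := Finset.mem_powerset_self τ
  rw [← Finset.add_sum_erase _ _ hτ, alphaZ, if_pos h, Finset.sum_attach]
  ring

/-- For a function vanishing outside `venn F`, the filtered sum equals the full powerset sum. -/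
lemma sum_filter_eq_sum_powerset {n : ℕ} (F : Fin n → Set S) (β : Finset (Fin n) → ℝ)
    (hβ : ∀ σ, σ ∉ venn F → β σ = 0) (τ : Finset (Fin n)) :
    (∑ σ ∈ τ.powerset.filter (· ∈ nerve F), β σ) = ∑ σ ∈ τ.powerset, β σ := by
  refine Finset.sum_subset (Finset.filter_subset _ _) ?_
  intro σ hσ hσ'
  refine hβ σ (fun hv => hσ' ?_)
  exact Finset.mem_filter.2 ⟨hσ, venn_subset_nerve F hv⟩

/-- Any IE-vector vanishing outside `venn F` equals the canonical integer solution. -/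
lemma eq_alphaZ {n : ℕ} (F : Fin n → Set S) (β : Finset (Fin n) → ℝ)
    (h1 : IsIEVector F β) (h2 : ∀ σ, σ ∉ venn F → β σ = 0) :
    ∀ τ, β τ = (alphaZ F τ : ℝ) := by
  intro τ
  induction τ using Finset.strongInduction with
  | _ τ ih =>
    by_cases hv : τ ∈ venn F
    · have hβsum : (∑ σ ∈ τ.powerset, β σ) = 1 := by
        rw [← sum_filter_eq_sum_powerset F β h2 τ]
        exact h1.2 τ hv
      have hαsum : (∑ σ ∈ τ.powerset, (alphaZ F σ : ℝ)) = 1 := by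
        rw [← Int.cast_sum, alphaZ_sum F hv, Int.cast_one]
      have hτ : τ ∈ τ.powerset := Finset.mem_powerset_self τ
      rw [← Finset.add_sum_erase _ _ hτ] at hβsum hαsum
      have herase : (∑ σ ∈ τ.powerset.erase τ, β σ)
          = ∑ σ ∈ τ.powerset.erase τ, (alphaZ F σ : ℝ) := by
        refine Finset.sum_congr rfl fun σ hσ => ?_
        rw [Finset.mem_erase, Finset.mem_powerset] at hσ
        exact ih σ (lt_of_le_of_ne hσ.2 hσ.1)
      rw [herase] at hβsum
      linarith [hβsum, hαsum]
    · rw [h2 τ hv, alphaZ_not_venn F hv, Int.cast_zero]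

lemma alphaZ_isIE {n : ℕ} (F : Fin n → Set S) :
    IsIEVector F (fun τ => (alphaZ F τ : ℝ)) ∧
      ∀ σ, σ ∉ venn F → (alphaZ F σ : ℝ) = 0 := by
  have hvanish : ∀ σ, σ ∉ venn F → (alphaZ F σ : ℝ) = 0 := by
    intro σ hσ; rw [alphaZ_not_venn F hσ, Int.cast_zero]
  refine ⟨⟨fun σ hσ => hvanish σ (fun hv => hσ (venn_subset_nerve F hv)), ?_⟩, hvanish⟩
  intro τ hτ
  rw [sum_filter_eq_sum_powerset F _ hvanish τ, ← Int.cast_sum, alphaZ_sum F hτ, Int.cast_one]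

/-- there is exactly one IE-vector vanishing on `N(F) \ V(F)`, and all of its
entries are integers. -/
theorem stmt4 {S : Type*} {n : ℕ} (F : Fin n → Set S) :
    (∃! α : Finset (Fin n) → ℝ, IsIEVector F α ∧ ∀ σ, σ ∉ venn F → α σ = 0) ∧
    (∀ α : Finset (Fin n) → ℝ, IsIEVector F α → (∀ σ, σ ∉ venn F → α σ = 0) →
      ∀ σ, ∃ k : ℤ, α σ = k) := by
  constructor
  · refine ⟨fun τ => (alphaZ F τ : ℝ), alphaZ_isIE F, ?_⟩
    intro β ⟨hβ1, hβ2⟩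
    funext τ
    exact eq_alphaZ F β hβ1 hβ2 τ
  · intro β hβ1 hβ2 σ
    exact ⟨alphaZ F σ, eq_alphaZ F β hβ1 hβ2 σ⟩
end

section
/- Let ℓ ≥ 1, n = 5ℓ, S = [5ℓ], and for i ∈ [n] set g(i) = 5⌈i/5⌉ and F_i = {i} ∪ {g(i)+1, g(i)+2, …, 5ℓ}. Then distinct points of S lie in distinct regions of F = (F_1,…,F_n), so |V(F)| = 5ℓ, and the unique IE-vector α for F supported on V(F) satisfies α_{τ_j} = (−4)^{⌈j/5⌉ − 1} for every j ∈ [5ℓ], where τ_j = {i ∈ [n] : j ∈ F_i}. In particular the largest absolute value of a coefficient of α equals 4^{ℓ−1}. -/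
open Finset
open scoped Classical

variable {ι S : Type*}

lemma geomAux (k : ℕ) : ∑ m ∈ Finset.range (5*k), (-4 : ℝ) ^ (m/5) = 1 - (-4)^k := by
  induction k with
  | zero => simp
  | succ k ih =>
    have h5 : 5*(k+1) = 5*k+1+1+1+1+1 := by ring
    rw [h5, Finset.sum_range_succ, Finset.sum_range_succ, Finset.sum_range_succ,
      Finset.sum_range_succ, Finset.sum_range_succ, ih]
    have h0 : (5*k)/5 = k := by omega
    have h1 : (5*k+1)/5 = k := by omega
    have h2 : (5*k+1+1)/5 = k := by omega
    have h3 : (5*k+1+1+1)/5 = k := by omega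
    have h4 : (5*k+1+1+1+1)/5 = k := by omega
    rw [h0, h1, h2, h3, h4, pow_succ]
    ring

/-- the exponential-coefficient example.  Here `S = [5ℓ]` is modelled by
`Fin (5ℓ)` (the point `j : Fin (5ℓ)` represents the integer `j+1`), the index `i : Fin (5ℓ)`
represents the set `F_{i+1}`, and `g(i+1) = 5⌈(i+1)/5⌉ = 5·(i/5) + 5`.  Thus
`F_i = {i} ∪ {g(i)+1, …, 5ℓ}` becomes `{j | j = i ∨ 5·(i/5) + 5 ≤ j}` (as `j+1 ≥ g(i)+1`
iff `g(i) ≤ j`), and `(−4)^{⌈(j+1)/5⌉−1} = (−4)^{j/5}`, with maximal absolute coefficient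
`4^{ℓ−1}`. -/
theorem stmt7 {ℓ : ℕ} (hℓ : 1 ≤ ℓ)
    (F : Fin (5 * ℓ) → Set (Fin (5 * ℓ)))
    (hF : ∀ i, F i = {j | j = i ∨ 5 * ((i : ℕ) / 5) + 5 ≤ (j : ℕ)})
    (τ : Fin (5 * ℓ) → Finset (Fin (5 * ℓ)))
    (hτ : ∀ j, τ j = Finset.univ.filter (fun i => j ∈ F i))
    (α : Finset (Fin (5 * ℓ)) → ℝ)
    (hα : IsIEVector F α) (hsupp : ∀ σ, σ ∉ venn F → α σ = 0) :
    (∀ j j' : Fin (5 * ℓ), τ j = τ j' → j = j') ∧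
    (venn F).ncard = 5 * ℓ ∧
    (∀ j : Fin (5 * ℓ), α (τ j) = (-4 : ℝ) ^ ((j : ℕ) / 5)) ∧
    (∃ σ ∈ venn F, |α σ| = (4 : ℝ) ^ (ℓ - 1)) ∧
    (∀ σ, |α σ| ≤ (4 : ℝ) ^ (ℓ - 1)) := by
  have hmemF : ∀ (j i : Fin (5*ℓ)), j ∈ F i ↔ i ∈ τ j := by
    intro j i; rw [hτ]; simp
  have hiτ : ∀ (j i : Fin (5*ℓ)), i ∈ τ j ↔ (i = j ∨ (i:ℕ)/5 < (j:ℕ)/5) := by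
    intro j i
    rw [← hmemF, hF]
    simp only [Set.mem_setOf_eq, Fin.ext_iff]
    omega
  have hjτ : ∀ j : Fin (5*ℓ), j ∈ τ j := fun j => (hiτ j j).2 (Or.inl rfl)
  have hregion : ∀ j : Fin (5*ℓ), j ∈ region F (τ j) := by
    intro j
    simp only [region, Set.mem_diff, Set.mem_iInter, Set.mem_iUnion, not_exists]
    refine ⟨fun i hi => (hmemF j i).2 hi, ?_⟩
    intro i hi hji
    exact hi ((hmemF j i).1 hji)
  have hvenn_mem : ∀ j, τ j ∈ venn F := fun j => ⟨⟨j, hjτ j⟩, ⟨j, hregion j⟩⟩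
  have hregion_eq : ∀ (σ : Finset (Fin (5*ℓ))) (x : Fin (5*ℓ)), x ∈ region F σ → σ = τ x := by
    intro σ x hx
    simp only [region, Set.mem_diff, Set.mem_iInter, Set.mem_iUnion, not_exists] at hx
    ext i
    rw [← hmemF]
    constructor
    · exact fun hi => hx.1 i hi
    · intro hxi
      by_contra hi
      exact hx.2 i hi hxi
  have hvenn : venn F = Set.range τ := by
    ext σ
    constructor
    · rintro ⟨hne, x, hx⟩; exact ⟨x, (hregion_eq σ x hx).symm⟩
    · rintro ⟨j, rfl⟩; exact hvenn_mem j
  have hinj : Function.Injective τ := by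
    intro j j' h
    have h1 : j ∈ τ j' := h ▸ hjτ j
    have h2 : j' ∈ τ j := h.symm ▸ hjτ j'
    rw [hiτ] at h1 h2
    simp only [Fin.ext_iff] at h1 h2 ⊢
    omega
  have hsubset : ∀ j j' : Fin (5*ℓ), τ j' ⊆ τ j ↔ (j' = j ∨ (j':ℕ)/5 < (j:ℕ)/5) := by
    intro j j'
    constructor
    · intro h; exact (hiτ j j').1 (h (hjτ j'))
    · intro h i hi
      rw [hiτ] at hi ⊢
      simp only [Fin.ext_iff] at h hi ⊢
      omega
  have hsum : ∀ j : Fin (5*ℓ),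
      ∑ j' ∈ univ.filter (fun j' => j' = j ∨ (j':ℕ)/5 < (j:ℕ)/5), α (τ j') = 1 := by
    intro j
    have h1 := hα.2 (τ j) (hvenn_mem j)
    have himg : (τ j).powerset.filter (· ∈ venn F)
        = (univ.filter (fun j' => j' = j ∨ (j':ℕ)/5 < (j:ℕ)/5)).image τ := by
      ext σ
      simp only [mem_filter, mem_powerset, mem_image, mem_univ, true_and]
      constructor
      · rintro ⟨hsub, hv⟩
        rw [hvenn] at hv
        obtain ⟨j', rfl⟩ := hv
        exact ⟨j', (hsubset j j').1 hsub, rfl⟩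
      · rintro ⟨j', hj', rfl⟩
        exact ⟨(hsubset j j').2 hj', hvenn_mem j'⟩
    have hvn : ∀ σ, σ ∈ venn F → σ ∈ nerve F := by
      rintro σ ⟨hne, x, hx⟩
      exact ⟨hne, x, hx.1⟩
    have h2 : ∑ σ ∈ (τ j).powerset.filter (· ∈ venn F), α σ
        = ∑ σ ∈ (τ j).powerset.filter (· ∈ nerve F), α σ := by
      refine Finset.sum_subset ?_ ?_
      · intro σ hσ
        rw [mem_filter] at hσ ⊢
        exact ⟨hσ.1, hvn σ hσ.2⟩
      · intro σ hσ hσ'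
        apply hsupp
        intro hv
        rw [mem_filter] at hσ hσ'
        exact hσ' ⟨hσ.1, hv⟩
    rw [← h2, himg, Finset.sum_image (fun a _ b _ h => hinj h)] at h1
    exact h1
  have hval : ∀ n, ∀ j : Fin (5*ℓ), (j:ℕ) = n → α (τ j) = (-4:ℝ)^((j:ℕ)/5) := by
    intro n
    induction n using Nat.strong_induction_on with
    | _ n ih =>
      intro j hj
      have hs := hsum j
      have hB : univ.filter (fun j' => j' = j ∨ ((j':Fin (5*ℓ)):ℕ)/5 < (j:ℕ)/5)
          = insert j (univ.filter (fun j' => ((j':Fin (5*ℓ)):ℕ)/5 < (j:ℕ)/5)) := by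
        ext a
        simp only [mem_filter, mem_insert, mem_univ, true_and]
      rw [hB, Finset.sum_insert (by simp)] at hs
      have hrest : ∑ j' ∈ univ.filter (fun j' => ((j':Fin (5*ℓ)):ℕ)/5 < (j:ℕ)/5), α (τ j')
          = ∑ m ∈ Finset.range (5*((j:ℕ)/5)), (-4:ℝ)^(m/5) := by
        refine Finset.sum_bij' (fun j' _ => (j':ℕ))
          (fun m hm => (⟨m, ?_⟩ : Fin (5*ℓ))) ?_ ?_ ?_ ?_ ?_
        · rw [Finset.mem_range] at hm
          have : 5*((j:ℕ)/5) ≤ (j:ℕ) := Nat.mul_div_le _ _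
          omega
        · intro a ha
          rw [mem_filter] at ha
          simp only [Finset.mem_range]
          show (a:ℕ) < 5*((j:ℕ)/5)
          omega
        · intro a ha
          rw [mem_filter]
          rw [Finset.mem_range] at ha
          refine ⟨mem_univ _, ?_⟩
          simp only
          omega
        · intro a ha; exact Fin.ext rfl
        · intro a ha; rfl
        · intro a ha
          rw [mem_filter] at ha
          have hlt : (a:ℕ) < n := by
            have : 5*((a:ℕ)/5) ≤ (a:ℕ) := Nat.mul_div_le _ _
            have : 5*((j:ℕ)/5) ≤ (j:ℕ) := Nat.mul_div_le _ _
            omega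
          exact ih (a:ℕ) (by omega) a rfl
      rw [hrest, geomAux] at hs
      linarith
  have hval' : ∀ j : Fin (5*ℓ), α (τ j) = (-4:ℝ)^((j:ℕ)/5) := fun j => hval _ j rfl
  refine ⟨fun j j' h => hinj h, ?_, hval', ?_, ?_⟩
  · rw [hvenn]
    have : Set.range τ = ↑(Finset.univ.image τ) := by
      ext σ; simp
    rw [this, Set.ncard_coe_finset, Finset.card_image_of_injective _ hinj,
      Finset.card_univ, Fintype.card_fin]
  · refine ⟨τ ⟨5*ℓ-1, by omega⟩, hvenn_mem _, ?_⟩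
    rw [hval']
    simp only
    have : (5*ℓ-1)/5 = ℓ-1 := by omega
    rw [this, abs_pow]
    norm_num
  · intro σ
    by_cases hσ : σ ∈ venn F
    · rw [hvenn] at hσ
      obtain ⟨j, rfl⟩ := hσ
      rw [hval', abs_pow]
      have h4 : |(-4:ℝ)| = 4 := by norm_num
      rw [h4]
      refine pow_le_pow_right₀ (by norm_num) ?_
      have := j.isLt
      omega
    · rw [hsupp σ hσ]
      simp only [abs_zero]
      positivity
end

section
/- Let F = (F_1,…,F_n) be a family of subsets of a set S and let K be a simplicial complex on vertex set [n]. Define x ∈ ℝ^{N(F)} by x_σ = (−1)^{|σ|+1} if σ ∈ K and x_σ = 0 if σ ∈ N(F) \ K. Then for every τ ∈ V(F) one has Σ_{σ∈N(F), σ⊆τ} x_σ = χ(K[τ]). Consequently, if χ(K[τ]) = 1 for every τ ∈ V(F), then x is an IE-vector for F. -/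
open Finset
open scoped Classical

variable {ι S : Type*}

/-- A simplicial complex on the vertex set `ι`: a family of nonempty finite subsets closed
under taking nonempty subsets. -/
def IsSimplicialComplex {ι : Type*} (K : Set (Finset ι)) : Prop :=
  (∀ σ ∈ K, σ.Nonempty) ∧ ∀ σ ∈ K, ∀ ϑ ⊆ σ, ϑ.Nonempty → ϑ ∈ K

/-- The Euler characteristic `χ(L) = Σ_{σ∈L} (−1)^{|σ|+1}` of a family of faces. -/
noncomputable def eulerChar {ι : Type*} [Fintype ι] (L : Set (Finset ι)) : ℝ :=
  ∑ σ ∈ Finset.univ.filter (· ∈ L), (-1 : ℝ) ^ (σ.card + 1)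

/-- The set of inclusion-minimal non-faces of `K`. -/
def MNF {ι : Type*} (K : Set (Finset ι)) : Set (Finset ι) :=
  {I | I.Nonempty ∧ I ∉ K ∧ ∀ I' ⊂ I, I'.Nonempty → I' ∈ K}

/-- if `x_σ = (−1)^{|σ|+1}` for `σ ∈ K` and `x_σ = 0` for `σ ∈ N(F) \ K`, then
for every `τ ∈ V(F)` the IE-sum over `τ` equals `χ(K[τ])`; hence if all these Euler
characteristics are `1`, then `x` is an IE-vector. -/
theorem stmt8 {S : Type*} {n : ℕ} (F : Fin n → Set S)
    (K : Set (Finset (Fin n))) (hK : IsSimplicialComplex K)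
    (x : Finset (Fin n) → ℝ)
    (hx : ∀ σ ∈ nerve F, x σ = if σ ∈ K then (-1 : ℝ) ^ (σ.card + 1) else 0) :
    (∀ τ ∈ venn F,
        (∑ σ ∈ τ.powerset.filter (· ∈ nerve F), x σ) = eulerChar {ϑ | ϑ ∈ K ∧ ϑ ⊆ τ}) ∧
    ((∀ τ ∈ venn F, eulerChar {ϑ | ϑ ∈ K ∧ ϑ ⊆ τ} = 1) →
      ∀ τ ∈ venn F, (∑ σ ∈ τ.powerset.filter (· ∈ nerve F), x σ) = 1) := by
  have main : ∀ τ ∈ venn F,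
      (∑ σ ∈ τ.powerset.filter (· ∈ nerve F), x σ) = eulerChar {ϑ | ϑ ∈ K ∧ ϑ ⊆ τ} := by
    intro τ hτ
    obtain ⟨hτne, p, hp⟩ := hτ
    have hpin : ∀ i ∈ τ, p ∈ F i := by
      have := hp.1
      simpa using this
    have hnerve : ∀ σ ∈ τ.powerset, σ.Nonempty → σ ∈ nerve F := by
      intro σ hσ hne
      rw [Finset.mem_powerset] at hσ
      refine ⟨hne, p, ?_⟩
      simp only [Set.mem_iInter]
      exact fun i hi => hpin i (hσ hi)
    have heuler : eulerChar {ϑ | ϑ ∈ K ∧ ϑ ⊆ τ}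
        = ∑ σ ∈ τ.powerset.filter (· ∈ K), (-1 : ℝ) ^ (σ.card + 1) := by
      rw [eulerChar]
      refine Finset.sum_congr ?_ fun _ _ => rfl
      ext σ
      simp [Finset.mem_powerset, Set.mem_setOf_eq, and_comm]
    rw [heuler, Finset.sum_filter, Finset.sum_filter]
    apply Finset.sum_congr rfl
    intro σ hσ
    by_cases hσK : σ ∈ K
    · have hne : σ.Nonempty := hK.1 σ hσK
      have hmem : σ ∈ nerve F := hnerve σ hσ hne
      rw [if_pos hmem, if_pos hσK, hx σ hmem, if_pos hσK]
    · rw [if_neg hσK]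
      by_cases hmem : σ ∈ nerve F
      · rw [if_pos hmem, hx σ hmem, if_neg hσK]
      · rw [if_neg hmem]
  exact ⟨main, fun h τ hτ => (main τ hτ).trans (h τ hτ)⟩
end

section
/- Let F = (F_1,…,F_n) be a family of subsets of a set S and let K be a nonempty simplicial complex on vertex set [n] such that no member of V(F) can be written as a union of members of MNF(K). Then for every τ ∈ V(F) there exists a ∈ τ such that {a} ∈ K[τ] and ϑ ∪ {a} ∈ K[τ] for every ϑ ∈ K[τ] (that is, K[τ] is a cone with apex a); in particular, χ(K[τ]) = 1 for every τ ∈ V(F). -/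
open Finset
open scoped Classical

variable {ι S : Type*}

lemma exists_mnf {ι : Type*} (K : Set (Finset ι)) :
    ∀ J : Finset ι, J.Nonempty → J ∉ K → ∃ I ∈ MNF K, I ⊆ J := by
  intro J
  induction J using Finset.strongInduction with
  | _ J ih =>
    intro hne hJ
    by_cases h : ∀ I' ⊂ J, I'.Nonempty → I' ∈ K
    · exact ⟨J, ⟨hne, hJ, h⟩, subset_rfl⟩
    · push_neg at h
      obtain ⟨I', hsub, hne', hI'⟩ := h
      obtain ⟨I, hI, hsub'⟩ := ih I' hsub hne' hI'
      exact ⟨I, hI, hsub'.trans hsub.subset⟩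

lemma euler_cone {n : ℕ} (K : Set (Finset (Fin n))) (hK : IsSimplicialComplex K)
    (τ : Finset (Fin n)) (a : Fin n) (ha : a ∈ τ) (haK : ({a} : Finset (Fin n)) ∈ K)
    (hcone : ∀ ϑ ∈ K, ϑ ⊆ τ → insert a ϑ ∈ K) :
    eulerChar {ϑ | ϑ ∈ K ∧ ϑ ⊆ τ} = 1 := by
  unfold eulerChar
  set A : Finset (Finset (Fin n)) :=
    Finset.univ.filter (· ∈ {ϑ | ϑ ∈ K ∧ ϑ ⊆ τ}) with hA
  have hAmem : ∀ σ, σ ∈ A ↔ σ ∈ K ∧ σ ⊆ τ := by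
    intro σ; simp [hA]
  set f : Finset (Fin n) → ℝ := fun σ => (-1 : ℝ) ^ (σ.card + 1) with hf
  have hsplit := Finset.sum_filter_add_sum_filter_not A (fun σ => a ∈ σ) f
  set C := A.filter (fun σ => a ∈ σ) with hC
  set B := A.filter (fun σ => a ∉ σ) with hB
  have haC : ({a} : Finset (Fin n)) ∈ C := by
    simp [hC, hAmem, haK, Finset.singleton_subset_iff.2 ha]
  have hCsum : ∑ σ ∈ C, f σ = f {a} + ∑ σ ∈ C.erase {a}, f σ :=
    (Finset.add_sum_erase C f haC).symm
  have hbij : ∑ σ ∈ C.erase {a}, f σ = ∑ σ ∈ B, -f σ := by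
    apply Finset.sum_nbij' (fun σ => σ.erase a) (fun σ => insert a σ)
    · intro σ hσ
      rw [Finset.mem_erase] at hσ
      obtain ⟨hne, hσC⟩ := hσ
      rw [hC, Finset.mem_filter, hAmem] at hσC
      obtain ⟨⟨hσK, hστ⟩, haσ⟩ := hσC
      have hern : (σ.erase a).Nonempty := by
        obtain ⟨b, hbσ, hb⟩ := Finset.not_subset.1
          (fun hsub => hne (Finset.Subset.antisymm hsub (Finset.singleton_subset_iff.2 haσ)))
        exact ⟨b, Finset.mem_erase.2 ⟨fun h => hb (h ▸ Finset.mem_singleton_self a), hbσ⟩⟩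
      rw [hB, Finset.mem_filter, hAmem]
      exact ⟨⟨hK.2 σ hσK _ (Finset.erase_subset _ _) hern,
        (Finset.erase_subset _ _).trans hστ⟩, Finset.notMem_erase _ _⟩
    · intro σ hσ
      rw [hB, Finset.mem_filter, hAmem] at hσ
      obtain ⟨⟨hσK, hστ⟩, haσ⟩ := hσ
      rw [Finset.mem_erase, hC, Finset.mem_filter, hAmem]
      refine ⟨?_, ⟨hcone σ hσK hστ, Finset.insert_subset ha hστ⟩, Finset.mem_insert_self _ _⟩
      intro heq
      obtain ⟨b, hb⟩ := hK.1 σ hσK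
      have : b ∈ ({a} : Finset (Fin n)) := heq ▸ Finset.mem_insert_of_mem hb
      rw [Finset.mem_singleton] at this
      exact haσ (this ▸ hb)
    · intro σ hσ
      rw [Finset.mem_erase] at hσ
      have haσ : a ∈ σ := by
        have := hσ.2; rw [hC, Finset.mem_filter] at this; exact this.2
      exact Finset.insert_erase haσ
    · intro σ hσ
      have haσ : a ∉ σ := by
        rw [hB, Finset.mem_filter] at hσ; exact hσ.2
      exact Finset.erase_insert haσ
    · intro σ hσ
      rw [Finset.mem_erase] at hσ
      obtain ⟨hne, hσC⟩ := hσ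
      rw [hC, Finset.mem_filter, hAmem] at hσC
      have haσ : a ∈ σ := hσC.2
      have hcard : 1 ≤ σ.card := Finset.card_pos.2 ⟨a, haσ⟩
      rw [hf]
      simp only [Finset.card_erase_of_mem haσ]
      obtain ⟨k, hk⟩ : ∃ k, σ.card = k + 1 := ⟨σ.card - 1, by omega⟩
      rw [hk]
      simp [pow_succ]
  have key : ∑ σ ∈ A, f σ = 1 := by
    rw [← hsplit, hCsum, hbij]
    simp [hf]
  convert key using 3

lemma cone_of_not_union {S : Type*} {n : ℕ} (F : Fin n → Set S)
    (K : Set (Finset (Fin n))) (hK : IsSimplicialComplex K)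
    (hunion : ∀ τ ∈ venn F, ∀ 𝓘 : Finset (Finset (Fin n)),
      (𝓘 : Set (Finset (Fin n))) ⊆ MNF K → 𝓘.sup id ≠ τ) :
    ∀ τ ∈ venn F, ∃ a ∈ τ, {a} ∈ K ∧
      ∀ ϑ ∈ K, ϑ ⊆ τ → insert a ϑ ∈ K ∧ insert a ϑ ⊆ τ := by
  intro τ hτ
  by_contra hc
  push_neg at hc
  have key : ∀ a ∈ τ, ∃ I ∈ MNF K, I ⊆ τ ∧ a ∈ I := by
    intro a haτ
    by_cases hs : ({a} : Finset (Fin n)) ∈ K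
    · obtain ⟨ϑ, hϑK, hϑτ, hbad⟩ := hc a haτ hs
      have hsub : insert a ϑ ⊆ τ := Finset.insert_subset haτ hϑτ
      have hins : insert a ϑ ∉ K := fun h => hbad h hsub
      obtain ⟨I, hI, hIsub⟩ :=
        exists_mnf K (insert a ϑ) ⟨a, Finset.mem_insert_self _ _⟩ hins
      refine ⟨I, hI, hIsub.trans hsub, ?_⟩
      by_contra haI
      have hIϑ : I ⊆ ϑ := fun b hb =>
        (Finset.mem_insert.1 (hIsub hb)).resolve_left (fun h => haI (h ▸ hb))
      exact hI.2.1 (hK.2 ϑ hϑK I hIϑ hI.1)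
    · refine ⟨{a}, ⟨⟨a, Finset.mem_singleton_self a⟩, hs, ?_⟩,
        Finset.singleton_subset_iff.2 haτ, Finset.mem_singleton_self a⟩
      intro I' hI' hne
      rw [Finset.ssubset_singleton_iff] at hI'
      simp [hI'] at hne
  choose! I hImnf hIτ haI using key
  refine hunion τ hτ (τ.image I) ?_ ?_
  · intro J hJ
    simp only [Finset.coe_image, Set.mem_image, Finset.mem_coe] at hJ
    obtain ⟨a, haτ, rfl⟩ := hJ
    exact hImnf a haτ
  · apply Finset.Subset.antisymm
    · show (τ.image I).sup id ≤ τ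
      apply Finset.sup_le
      intro J hJ
      obtain ⟨a, haτ, rfl⟩ := Finset.mem_image.1 hJ
      exact hIτ a haτ
    · intro a haτ
      have h1 : id (I a) ≤ (τ.image I).sup id :=
        Finset.le_sup (Finset.mem_image_of_mem I haτ)
      exact h1 (haI a haτ)

/-- if no cell of the Venn diagram is a union of minimal non-faces of `K`,
then for each `τ ∈ V(F)` the induced subcomplex `K[τ]` is a cone with some apex `a ∈ τ`;
in particular `χ(K[τ]) = 1`. -/
theorem stmt9 {S : Type*} {n : ℕ} (F : Fin n → Set S)
    (K : Set (Finset (Fin n))) (hK : IsSimplicialComplex K) (hKne : K.Nonempty)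
    (hunion : ∀ τ ∈ venn F, ∀ 𝓘 : Finset (Finset (Fin n)),
      (𝓘 : Set (Finset (Fin n))) ⊆ MNF K → 𝓘.sup id ≠ τ) :
    (∀ τ ∈ venn F, ∃ a ∈ τ, {a} ∈ K ∧
      ∀ ϑ ∈ K, ϑ ⊆ τ → insert a ϑ ∈ K ∧ insert a ϑ ⊆ τ) ∧
    (∀ τ ∈ venn F, eulerChar {ϑ | ϑ ∈ K ∧ ϑ ⊆ τ} = 1) := by

  have cone := cone_of_not_union F K hK hunion
  refine ⟨cone, ?_⟩
  intro τ hτ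
  obtain ⟨a, haτ, haK, hc⟩ := cone τ hτ
  exact euler_cone K hK τ a haτ haK (fun ϑ hϑ hsub => (hc ϑ hϑ hsub).1)
end

section
/- Let F = (F_1,…,F_n) be a family of subsets of a set S. For every selector w for V(F), no member of V(F) can be expressed as a union of members of MNF(K_w); consequently, χ(K_w[τ]) = 1 for every τ ∈ V(F). -/
open Finset
open scoped Classical

variable {ι S : Type*}

/-- The complex `K_w` associated with a selector `w` for the Venn diagram: a face of the
nerve belongs to `K_w` iff each of its nonempty subsets `ϑ` satisfies `w(τ) ∈ ϑ ⊆ τ` for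
some Venn-diagram cell `τ`. -/
def Kw {ι S : Type*} (F : ι → Set S) (w : Finset ι → ι) : Set (Finset ι) :=
  {σ | σ ∈ nerve F ∧ ∀ ϑ ⊆ σ, ϑ.Nonempty → ∃ τ ∈ venn F, w τ ∈ ϑ ∧ ϑ ⊆ τ}

section Aux

variable {ι S : Type*}

lemma aux_nerve {F : ι → Set S} {τ ϑ : Finset ι} (hτ : τ ∈ venn F)
    (hsub : ϑ ⊆ τ) (hne : ϑ.Nonempty) : ϑ ∈ nerve F := by
  obtain ⟨_, x, hx⟩ := hτ
  refine ⟨hne, x, ?_⟩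
  have h1 := hx.1
  simp only [Set.mem_iInter] at h1 ⊢
  exact fun i hi => h1 i (hsub hi)

lemma aux_Kw_down {F : ι → Set S} {w : Finset ι → ι} {σ ϑ : Finset ι}
    (hσ : σ ∈ Kw F w) (hsub : ϑ ⊆ σ) (hne : ϑ.Nonempty) : ϑ ∈ Kw F w := by
  obtain ⟨⟨_, x, hx⟩, hcond⟩ := hσ
  refine ⟨⟨hne, x, ?_⟩, fun ϑ' h' hne' => hcond ϑ' (h'.trans hsub) hne'⟩
  simp only [Set.mem_iInter] at hx ⊢
  exact fun i hi => hx i (hsub hi)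

lemma aux_insert [DecidableEq ι] {F : ι → Set S} {w : Finset ι → ι} {τ ϑ : Finset ι}
    (hτ : τ ∈ venn F) (hwτ : w τ ∈ τ) (hϑ : ϑ ∈ Kw F w) (hsub : ϑ ⊆ τ) :
    insert (w τ) ϑ ∈ Kw F w := by
  have hsub' : insert (w τ) ϑ ⊆ τ := Finset.insert_subset hwτ hsub
  refine ⟨aux_nerve hτ hsub' (Finset.insert_nonempty _ _), fun ϑ' h' hne' => ?_⟩
  by_cases hmem : w τ ∈ ϑ'
  · exact ⟨τ, hτ, hmem, h'.trans hsub'⟩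
  · refine hϑ.2 ϑ' (fun i hi => ?_) hne'
    rcases Finset.mem_insert.1 (h' hi) with rfl | h
    · exact absurd hi hmem
    · exact h

lemma aux_singleton {F : ι → Set S} {w : Finset ι → ι} {τ : Finset ι}
    (hτ : τ ∈ venn F) (hwτ : w τ ∈ τ) : ({w τ} : Finset ι) ∈ Kw F w := by
  refine ⟨aux_nerve hτ (Finset.singleton_subset_iff.2 hwτ) (Finset.singleton_nonempty _),
    fun ϑ h hne => ?_⟩
  rcases Finset.subset_singleton_iff.1 h with rfl | rfl
  · exact absurd hne (by simp)
  · exact ⟨τ, hτ, Finset.mem_singleton_self _, Finset.singleton_subset_iff.2 hwτ⟩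

lemma aux_mnf {F : ι → Set S} {w : Finset ι → ι} {τ I : Finset ι}
    (hτ : τ ∈ venn F) (hwτ : w τ ∈ τ)
    (hI : I ∈ MNF (Kw F w)) (hsub : I ⊆ τ) : w τ ∉ I := by
  intro hmem
  obtain ⟨hne, hnK, hmin⟩ := hI
  apply hnK
  refine ⟨aux_nerve hτ hsub hne, fun ϑ h' hne' => ?_⟩
  by_cases heq : ϑ = I
  · subst heq; exact ⟨τ, hτ, hmem, hsub⟩
  · have hss : ϑ ⊂ I := Finset.ssubset_iff_subset_ne.2 ⟨h', heq⟩
    exact (hmin ϑ hss hne').2 ϑ Finset.Subset.rfl hne'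

end Aux


lemma aux_sum {S : Type*} {n : ℕ} (F : Fin n → Set S) (w : Finset (Fin n) → Fin n)
    (τ : Finset (Fin n)) (hτ : τ ∈ venn F) (hwτ : w τ ∈ τ)
    (A : Finset (Finset (Fin n)))
    (hmemA : ∀ ϑ, ϑ ∈ A ↔ ϑ ∈ Kw F w ∧ ϑ ⊆ τ) :
    ∑ σ ∈ A, (-1 : ℝ) ^ (σ.card + 1) = 1 := by
  have hsingle : ({w τ} : Finset (Fin n)) ∈ A :=
    (hmemA _).2 ⟨aux_singleton hτ hwτ, Finset.singleton_subset_iff.2 hwτ⟩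
  have hzero : ∑ σ ∈ A.erase {w τ}, (-1 : ℝ) ^ (σ.card + 1) = 0 := by
    refine Finset.sum_involution
      (fun ϑ _ => if w τ ∈ ϑ then ϑ.erase (w τ) else insert (w τ) ϑ) ?_ ?_ ?_ ?_
    · intro a ha
      by_cases hmem : w τ ∈ a
      · simp only [hmem, if_true]
        have hcard : (a.erase (w τ)).card + 1 = a.card := by
          rw [Finset.card_erase_of_mem hmem]
          exact Nat.succ_pred_eq_of_pos (Finset.card_pos.2 ⟨_, hmem⟩)
        rw [hcard.symm]
        ring
      · simp only [hmem, if_false]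
        rw [Finset.card_insert_of_notMem hmem]
        ring
    · intro a ha _
      by_cases hmem : w τ ∈ a
      · simp only [hmem, if_true]
        intro habs
        rw [← habs] at hmem
        exact Finset.notMem_erase _ _ hmem
      · simp only [hmem, if_false]
        intro habs
        rw [← habs] at hmem
        exact hmem (Finset.mem_insert_self _ _)
    · intro a ha
      obtain ⟨hane, haK, hasub⟩ :
          a ≠ {w τ} ∧ a ∈ Kw F w ∧ a ⊆ τ := by
        have h1 := Finset.mem_erase.1 ha
        exact ⟨h1.1, ((hmemA a).1 h1.2).1, ((hmemA a).1 h1.2).2⟩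
      have hanon : a.Nonempty := haK.1.1
      by_cases hmem : w τ ∈ a
      · simp only [hmem, if_true]
        have hene : (a.erase (w τ)).Nonempty := by
          rcases Finset.eq_empty_or_nonempty (a.erase (w τ)) with he | he
          · exfalso
            apply hane
            apply Finset.Subset.antisymm _ (Finset.singleton_subset_iff.2 hmem)
            intro i hi
            by_cases hieq : i = w τ
            · simp [hieq]
            · exact absurd (Finset.mem_erase.2 ⟨hieq, hi⟩) (by simp [he])
          · exact he
        refine Finset.mem_erase.2 ⟨?_, (hmemA _).2 ⟨?_, ?_⟩⟩
        · intro habs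
          have := habs ▸ Finset.mem_singleton_self (w τ)
          exact Finset.notMem_erase (w τ) a this
        · exact aux_Kw_down haK (Finset.erase_subset _ _) hene
        · exact (Finset.erase_subset _ _).trans hasub
      · simp only [hmem, if_false]
        refine Finset.mem_erase.2 ⟨?_, (hmemA _).2 ⟨?_, ?_⟩⟩
        · intro habs
          obtain ⟨i, hi⟩ := hanon
          have h2 : i ∈ ({w τ} : Finset (Fin n)) := habs ▸ Finset.mem_insert_of_mem hi
          rw [Finset.mem_singleton] at h2
          exact hmem (h2 ▸ hi)
        · exact aux_insert hτ hwτ haK hasub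
        · exact Finset.insert_subset_iff.2 ⟨hwτ, hasub⟩
    · intro a ha
      by_cases hmem : w τ ∈ a
      · simp [hmem, Finset.insert_erase hmem]
      · simp [hmem, Finset.erase_insert hmem]
  calc ∑ σ ∈ A, (-1 : ℝ) ^ (σ.card + 1)
      = ∑ σ ∈ A.erase {w τ}, (-1 : ℝ) ^ (σ.card + 1)
          + (-1 : ℝ) ^ (({w τ} : Finset (Fin n)).card + 1) :=
        (Finset.sum_erase_add A _ hsingle).symm
    _ = 1 := by rw [hzero]; simp

/-- for every selector `w` for `V(F)`, no cell of the Venn diagram is a union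
of minimal non-faces of `K_w`; consequently `χ(K_w[τ]) = 1` for every `τ ∈ V(F)`. -/
theorem stmt10 {S : Type*} {n : ℕ} (F : Fin n → Set S)
    (w : Finset (Fin n) → Fin n) (hw : ∀ τ ∈ venn F, w τ ∈ τ) :
    (∀ τ ∈ venn F, ∀ 𝓘 : Finset (Finset (Fin n)),
      (𝓘 : Set (Finset (Fin n))) ⊆ MNF (Kw F w) → 𝓘.sup id ≠ τ) ∧
    (∀ τ ∈ venn F, eulerChar {ϑ | ϑ ∈ Kw F w ∧ ϑ ⊆ τ} = 1) := by
  constructor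
  · intro τ hτ 𝓘 h𝓘 heq
    have hwτ : w τ ∈ 𝓘.sup id := heq ▸ hw τ hτ
    obtain ⟨I, hI, hmemI⟩ := Finset.mem_sup.1 hwτ
    have hIsub : I ⊆ τ := heq ▸ Finset.le_sup (f := id) hI
    exact aux_mnf hτ (hw τ hτ) (h𝓘 hI) hIsub hmemI
  · intro τ hτ
    unfold eulerChar
    exact aux_sum F w τ hτ (hw τ hτ) _ (fun ϑ => by simp)
end

section
/- Let F = (F_1,…,F_n) be a family of subsets of a set S. For every selector w for V(F), the vector x ∈ ℝ^{N(F)} given by x_σ = (−1)^{|σ|+1} for σ ∈ K_w and x_σ = 0 for σ ∈ N(F) \ K_w is an IE-vector for F; that is, for every τ ∈ V(F), Σ_{σ∈K_w, σ⊆τ} (−1)^{|σ|+1} = 1. -/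
open Finset
open scoped Classical

variable {ι S : Type*}

/-- Any nonempty subset of a Venn cell is in the nerve. -/
lemma subset_venn_mem_nerve (F : ι → Set S) {τ σ : Finset ι}
    (hτ : τ ∈ venn F) (hστ : σ ⊆ τ) (hσ : σ.Nonempty) : σ ∈ nerve F := by
  obtain ⟨-, x, hx⟩ := hτ
  refine ⟨hσ, x, ?_⟩
  have hx' : x ∈ ⋂ i ∈ τ, F i := hx.1
  simp only [Set.mem_iInter] at hx' ⊢
  exact fun i hi => hx' i (hστ hi)

/-- The key sum identity. -/
lemma key_sum (F : ι → Set S) (w : Finset ι → ι) (hw : ∀ τ ∈ venn F, w τ ∈ τ)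
    {τ : Finset ι} (hτ : τ ∈ venn F) :
    (∑ σ ∈ τ.powerset.filter (· ∈ Kw F w), (-1 : ℝ) ^ (σ.card + 1)) = 1 := by
  obtain ⟨hiτ, -⟩ : w τ ∈ τ ∧ True := ⟨hw τ hτ, trivial⟩
  set i := w τ with hidef
  set A := τ.powerset.filter (· ∈ Kw F w) with hA
  have hmemA : ∀ σ, σ ∈ A ↔ σ ⊆ τ ∧ σ ∈ Kw F w := by
    intro σ; simp [hA, Finset.mem_filter, Finset.mem_powerset]
  have hKw_of : ∀ σ ⊆ τ, σ.Nonempty →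
      (∀ ϑ ⊆ σ, ϑ.Nonempty → ∃ τ' ∈ venn F, w τ' ∈ ϑ ∧ ϑ ⊆ τ') → σ ∈ A := by
    intro σ hστ hσne hcond
    exact (hmemA σ).2 ⟨hστ, subset_venn_mem_nerve F hτ hστ hσne, hcond⟩
  have hsingle : ({i} : Finset ι) ∈ A := by
    refine hKw_of {i} (by simpa using hiτ) ⟨i, by simp⟩ ?_
    intro ϑ hϑ hϑne
    refine ⟨τ, hτ, ?_, hϑ.trans (by simpa using hiτ)⟩
    obtain ⟨j, hj⟩ := hϑne
    have hji : j = i := Finset.mem_singleton.1 (hϑ hj)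
    show i ∈ ϑ
    exact hji ▸ hj
  set g : Finset ι → Finset ι := fun σ => if i ∈ σ then σ.erase i else insert i σ with hg
  have gmem : ∀ σ ∈ A.erase {i}, g σ ∈ A.erase {i} := by
    intro σ hσ
    rcases Finset.mem_erase.1 hσ with ⟨hne, hσA⟩
    rcases (hmemA σ).1 hσA with ⟨hστ, hσK⟩
    have hσne : σ.Nonempty := hσK.1.1
    have hσcond := hσK.2
    by_cases h : i ∈ σ
    · simp only [hg, if_pos h]
      refine Finset.mem_erase.2 ⟨?_, ?_⟩
      · intro heq
        exact (Finset.notMem_erase i σ) (heq ▸ Finset.mem_singleton_self i)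
      · have hne' : (σ.erase i).Nonempty := by
          rw [Finset.nonempty_iff_ne_empty]
          intro he
          rcases (Finset.erase_eq_empty_iff σ i).1 he with h0 | h1
          · exact hσne.ne_empty h0
          · exact hne h1
        refine hKw_of _ ((Finset.erase_subset _ _).trans hστ) hne' ?_
        intro ϑ hϑ hϑne
        exact hσcond ϑ (hϑ.trans (Finset.erase_subset _ _)) hϑne
    · simp only [hg, if_neg h]
      refine Finset.mem_erase.2 ⟨?_, ?_⟩
      · intro heq
        obtain ⟨j, hj⟩ := hσne
        have : j ∈ ({i} : Finset ι) := heq ▸ Finset.mem_insert_of_mem hj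
        have hji : j = i := Finset.mem_singleton.1 this
        exact h (hji ▸ hj)
      · refine hKw_of _ (Finset.insert_subset hiτ hστ) ⟨i, Finset.mem_insert_self _ _⟩ ?_
        intro ϑ hϑ hϑne
        by_cases hiϑ : i ∈ ϑ
        · exact ⟨τ, hτ, hiϑ, hϑ.trans (Finset.insert_subset hiτ hστ)⟩
        · refine hσcond ϑ ?_ hϑne
          intro j hj
          rcases Finset.mem_insert.1 (hϑ hj) with rfl | hjσ
          · exact absurd hj hiϑ
          · exact hjσ
  have hcancel : ∀ σ ∈ A.erase {i},
      (-1 : ℝ) ^ (σ.card + 1) + (-1 : ℝ) ^ ((g σ).card + 1) = 0 := by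
    intro σ _
    by_cases h : i ∈ σ
    · simp only [hg, if_pos h]
      rw [← Finset.card_erase_add_one h, pow_succ (-1 : ℝ) ((σ.erase i).card + 1)]
      ring
    · simp only [hg, if_neg h]
      rw [Finset.card_insert_of_notMem h, pow_succ (-1 : ℝ) (σ.card + 1)]
      ring
  have hgne : ∀ σ ∈ A.erase {i}, g σ ≠ σ := by
    intro σ _
    by_cases h : i ∈ σ
    · simp only [hg, if_pos h]
      intro heq
      have : i ∉ σ := heq ▸ Finset.notMem_erase i σ
      exact this h
    · simp only [hg, if_neg h]
      intro heq
      exact h (heq ▸ Finset.mem_insert_self i σ)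
  have hginv : ∀ σ ∈ A.erase {i}, g (g σ) = σ := by
    intro σ _
    by_cases h : i ∈ σ
    · have h2 : i ∉ σ.erase i := Finset.notMem_erase i σ
      simp only [hg, if_pos h, if_neg h2]
      exact Finset.insert_erase h
    · have h2 : i ∈ insert i σ := Finset.mem_insert_self i σ
      simp only [hg, if_neg h, if_pos h2]
      exact Finset.erase_insert h
  have herase : ∑ σ ∈ A.erase {i}, (-1 : ℝ) ^ (σ.card + 1) = 0 :=
    Finset.sum_involution (fun σ _ => g σ) hcancel (fun σ hσ _ => hgne σ hσ)
      (fun σ hσ => gmem σ hσ) (fun σ hσ => hginv σ hσ)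
  calc (∑ σ ∈ A, (-1 : ℝ) ^ (σ.card + 1))
      = (-1 : ℝ) ^ (({i} : Finset ι).card + 1) + ∑ σ ∈ A.erase {i}, (-1 : ℝ) ^ (σ.card + 1) :=
        (Finset.add_sum_erase A _ hsingle).symm
    _ = 1 := by rw [herase]; simp

/-- for every selector `w` for `V(F)`, the vector with entries
`(−1)^{|σ|+1}` on `K_w` and `0` on `N(F) \ K_w` is an IE-vector for `F`; that is, for every
`τ ∈ V(F)`, `Σ_{σ∈K_w, σ⊆τ} (−1)^{|σ|+1} = 1`. -/
theorem stmt11 {S : Type*} {n : ℕ} (F : Fin n → Set S)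
    (w : Finset (Fin n) → Fin n) (hw : ∀ τ ∈ venn F, w τ ∈ τ) :
    IsIEVector F (fun σ => if σ ∈ Kw F w then (-1 : ℝ) ^ (σ.card + 1) else 0) ∧
    ∀ τ ∈ venn F,
      (∑ σ ∈ τ.powerset.filter (· ∈ Kw F w), (-1 : ℝ) ^ (σ.card + 1)) = 1 := by
  have key := fun τ hτ => key_sum F w hw (τ := τ) hτ
  refine ⟨⟨?_, ?_⟩, key⟩
  · intro σ hσ
    simp only [ite_eq_right_iff]
    intro hK
    exact absurd hK.1 hσ
  · intro τ hτ
    rw [← Finset.sum_filter]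
    rw [Finset.filter_filter]
    have : Finset.filter (fun σ => σ ∈ nerve F ∧ σ ∈ Kw F w) τ.powerset
        = τ.powerset.filter (· ∈ Kw F w) := by
      apply Finset.filter_congr
      intro σ _
      simp only [and_iff_right_iff_imp]
      exact fun h => h.1
    rw [this]
    exact key τ hτ
end

section
/- Let r ≥ 2 be an integer, let n > 0 be a real number, and let x_1, …, x_r be positive real numbers with x_1 + ⋯ + x_r ≤ n. Then ∏_{ℓ=1}^{r−1} x_ℓ/(x_ℓ + x_{ℓ+1} + ⋯ + x_r) ≤ (1 − (x_r/n)^{1/(r−1)})^{r−1}. -/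
/-!
Write `S ℓ = x ℓ + ⋯ + x r` for the tail sums and `t ℓ = S (ℓ + 1) / S ℓ ∈ (0, 1)`, so that the
`ℓ`-th factor is `1 - t ℓ` and the `t ℓ` telescope to `x r / S 1 ≥ x r / n`. For any
`t₁, …, t_m ∈ [0, 1]`, AM-GM applied to the `1 - tᵢ` and to the `tᵢ` gives
`(∏ (1 - tᵢ))^{1/m} + (∏ tᵢ)^{1/m} ≤ (∑ (1 - tᵢ))/m + (∑ tᵢ)/m = 1`, i.e.
`∏ (1 - tᵢ) ≤ (1 - (∏ tᵢ)^{1/m})^m`, and the right side decreases in `∏ tᵢ`.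
-/

open Finset

namespace Real

theorem prod_rpow_inv_card_le_sum_div_card {ι : Type*} {s : Finset ι} (hs : s.Nonempty)
    {z : ι → ℝ} (hz : ∀ i ∈ s, 0 ≤ z i) :
    (∏ i ∈ s, z i) ^ ((#s : ℝ)⁻¹) ≤ (∑ i ∈ s, z i) / #s := by
  simpa using geom_mean_le_arith_mean s (fun _ ↦ 1) z (fun _ _ ↦ zero_le_one)
    (by simpa using hs) hz

theorem prod_one_sub_le_one_sub_prod_rpow_pow {ι : Type*} (s : Finset ι) {t : ι → ℝ}
    (ht₀ : ∀ i ∈ s, 0 ≤ t i) (ht₁ : ∀ i ∈ s, t i ≤ 1) :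
    ∏ i ∈ s, (1 - t i) ≤ (1 - (∏ i ∈ s, t i) ^ ((#s : ℝ)⁻¹)) ^ #s := by
  rcases s.eq_empty_or_nonempty with rfl | hs
  · simp
  have hcard : (#s : ℝ) ≠ 0 := by exact_mod_cast hs.card_pos.ne'
  have hP : 0 ≤ ∏ i ∈ s, (1 - t i) := prod_nonneg fun i hi ↦ sub_nonneg.2 (ht₁ i hi)
  have hgeom : (∏ i ∈ s, (1 - t i)) ^ ((#s : ℝ)⁻¹) + (∏ i ∈ s, t i) ^ ((#s : ℝ)⁻¹) ≤ 1 :=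
    calc _ ≤ (∑ i ∈ s, (1 - t i)) / #s + (∑ i ∈ s, t i) / #s :=
          add_le_add (prod_rpow_inv_card_le_sum_div_card hs fun i hi ↦ sub_nonneg.2 (ht₁ i hi))
            (prod_rpow_inv_card_le_sum_div_card hs ht₀)
      _ = 1 := by
          rw [← add_div, ← sum_add_distrib]
          simp [hcard]
  calc ∏ i ∈ s, (1 - t i) = ((∏ i ∈ s, (1 - t i)) ^ ((#s : ℝ)⁻¹)) ^ #s :=
        (rpow_inv_natCast_pow hP hs.card_pos.ne').symm
    _ ≤ _ := pow_le_pow_left₀ (rpow_nonneg hP _) (by linarith) _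

end Real

theorem Finset.prod_Icc_div_of_ne_zero {K : Type*} [Field K] {f : ℕ → K} {m n : ℕ} (hmn : m ≤ n)
    (hf : ∀ i ∈ Ioc m n, f i ≠ 0) :
    ∏ i ∈ Icc m n, f (i + 1) / f i = f (n + 1) / f m := by
  induction n, hmn using Nat.le_induction with
  | base => simp
  | succ n hmn ih =>
    rw [prod_Icc_succ_top (by omega), ih fun i hi ↦ hf i (by simp at hi ⊢; omega)]
    have := hf (n + 1) (by simp; omega)
    field_simp

theorem prod_div_sum_Icc_le_one_sub_rpow_pow {x : ℕ → ℝ} {r : ℕ} (hr : 2 ≤ r)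
    (hx : ∀ i ∈ Icc 1 r, 0 < x i) :
    ∏ ℓ ∈ Icc 1 (r - 1), x ℓ / ∑ j ∈ Icc ℓ r, x j ≤
      (1 - (x r / ∑ j ∈ Icc 1 r, x j) ^ (((r - 1 : ℕ) : ℝ)⁻¹)) ^ (r - 1) := by
  set S : ℕ → ℝ := fun ℓ ↦ ∑ j ∈ Icc ℓ r, x j
  have hS_pos : ∀ ℓ, 1 ≤ ℓ → ℓ ≤ r → 0 < S ℓ := fun ℓ h₁ h₂ ↦
    sum_pos (fun i hi ↦ hx i (by simp only [mem_Icc] at hi ⊢; omega)) ⟨r, by simpa using h₂⟩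
  have hS_succ : ∀ ℓ ≤ r, S ℓ = x ℓ + S (ℓ + 1) := fun ℓ h ↦ by
    simp only [S, Finset.Icc_add_one_left_eq_Ioc, add_sum_Ioc_eq_sum_Icc h]
  have hfactor : ∀ ℓ ∈ Icc 1 (r - 1), x ℓ / S ℓ = 1 - S (ℓ + 1) / S ℓ := fun ℓ hℓ ↦ by
    simp only [mem_Icc] at hℓ
    rw [eq_sub_iff_add_eq, ← add_div, ← hS_succ ℓ (by omega),
      div_self (hS_pos ℓ hℓ.1 (by omega)).ne']
  have hratio_nonneg : ∀ ℓ ∈ Icc 1 (r - 1), 0 ≤ S (ℓ + 1) / S ℓ := fun ℓ hℓ ↦ by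
    simp only [mem_Icc] at hℓ
    exact div_nonneg (hS_pos _ (by omega) (by omega)).le (hS_pos ℓ hℓ.1 (by omega)).le
  have hratio_le_one : ∀ ℓ ∈ Icc 1 (r - 1), S (ℓ + 1) / S ℓ ≤ 1 := fun ℓ hℓ ↦ by
    simp only [mem_Icc] at hℓ
    rw [div_le_one (hS_pos ℓ hℓ.1 (by omega)), hS_succ ℓ (by omega)]
    linarith [hx ℓ (by simp; omega)]
  have htelescope : ∏ ℓ ∈ Icc 1 (r - 1), S (ℓ + 1) / S ℓ = x r / S 1 := by
    rw [prod_Icc_div_of_ne_zero (by omega) fun i hi ↦ (hS_pos i (by simp at hi; omega)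
      (by simp at hi; omega)).ne', Nat.sub_add_cancel (by omega)]
    simp [S]
  rw [prod_congr rfl hfactor, ← htelescope]
  simpa using Real.prod_one_sub_le_one_sub_prod_rpow_pow _ hratio_nonneg hratio_le_one

theorem stmt13_general (r : ℕ) (hr : 2 ≤ r) (n : ℝ) (x : ℕ → ℝ)
    (hx : ∀ i ∈ Finset.Icc 1 r, 0 < x i)
    (hsum : ∑ i ∈ Finset.Icc 1 r, x i ≤ n) :
    ∏ ℓ ∈ Finset.Icc 1 (r - 1), (x ℓ / ∑ j ∈ Finset.Icc ℓ r, x j) ≤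
      (1 - (x r / n) ^ ((1 : ℝ) / ((r : ℝ) - 1))) ^ (r - 1) := by
  have hS₁ : 0 < ∑ i ∈ Icc 1 r, x i := sum_pos hx ⟨r, by simp; omega⟩
  have hxr : 0 < x r := hx r (by simp; omega)
  have hexp : (1 : ℝ) / ((r : ℝ) - 1) = ((r - 1 : ℕ) : ℝ)⁻¹ := by
    rw [Nat.cast_sub (by omega), one_div, Nat.cast_one]
  have hxS : x r / ∑ i ∈ Icc 1 r, x i ≤ 1 :=
    (div_le_one hS₁).2 (single_le_sum (fun i hi ↦ (hx i hi).le) (by simp; omega))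
  rw [hexp]
  refine (prod_div_sum_Icc_le_one_sub_rpow_pow hr hx).trans ?_
  gcongr
  · exact sub_nonneg.2 (Real.rpow_le_one (by positivity) hxS (by positivity))
  · exact div_nonneg hxr.le (hS₁.trans_le hsum).le

/-- for positive reals `x_1, …, x_r` with `x_1 + ⋯ + x_r ≤ n`,
`∏_{ℓ=1}^{r−1} x_ℓ/(x_ℓ + ⋯ + x_r) ≤ (1 − (x_r/n)^{1/(r−1)})^{r−1}`. -/
theorem stmt13 (r : ℕ) (hr : 2 ≤ r) (n : ℝ) (hn : 0 < n) (x : ℕ → ℝ)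
    (hx : ∀ i ∈ Finset.Icc 1 r, 0 < x i)
    (hsum : ∑ i ∈ Finset.Icc 1 r, x i ≤ n) :
    ∏ ℓ ∈ Finset.Icc 1 (r - 1), (x ℓ / ∑ j ∈ Finset.Icc ℓ r, x j) ≤
      (1 - (x r / n) ^ ((1 : ℝ) / ((r : ℝ) - 1))) ^ (r - 1) :=
  stmt13_general r hr n x hx hsum
end

section
/- Let n, r, b be integers with r ≥ 2 and 1 < b < n, set k = rb, let F = (F_1,…,F_n) be a family of subsets of a set S with V(F) = {τ_1,…,τ_m}, and fix an r-element set J ⊆ [m]. Call a permutation ρ of [n] bad for J if there exist i_1 < i_2 < ⋯ < i_k in [n] such that for every s ∈ {1, b+1, 2b+1, …, (r−1)b+1} some j ∈ J is ρ-compatible with {i_s, i_{s+1}, …, i_k}. Then the number of permutations of [n] that are bad for J is at most n! · (1 − (b/n)^{1/(r−1)})^{b(r−1)}. -/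
open Finset
open scoped Classical

variable {ι S : Type*}

/-- A Venn-diagram cell `τ` (a "row" of the permuted incidence matrix `Γ_ρ`) is
`ρ`-compatible with a nonempty set `I ⊆ [n]` if `I ⊆ ρ(τ)` and `ρ(τ)` contains no element
smaller than `min I` (equivalently, every element of `ρ(τ)` is `≥` some element of `I`). -/
def Compatible {n : ℕ} (ρ : Equiv.Perm (Fin n)) (τ I : Finset (Fin n)) : Prop :=
  I ⊆ τ.image ⇑ρ ∧ ∀ b ∈ τ.image ⇑ρ, ∃ a ∈ I, a ≤ b

/-!
Call `ρ` a *staircase* for `J` if the rows of `J` can be listed as `τ_0, …, τ_{r-1}` so that for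
each `j` at least `b` elements of `τ_0 ∩ ⋯ ∩ τ_j` have `ρ`-values below every `ρ`-value on
`τ_{j+1} ∪ ⋯ ∪ τ_{r-1}`. Every bad permutation is a staircase: the rows chosen for the tails
`{i_{sb+1}, …, i_k}` are distinct, the `ρ`-preimages of the block `i_{jb+1}, …, i_{jb+b}` lie in
`τ_0 ∩ ⋯ ∩ τ_j`, and compatibility of the later rows puts the block below all their `ρ`-values.

Staircases are counted by peeling off the first row `τ`. Let `Z` be the union of the other rows
and `Y` the part of the current intersection `C ∩ τ` outside `Z`. Conditionally on the values of
`ρ` off `Y ∪ Z` and on the relative order of `ρ` on `Z`, the set `ρ(Y)` is a uniformly random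
`|Y|`-subset of `ρ(Y ∪ Z)`, so `b` elements of `Y` lie below all of `Z` with probability
`(|Y|)_b / (|Y| + |Z|)_b`, whatever happens inside `Z`. Summing over `τ`, using superadditivity
of `x ↦ (x)_b` and the weighted AM–GM inequality with weights `1/(p+1)` and `p/(p+1)`, an
induction on the number of rows gives the bound `n! · (1 - (b/γ)^{1/(r-1)})^{b(r-1)}`, where
`γ ≤ n` is the size of the union of the rows.
-/

theorem Nat.descFactorial_add_descFactorial_le {b : ℕ} (hb : 1 ≤ b) (a c : ℕ) :
    a.descFactorial b + c.descFactorial b ≤ (a + c).descFactorial b := by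
  induction b, hb using Nat.le_induction with
  | base => simp
  | succ b _ ih =>
    simp only [Nat.descFactorial_succ]
    calc (a - b) * a.descFactorial b + (c - b) * c.descFactorial b
        ≤ (a + c - b) * a.descFactorial b + (a + c - b) * c.descFactorial b := by
          gcongr <;> omega
      _ ≤ (a + c - b) * (a + c).descFactorial b := by rw [← Nat.mul_add]; gcongr

theorem Nat.sum_descFactorial_le {ι : Type*} {b : ℕ} (hb : 1 ≤ b) (s : Finset ι) (f : ι → ℕ) :
    ∑ i ∈ s, (f i).descFactorial b ≤ (∑ i ∈ s, f i).descFactorial b := by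
  induction s using Finset.cons_induction with
  | empty => simp
  | cons a s ha ih =>
    rw [sum_cons, sum_cons]
    exact (Nat.add_le_add_left ih _).trans (Nat.descFactorial_add_descFactorial_le hb _ _)

theorem Nat.descFactorial_mul_pow_le (Q g b : ℕ) :
    Q.descFactorial b * (Q + g) ^ b ≤ Q ^ b * (Q + g).descFactorial b := by
  have hpow : ∀ x : ℕ, x ^ b = ∏ _i ∈ range b, x := fun x => by rw [prod_const, card_range]
  rw [Nat.descFactorial_eq_prod_range, Nat.descFactorial_eq_prod_range, hpow, hpow,
    ← Finset.prod_mul_distrib, ← Finset.prod_mul_distrib]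
  refine Finset.prod_le_prod' fun i _ => ?_
  rcases le_or_gt i Q with hi | hi
  · obtain ⟨d, rfl⟩ := Nat.exists_eq_add_of_le hi
    rw [show i + d + g - i = d + g by omega, Nat.add_sub_cancel_left]
    nlinarith
  · simp [Nat.sub_eq_zero_of_le hi.le]

theorem Real.one_sub_rpow_mul_one_sub_rpow_le {x y w : ℝ} (hx : x ∈ Set.Icc (0 : ℝ) 1)
    (hy : y ∈ Set.Icc (0 : ℝ) 1) (hw : w ∈ Set.Icc (0 : ℝ) 1) :
    (1 - x) ^ w * (1 - y) ^ (1 - w) ≤ 1 - x ^ w * y ^ (1 - w) := by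
  obtain ⟨hx0, hx1⟩ := hx
  obtain ⟨hy0, hy1⟩ := hy
  obtain ⟨hw0, hw1⟩ := hw
  have h1 := Real.geom_mean_le_arith_mean2_weighted hw0 (sub_nonneg.2 hw1) (sub_nonneg.2 hx1)
    (sub_nonneg.2 hy1) (add_sub_cancel w 1)
  have h2 := Real.geom_mean_le_arith_mean2_weighted hw0 (sub_nonneg.2 hw1) hx0 hy0
    (add_sub_cancel w 1)
  linarith

lemma OrderIso.coe_eq_of_strictMono {σ τ : Type*} [LinearOrder σ] [Finite σ] [Preorder τ]
    (e : σ ≃o τ) {f : σ → τ} (hf : StrictMono f) : ⇑e = f := by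
  have hsurj := (Finite.injective_iff_surjective_of_equiv e.toEquiv).1 hf.injective
  rw [Subsingleton.elim e (hf.orderIsoOfSurjective f hsurj), StrictMono.coe_orderIsoOfSurjective]

namespace BadPermutation

noncomputable def badBound (b p γ : ℕ) : ℝ :=
  if b ≤ γ then (1 - ((b : ℝ) / γ) ^ ((1 : ℝ) / p)) ^ (b * p) else 0

lemma natCast_div_mem_Icc {b γ : ℕ} (h : b ≤ γ) : (b : ℝ) / γ ∈ Set.Icc (0 : ℝ) 1 :=
  ⟨by positivity, div_le_one_of_le₀ (by exact_mod_cast h) (by positivity)⟩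

lemma natCast_div_rpow_mem_Icc {b γ : ℕ} (h : b ≤ γ) {e : ℝ} (he : 0 ≤ e) :
    ((b : ℝ) / γ) ^ e ∈ Set.Icc (0 : ℝ) 1 :=
  ⟨by positivity, Real.rpow_le_one (natCast_div_mem_Icc h).1 (natCast_div_mem_Icc h).2 he⟩

lemma badBound_nonneg (b p γ : ℕ) : 0 ≤ badBound b p γ := by
  unfold badBound
  split_ifs with h
  · exact pow_nonneg (sub_nonneg.2 (natCast_div_rpow_mem_Icc h (by positivity)).2) _
  · rfl

lemma badBound_mono (b p : ℕ) : Monotone (badBound b p) := by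
  intro γ γ' hγγ'
  by_cases h : b ≤ γ
  swap
  · rw [badBound, if_neg h]
    exact badBound_nonneg b p γ'
  rw [badBound, badBound, if_pos h, if_pos (h.trans hγγ')]
  refine pow_le_pow_left₀
    (sub_nonneg.2 (natCast_div_rpow_mem_Icc h (e := (1 : ℝ) / p) (by positivity)).2) ?_ _
  rcases Nat.eq_zero_or_pos b with rfl | hb
  · simp
  refine sub_le_sub_left (Real.rpow_le_rpow (by positivity) ?_ (by positivity)) _
  exact div_le_div_of_nonneg_left (Nat.cast_nonneg b) (by exact_mod_cast hb.trans_le h)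
    (by exact_mod_cast hγγ')

lemma one_sub_pow_mul_one_sub_pow_le {a₀ a₁ x : ℝ} (b p : ℕ) (ha₀ : a₀ ∈ Set.Icc (0 : ℝ) 1)
    (ha₁ : a₁ ∈ Set.Icc (0 : ℝ) 1)
    (hx : x ≤ a₀ ^ ((1 : ℝ) / (p + 1)) * a₁ ^ (1 - (1 : ℝ) / (p + 1))) :
    (1 - a₀) ^ b * (1 - a₁) ^ (b * p) ≤ (1 - x) ^ (b * (p + 1)) := by
  set w : ℝ := 1 / (p + 1) with hw_def
  have hw : w ∈ Set.Icc (0 : ℝ) 1 :=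
    ⟨by positivity, div_le_one_of_le₀ (by linarith [(Nat.cast_nonneg p : (0 : ℝ) ≤ p)])
      (by positivity)⟩
  have h₀ : 0 ≤ 1 - a₀ := sub_nonneg.2 ha₀.2
  have h₁ : 0 ≤ 1 - a₁ := sub_nonneg.2 ha₁.2
  have hP : (1 - a₀) ^ w * (1 - a₁) ^ (1 - w) ≤ 1 - x :=
    (Real.one_sub_rpow_mul_one_sub_rpow_le ha₀ ha₁ hw).trans (by linarith)
  have hpow : ((1 - a₀) ^ w * (1 - a₁) ^ (1 - w)) ^ (b * (p + 1))
      = (1 - a₀) ^ b * (1 - a₁) ^ (b * p) := by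
    have hp : (p : ℝ) + 1 ≠ 0 := by positivity
    rw [mul_pow, ← Real.rpow_mul_natCast h₀, ← Real.rpow_mul_natCast h₁,
      ← Real.rpow_natCast _ b, ← Real.rpow_natCast _ (b * p)]
    congr 2 <;> (rw [hw_def]; push_cast; field_simp) ; ring
  rw [← hpow]
  exact pow_le_pow_left₀ (by positivity) hP _

lemma descFactorial_div_le_one_sub_pow {b Q g : ℕ} (hQ : b ≤ Q) :
    (Q.descFactorial b : ℝ) / (Q + g).descFactorial b ≤ (1 - (g : ℝ) / (Q + g : ℕ)) ^ b := by
  rcases Nat.eq_zero_or_pos (Q + g) with hu | hu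
  · obtain ⟨rfl, rfl⟩ : b = 0 ∧ Q = 0 := by omega
    simp
  have hu' : (0 : ℝ) < (Q + g : ℕ) := by exact_mod_cast hu
  have hQu : 1 - (g : ℝ) / (Q + g : ℕ) = Q / (Q + g : ℕ) := by
    field_simp; push_cast; ring
  rw [hQu, div_pow, div_le_div_iff₀ (by exact_mod_cast Nat.descFactorial_pos.2 (by omega))
    (pow_pos hu' _)]
  exact_mod_cast Nat.descFactorial_mul_pow_le Q g b

lemma rpow_div_le_mul_rpow {b p Q γ' γ : ℕ} (hb : 1 ≤ b) (hγ' : b ≤ γ') (hγ : Q + γ' ≤ γ) :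
    ((b : ℝ) / γ) ^ ((1 : ℝ) / (p + 1)) ≤ ((γ' : ℝ) / (Q + γ' : ℕ)) ^ ((1 : ℝ) / (p + 1))
      * (((b : ℝ) / γ') ^ ((1 : ℝ) / p)) ^ (1 - (1 : ℝ) / (p + 1)) := by
  set w : ℝ := 1 / (p + 1) with hw_def
  have hγ'0 : (0 : ℝ) < γ' := by exact_mod_cast (by omega : 0 < γ')
  have hb' : (0 : ℝ) < b / γ' := div_pos (by exact_mod_cast hb) hγ'0
  have hexp : ((b : ℝ) / γ') ^ w ≤ (((b : ℝ) / γ') ^ ((1 : ℝ) / p)) ^ (1 - w) := by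
    rw [← Real.rpow_mul hb'.le]
    refine Real.rpow_le_rpow_of_exponent_ge hb' (natCast_div_mem_Icc hγ').2 ?_
    rcases Nat.eq_zero_or_pos p with rfl | hp
    · simp [hw_def]
    · have : (p : ℝ) ≠ 0 := by positivity
      rw [hw_def]; field_simp; linarith
  have hbase : ((b : ℝ) / γ) ^ w ≤ ((γ' : ℝ) / (Q + γ' : ℕ)) ^ w * ((b : ℝ) / γ') ^ w := by
    rw [← Real.mul_rpow (by positivity) hb'.le]
    refine Real.rpow_le_rpow (by positivity) ?_ (by positivity)
    rw [div_mul_div_comm, mul_comm (γ' : ℝ), mul_div_mul_right _ _ hγ'0.ne']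
    exact div_le_div_of_nonneg_left (by positivity) (by exact_mod_cast (by omega : 0 < Q + γ'))
      (by exact_mod_cast hγ)
  exact hbase.trans (mul_le_mul_of_nonneg_left hexp (by positivity))

theorem descFactorial_div_mul_badBound_le {b p Q γ' γ : ℕ} (hb : 1 ≤ b) (hQ : b ≤ Q)
    (hγ : Q + γ' ≤ γ) :
    (Q.descFactorial b : ℝ) / (Q + γ').descFactorial b * badBound b p γ'
      ≤ badBound b (p + 1) γ := by
  by_cases hγ' : b ≤ γ'
  swap
  · rw [badBound, if_neg hγ', mul_zero]
    exact badBound_nonneg b (p + 1) γ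
  rw [badBound, badBound, if_pos hγ', if_pos (by omega)]
  have ha₀ : (γ' : ℝ) / (Q + γ' : ℕ) ∈ Set.Icc (0 : ℝ) 1 := natCast_div_mem_Icc (by omega)
  have ha₁ := natCast_div_rpow_mem_Icc hγ' (e := (1 : ℝ) / p) (by positivity)
  refine (mul_le_mul_of_nonneg_right (descFactorial_div_le_one_sub_pow hQ)
    (pow_nonneg (sub_nonneg.2 ha₁.2) _)).trans
    (one_sub_pow_mul_one_sub_pow_le b p ha₀ ha₁ ?_)
  exact_mod_cast rpow_div_le_mul_rpow (p := p) hb hγ' hγ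

lemma div_descFactorial_le_div_descFactorial {q a a' b : ℕ} (hq : q ≤ a) (ha : a ≤ a') :
    (q.descFactorial b : ℝ) / a'.descFactorial b ≤ (q.descFactorial b : ℝ) / a.descFactorial b := by
  by_cases hb : b ≤ q
  · exact div_le_div_of_nonneg_left (by positivity)
      (by exact_mod_cast Nat.descFactorial_pos.2 (hb.trans hq))
      (by exact_mod_cast Nat.descFactorial_le b ha)
  · rw [Nat.descFactorial_eq_zero_iff_lt.2 (not_le.1 hb), Nat.cast_zero, zero_div, zero_div]

theorem sum_descFactorial_div_mul_badBound_le {ι : Type*} {b p γ : ℕ} (hb : 1 ≤ b)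
    (K : Finset ι) (q g : ι → ℕ) (hγ : ∀ i ∈ K, ∑ j ∈ K, q j + g i ≤ γ) :
    ∑ i ∈ K, ((q i).descFactorial b : ℝ) / (∑ j ∈ K, q j + g i).descFactorial b
        * badBound b p (g i)
      ≤ badBound b (p + 1) γ := by
  set Q := ∑ j ∈ K, q j
  by_cases hbQ : b ≤ Q
  swap
  · have hq : ∀ i ∈ K, (q i).descFactorial b = 0 := fun i hi =>
      Nat.descFactorial_eq_zero_iff_lt.2 ((single_le_sum (fun j _ => Nat.zero_le (q j)) hi).trans_lt
        (not_le.1 hbQ))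
    rw [sum_eq_zero fun i hi => by rw [hq i hi, Nat.cast_zero, zero_div, zero_mul]]
    exact badBound_nonneg b (p + 1) γ
  obtain ⟨i₀, hi₀, hmax⟩ := K.exists_max_image
    (fun i => badBound b p (g i) / (Q + g i).descFactorial b)
    (K.nonempty_of_sum_ne_zero (Nat.one_le_iff_ne_zero.1 (hb.trans hbQ)))
  set c := badBound b p (g i₀) / (Q + g i₀).descFactorial b
  have hsum : (∑ i ∈ K, (q i).descFactorial b : ℝ) ≤ Q.descFactorial b := by
    exact_mod_cast Nat.sum_descFactorial_le hb K q
  calc ∑ i ∈ K, ((q i).descFactorial b : ℝ) / (Q + g i).descFactorial b * badBound b p (g i)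
      = ∑ i ∈ K, ((q i).descFactorial b : ℝ) * (badBound b p (g i) / (Q + g i).descFactorial b) :=
        sum_congr rfl fun i _ => by ring
    _ ≤ ∑ i ∈ K, ((q i).descFactorial b : ℝ) * c :=
        sum_le_sum fun i hi => mul_le_mul_of_nonneg_left (hmax i hi) (by positivity)
    _ ≤ Q.descFactorial b * c := by
        rw [← sum_mul]
        exact mul_le_mul_of_nonneg_right hsum (div_nonneg (badBound_nonneg _ _ _) (by positivity))
    _ = (Q.descFactorial b : ℝ) / (Q + g i₀).descFactorial b * badBound b p (g i₀) := by ring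
    _ ≤ badBound b (p + 1) γ := descFactorial_div_mul_badBound_le hb hbQ (hγ i₀ hi₀)

section Rank

variable {α : Type*} [LinearOrder α]

def rankIn (s : Finset α) (a : α) : ℕ := #{x ∈ s | x < a}

lemma rankIn_lt_rankIn_iff {s : Finset α} {a a' : α} (ha : a ∈ s) :
    rankIn s a < rankIn s a' ↔ a < a' := by
  constructor
  · intro h
    by_contra! h'
    exact (card_le_card (monotone_filter_right s fun x _ hx => hx.trans_le h')).not_gt h
  · intro h
    refine card_lt_card ⟨monotone_filter_right s fun x _ hx => hx.trans h, fun hsub => ?_⟩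
    exact lt_irrefl a (mem_filter.1 (hsub (mem_filter.2 ⟨ha, h⟩))).2

lemma rankIn_injOn (s : Finset α) : Set.InjOn (rankIn s) s := by
  intro a ha a' ha' h
  rcases lt_trichotomy a a' with hlt | heq | hgt
  · exact absurd h ((rankIn_lt_rankIn_iff ha).2 hlt).ne
  · exact heq
  · exact absurd h ((rankIn_lt_rankIn_iff ha').2 hgt).ne'

lemma rankIn_lt_card {s : Finset α} {a : α} (ha : a ∈ s) : rankIn s a < #s :=
  card_lt_card ⟨filter_subset _ s, fun hsub => lt_irrefl a (mem_filter.1 (hsub ha)).2⟩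

def lowest (b : ℕ) (s : Finset α) : Finset α := {a ∈ s | rankIn s a < b}

lemma card_lowest {b : ℕ} {s : Finset α} (hb : b ≤ #s) : #(lowest b s) = b := by
  have himage : s.image (rankIn s) = range #s :=
    eq_of_subset_of_card_le (fun k hk => by
      obtain ⟨a, ha, rfl⟩ := mem_image.1 hk
      exact mem_range.2 (rankIn_lt_card ha))
      (by rw [card_range, card_image_of_injOn (rankIn_injOn s)])
  rw [lowest, ← card_image_of_injOn ((rankIn_injOn s).mono (filter_subset _ s)),
    ← filter_image (p := fun k => k < b), himage]
  convert card_range b using 2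
  ext k
  simp only [mem_filter, mem_range]
  omega

end Rank

section BelowAll

variable {α β : Type*} [LinearOrder β]

def belowAll (f : α → β) (Y Z : Finset α) : Finset α := {x ∈ Y | ∀ z ∈ Z, f x < f z}

lemma mem_belowAll {f : α → β} {Y Z : Finset α} {x : α} :
    x ∈ belowAll f Y Z ↔ x ∈ Y ∧ ∀ z ∈ Z, f x < f z :=
  mem_filter

lemma card_belowAll_le (f : α → β) (Y Z : Finset α) : #(belowAll f Y Z) ≤ #Y :=
  card_filter_le Y _

lemma belowAll_congr {f g : α → β} {Y Z : Finset α}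
    (h : ∀ x ∈ Y, ∀ z ∈ Z, (f x < f z ↔ g x < g z)) : belowAll f Y Z = belowAll g Y Z :=
  filter_congr fun x hx => forall₂_congr fun z hz => h x hx z hz

lemma belowAll_sdiff [DecidableEq α] (f : α → β) (Y Z : Finset α) :
    belowAll f (Y \ Z) Z = belowAll f Y Z := by
  ext x
  simp only [belowAll, mem_filter, mem_sdiff]
  exact ⟨fun h => ⟨h.1.1, h.2⟩, fun h => ⟨⟨h.1, fun hx => lt_irrefl _ (h.2 x hx)⟩, h.2⟩⟩

theorem le_card_belowAll_iff [DecidableEq α] {f : α → β} (hf : Function.Injective f)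
    {Y Z : Finset α} (hYZ : Disjoint Y Z) {b : ℕ} (hb : b ≤ #(Y ∪ Z)) :
    b ≤ #(belowAll f Y Z) ↔ lowest b ((Y ∪ Z).image f) ⊆ Y.image f := by
  set W := (Y ∪ Z).image f
  constructor
  · intro hA w hw
    obtain ⟨hwW, hrank⟩ := mem_filter.1 hw
    obtain ⟨u, hu, rfl⟩ := mem_image.1 hwW
    rcases mem_union.1 hu with huY | huZ
    · exact mem_image_of_mem f huY
    refine absurd hrank (not_lt.2 (hA.trans ?_))
    rw [← card_image_of_injective _ hf]
    refine card_le_card fun v hv => ?_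
    obtain ⟨x, hx, rfl⟩ := mem_image.1 hv
    obtain ⟨hxY, hxZ⟩ := mem_filter.1 hx
    exact mem_filter.2 ⟨mem_image_of_mem f (mem_union_left Z hxY), hxZ u huZ⟩
  · intro hsub
    have hlow : lowest b W ⊆ {x ∈ Y | f x ∈ lowest b W}.image f := fun w hw => by
      obtain ⟨y, hy, rfl⟩ := mem_image.1 (hsub hw)
      exact mem_image_of_mem f (mem_filter.2 ⟨hy, hw⟩)
    calc b = #(lowest b W) := (card_lowest (by rwa [card_image_of_injective _ hf])).symm
      _ ≤ #{x ∈ Y | f x ∈ lowest b W} := (card_le_card hlow).trans card_image_le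
      _ ≤ #(belowAll f Y Z) := card_le_card (monotone_filter_right Y fun x _ hx => ?_)
    intro z hz
    have hzW : f z ∈ W := mem_image_of_mem f (mem_union_right Y hz)
    have hzlow : f z ∉ lowest b W := fun h => by
      obtain ⟨y, hy, hyz⟩ := mem_image.1 (hsub h)
      exact disjoint_left.1 hYZ hy (hf hyz ▸ hz)
    rw [lowest, mem_filter, not_and, not_lt] at hzlow
    exact (rankIn_lt_rankIn_iff (mem_filter.1 hx).1).1 ((mem_filter.1 hx).2.trans_le (hzlow hzW))

end BelowAll

section Embeddings

variable {γ δ : Type*} [Fintype γ] [Fintype δ] [DecidableEq δ]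

lemma card_filter_map_subset_map_perm (g : Equiv.Perm δ) (T : Finset δ) :
    #{φ : γ ↪ δ | T.map g.toEmbedding ⊆ univ.map φ} = #{φ : γ ↪ δ | T ⊆ univ.map φ} := by
  refine (card_equiv (Equiv.embeddingCongr (Equiv.refl γ) g) fun φ => ?_).symm
  simp only [mem_filter, mem_univ, true_and]
  rw [← map_subset_map (f := g.toEmbedding), map_map]
  congr! 2

lemma exists_perm_map_eq {T T' : Finset δ} (h : #T = #T') :
    ∃ g : Equiv.Perm δ, T.map g.toEmbedding = T' := by
  let g := (Finset.equivOfCardEq h).extendSubtype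
  refine ⟨g, eq_of_subset_of_card_le (fun y hy => ?_) (by rw [card_map, h])⟩
  obtain ⟨x, hx, rfl⟩ := mem_map.1 hy
  exact Equiv.extendSubtype_mem _ x hx

-- The count depends on `T` only through `#T` (transport by a permutation of `δ`); summing it over
-- all `#T`-subsets counts every embedding `(card γ).choose #T` times.
theorem card_filter_subset_map_mul_descFactorial (T : Finset δ) :
    #{φ : γ ↪ δ | T ⊆ univ.map φ} * (Fintype.card δ).descFactorial #T
      = (Fintype.card γ).descFactorial #T * Fintype.card (γ ↪ δ) := by
  have hconst : ∀ T' ∈ powersetCard #T (univ : Finset δ),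
      #{φ : γ ↪ δ | T' ⊆ univ.map φ} = #{φ : γ ↪ δ | T ⊆ univ.map φ} := fun T' hT' => by
    obtain ⟨g, rfl⟩ := exists_perm_map_eq (mem_powersetCard.1 hT').2.symm
    exact card_filter_map_subset_map_perm g T
  have hcount := sum_card_bipartiteAbove_eq_sum_card_bipartiteBelow
    (s := powersetCard #T (univ : Finset δ)) (t := (univ : Finset (γ ↪ δ)))
    (r := fun T' φ => T' ⊆ univ.map φ)
  have hbelow : ∀ φ : γ ↪ δ,
      #((powersetCard #T univ).bipartiteBelow (fun T' φ => T' ⊆ univ.map φ) φ)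
        = (Fintype.card γ).choose #T := fun φ => by
    rw [bipartiteBelow, ← card_univ, ← card_map φ, ← card_powersetCard]
    congr 1
    ext T'
    simp [mem_powersetCard, and_comm]
  simp only [bipartiteAbove, sum_congr rfl hconst, sum_const, card_powersetCard, card_univ,
    smul_eq_mul, hbelow] at hcount
  rw [Nat.descFactorial_eq_factorial_mul_choose, Nat.descFactorial_eq_factorial_mul_choose,
    mul_comm (Nat.factorial #T), ← mul_assoc, mul_comm _ ((Fintype.card δ).choose #T), hcount]
  ring

end Embeddings
section Profile

variable {α : Type*} [LinearOrder α]

lemma image_subset_image_of_eqOn_compl {ρ σ : Equiv.Perm α} {s : Finset α}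
    (h : ∀ x ∉ s, ρ x = σ x) : s.image ρ ⊆ s.image σ := by
  intro y hy
  obtain ⟨x, hx, rfl⟩ := mem_image.1 hy
  by_cases hy : σ.symm (ρ x) ∈ s
  · exact mem_image.2 ⟨_, hy, σ.apply_symm_apply _⟩
  · have : σ.symm (ρ x) = x := ρ.injective (by rw [h _ hy, σ.apply_symm_apply])
    exact absurd (by rwa [this]) hy

lemma image_eq_image_of_eqOn_compl {ρ σ : Equiv.Perm α} {s : Finset α}
    (h : ∀ x ∉ s, ρ x = σ x) : s.image ρ = s.image σ :=
  (image_subset_image_of_eqOn_compl h).antisymm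
    (image_subset_image_of_eqOn_compl fun x hx => (h x hx).symm)

variable (Y Z : Finset α)

def profile (ρ : Equiv.Perm α) : (α → Option α) × (α → α → Prop) :=
  (fun x => if x ∈ Y ∪ Z then none else some (ρ x), fun u v => u ∈ Z ∧ v ∈ Z ∧ ρ u < ρ v)

variable {Y Z}

lemma profile_eq_profile_iff {ρ σ : Equiv.Perm α} :
    profile Y Z ρ = profile Y Z σ ↔
      (∀ x ∉ Y ∪ Z, ρ x = σ x) ∧ ∀ u ∈ Z, ∀ v ∈ Z, (ρ u < ρ v ↔ σ u < σ v) := by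
  simp only [profile, Prod.mk.injEq, funext_iff, eq_iff_iff]
  constructor
  · rintro ⟨hout, horder⟩
    exact ⟨fun x hx => by simpa [hx] using hout x,
      fun u hu v hv => by simpa [hu, hv] using horder u v⟩
  · rintro ⟨hout, horder⟩
    refine ⟨fun x => ?_, fun u v => ?_⟩
    · by_cases hx : x ∈ Y ∪ Z
      · simp [hx]
      · simp [hx, hout x hx]
    · by_cases hu : u ∈ Z <;> by_cases hv : v ∈ Z <;> simp [hu, hv, horder]

end Profile

section Glue

variable {α : Type*} [LinearOrder α] {Y Z : Finset α} {ρ₀ : Equiv.Perm α}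

def embRange (φ : Y ↪ (Y ∪ Z).image ρ₀) : Finset α :=
  univ.map (φ.trans (Function.Embedding.subtype _))

lemma mem_embRange (φ : Y ↪ (Y ∪ Z).image ρ₀) (a : Y) : (φ a : α) ∈ embRange φ :=
  mem_map_of_mem _ (mem_univ a)

lemma embRange_subset (φ : Y ↪ (Y ∪ Z).image ρ₀) : embRange φ ⊆ (Y ∪ Z).image ρ₀ := by
  intro v hv
  obtain ⟨a, -, rfl⟩ := mem_map.1 hv
  exact (φ a).2

def freeValues (φ : Y ↪ (Y ∪ Z).image ρ₀) : Finset α := (Y ∪ Z).image ρ₀ \ embRange φ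

lemma card_freeValues (hYZ : Disjoint Y Z) (φ : Y ↪ (Y ∪ Z).image ρ₀) :
    #(freeValues φ) = #(Z.image ρ₀) := by
  rw [freeValues, card_sdiff_of_subset (embRange_subset φ), embRange, card_map, card_univ,
    Fintype.card_coe, card_image_of_injective _ ρ₀.injective,
    card_image_of_injective _ ρ₀.injective, card_union_of_disjoint hYZ]
  omega

def zMatch (hYZ : Disjoint Y Z) (φ : Y ↪ (Y ∪ Z).image ρ₀) : Z.image ρ₀ ≃o freeValues φ :=
  ((Z.image ρ₀).orderIsoOfFin rfl).symm.trans
    ((freeValues φ).orderIsoOfFin (card_freeValues hYZ φ))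

-- `Z` must take the values left over by `φ`, in the order `ρ₀` induces on `Z`: this makes
-- `glue φ` the unique permutation with the profile of `ρ₀` that extends `φ`.
def glue (hYZ : Disjoint Y Z) (φ : Y ↪ (Y ∪ Z).image ρ₀) (x : α) : α :=
  if hx : x ∈ Y then φ ⟨x, hx⟩
  else if hz : x ∈ Z then zMatch hYZ φ ⟨ρ₀ x, mem_image_of_mem _ hz⟩
  else ρ₀ x

variable (hYZ : Disjoint Y Z) (φ : Y ↪ (Y ∪ Z).image ρ₀)

lemma glue_of_mem_left {x : α} (hx : x ∈ Y) : glue hYZ φ x = φ ⟨x, hx⟩ := by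
  rw [glue, dif_pos hx]

lemma glue_of_mem_right {x : α} (hz : x ∈ Z) :
    glue hYZ φ x = zMatch hYZ φ ⟨ρ₀ x, mem_image_of_mem _ hz⟩ := by
  rw [glue, dif_neg (disjoint_right.1 hYZ hz), dif_pos hz]

lemma glue_of_notMem {x : α} (hx : x ∉ Y ∪ Z) : glue hYZ φ x = ρ₀ x := by
  rw [mem_union, not_or] at hx
  rw [glue, dif_neg hx.1, dif_neg hx.2]

lemma glue_mem_embRange_iff {x : α} : glue hYZ φ x ∈ embRange φ ↔ x ∈ Y := by
  refine ⟨fun h => ?_, fun hx => glue_of_mem_left hYZ φ hx ▸ mem_embRange φ _⟩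
  by_contra hx
  by_cases hz : x ∈ Z
  · rw [glue_of_mem_right hYZ φ hz] at h
    exact (mem_sdiff.1 (zMatch hYZ φ _).2).2 h
  · rw [glue_of_notMem hYZ φ (by simp [hx, hz])] at h
    exact (by simp [hx, hz] : x ∉ Y ∪ Z)
      (ρ₀.injective.mem_finset_image.1 (embRange_subset φ h))

lemma glue_mem_image_iff {x : α} : glue hYZ φ x ∈ (Y ∪ Z).image ρ₀ ↔ x ∈ Y ∪ Z := by
  by_cases hx : x ∈ Y
  · simp only [mem_union, hx, true_or, iff_true]
    exact embRange_subset φ ((glue_mem_embRange_iff hYZ φ).2 hx)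
  by_cases hz : x ∈ Z
  · simp only [mem_union, hz, or_true, iff_true, glue_of_mem_right hYZ φ hz]
    exact (mem_sdiff.1 (zMatch hYZ φ _).2).1
  · rw [glue_of_notMem hYZ φ (by simp [hx, hz]), ρ₀.injective.mem_finset_image]

lemma glue_injective : Function.Injective (glue hYZ φ) := by
  intro x x' h
  have hY : x ∈ Y ↔ x' ∈ Y := by
    rw [← glue_mem_embRange_iff hYZ φ, h, glue_mem_embRange_iff]
  have hYZ' : x ∈ Y ∪ Z ↔ x' ∈ Y ∪ Z := by
    rw [← glue_mem_image_iff hYZ φ, h, glue_mem_image_iff]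
  by_cases hx : x ∈ Y
  · rw [glue_of_mem_left hYZ φ hx, glue_of_mem_left hYZ φ (hY.1 hx)] at h
    exact congrArg Subtype.val (φ.injective (Subtype.ext h))
  by_cases hz : x ∈ Z
  · have hz' : x' ∈ Z :=
      (mem_union.1 (hYZ'.1 (mem_union_right Y hz))).resolve_left (hY.not.1 hx)
    rw [glue_of_mem_right hYZ φ hz, glue_of_mem_right hYZ φ hz'] at h
    exact ρ₀.injective (congrArg Subtype.val ((zMatch hYZ φ).injective (Subtype.ext h)))
  · have hout : x ∉ Y ∪ Z := by simp [hx, hz]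
    rw [glue_of_notMem hYZ φ hout, glue_of_notMem hYZ φ (hYZ'.not.1 hout)] at h
    exact ρ₀.injective h

noncomputable def ofEmbedding [Finite α] : Equiv.Perm α :=
  Equiv.ofBijective (glue hYZ φ) (Finite.injective_iff_bijective.1 (glue_injective hYZ φ))

lemma profile_ofEmbedding [Finite α] : profile Y Z (ofEmbedding hYZ φ) = profile Y Z ρ₀ := by
  refine profile_eq_profile_iff.2 ⟨fun x hx => glue_of_notMem hYZ φ hx, fun u hu v hv => ?_⟩
  simp only [ofEmbedding, Equiv.ofBijective_apply, glue_of_mem_right hYZ φ hu,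
    glue_of_mem_right hYZ φ hv, Subtype.coe_lt_coe, OrderIso.lt_iff_lt, Subtype.mk_lt_mk]

variable {hYZ φ}

def restrictEmb (ρ : Equiv.Perm α) (h : profile Y Z ρ = profile Y Z ρ₀) :
    Y ↪ (Y ∪ Z).image ρ₀ where
  toFun a := ⟨ρ a, by
    rw [← image_eq_image_of_eqOn_compl (profile_eq_profile_iff.1 h).1]
    exact mem_image_of_mem _ (mem_union_left Z a.2)⟩
  inj' a a' haa' := Subtype.ext (ρ.injective (congrArg Subtype.val haa'))

@[simp]
lemma coe_restrictEmb_apply {ρ : Equiv.Perm α} (h : profile Y Z ρ = profile Y Z ρ₀) (a : Y) :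
    (restrictEmb ρ h a : α) = ρ a := rfl

lemma embRange_restrictEmb {ρ : Equiv.Perm α} (h : profile Y Z ρ = profile Y Z ρ₀) :
    embRange (restrictEmb ρ h) = Y.image ρ := by
  ext v
  simp [embRange]

lemma ofEmbedding_restrictEmb [Finite α] {ρ : Equiv.Perm α} (h : profile Y Z ρ = profile Y Z ρ₀) :
    ofEmbedding hYZ (restrictEmb ρ h) = ρ := by
  obtain ⟨hout, horder⟩ := profile_eq_profile_iff.1 h
  ext x
  simp only [ofEmbedding, Equiv.ofBijective_apply]
  by_cases hx : x ∈ Y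
  · rw [glue_of_mem_left hYZ _ hx]; rfl
  by_cases hz : x ∈ Z
  swap
  · rw [glue_of_notMem hYZ _ (by simp [hx, hz]), hout x (by simp [hx, hz])]
  have hfree : ∀ v : Z.image ρ₀, ρ (ρ₀.symm v) ∈ freeValues (restrictEmb ρ h) := fun v => by
    obtain ⟨z, hz, hzv⟩ := mem_image.1 v.2
    rw [← hzv, Equiv.symm_apply_apply, freeValues, embRange_restrictEmb,
      ← image_eq_image_of_eqOn_compl hout, mem_sdiff, ρ.injective.mem_finset_image,
      ρ.injective.mem_finset_image]
    exact ⟨mem_union_right Y hz, disjoint_right.1 hYZ hz⟩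
  have hmono : StrictMono fun v : Z.image ρ₀ =>
      (⟨ρ (ρ₀.symm v), hfree v⟩ : freeValues (restrictEmb ρ h)) := fun v v' hvv' => by
    obtain ⟨z, hz, hzv⟩ := mem_image.1 v.2
    obtain ⟨z', hz', hzv'⟩ := mem_image.1 v'.2
    rw [Subtype.mk_lt_mk, ← hzv, ← hzv', Equiv.symm_apply_apply, Equiv.symm_apply_apply,
      horder z hz z' hz', hzv, hzv']
    exact hvv'
  rw [glue_of_mem_right hYZ _ hz, OrderIso.coe_eq_of_strictMono _ hmono]
  simp

noncomputable def fiberEquiv [Finite α] (hYZ : Disjoint Y Z) (ρ₀ : Equiv.Perm α) :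
    {ρ // profile Y Z ρ = profile Y Z ρ₀} ≃ (Y ↪ (Y ∪ Z).image ρ₀) where
  toFun ρ := restrictEmb ρ.1 ρ.2
  invFun φ := ⟨ofEmbedding hYZ φ, profile_ofEmbedding hYZ φ⟩
  left_inv ρ := Subtype.ext (ofEmbedding_restrictEmb ρ.2)
  right_inv φ := by
    ext a
    simp [restrictEmb, ofEmbedding, glue_of_mem_left hYZ φ a.2]

lemma subtype_subset_map_iff {W S : Finset α} (hS : S ⊆ W) (φ : Y ↪ W) :
    S.subtype (· ∈ W) ⊆ univ.map φ ↔ S ⊆ univ.map (φ.trans (Function.Embedding.subtype _)) := by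
  rw [← map_subset_map (f := Function.Embedding.subtype _), subtype_map, map_map,
    filter_true_of_mem hS]

lemma fiberEquiv_apply [Finite α] (hYZ : Disjoint Y Z)
    (ρ : {ρ // profile Y Z ρ = profile Y Z ρ₀}) :
    fiberEquiv hYZ ρ₀ ρ = restrictEmb ρ.1 ρ.2 := rfl

end Glue

section Conditioning

variable {α : Type*} [Fintype α] [LinearOrder α] {Y Z : Finset α}

theorem card_filter_profile_below_mul (hYZ : Disjoint Y Z) (ρ₀ : Equiv.Perm α) {b : ℕ}
    (hb : b ≤ #(Y ∪ Z)) :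
    #{ρ : Equiv.Perm α | profile Y Z ρ = profile Y Z ρ₀ ∧
        b ≤ #(belowAll ρ Y Z)} * (#(Y ∪ Z)).descFactorial b
      = (#Y).descFactorial b * #{ρ : Equiv.Perm α | profile Y Z ρ = profile Y Z ρ₀} := by
  set W := (Y ∪ Z).image ρ₀
  have hWcard : #W = #(Y ∪ Z) := card_image_of_injective _ ρ₀.injective
  have hlow : lowest b W ⊆ W := filter_subset _ W
  set T : Finset W := (lowest b W).subtype (· ∈ W)
  have hTcard : #T = b := by
    rw [card_subtype, filter_true_of_mem hlow, card_lowest (hWcard ▸ hb)]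
  have hbelow : ∀ ρ : {ρ // profile Y Z ρ = profile Y Z ρ₀},
      b ≤ #(belowAll ρ.1 Y Z) ↔ T ⊆ univ.map (fiberEquiv hYZ ρ₀ ρ) := fun ρ => by
    refine (le_card_belowAll_iff ρ.1.injective hYZ hb).trans ?_
    rw [subtype_subset_map_iff hlow,
      ← embRange, fiberEquiv_apply, embRange_restrictEmb,
      image_eq_image_of_eqOn_compl (profile_eq_profile_iff.1 ρ.2).1]
  have hcover : #{ρ : Equiv.Perm α | profile Y Z ρ = profile Y Z ρ₀ ∧
      b ≤ #(belowAll ρ Y Z)} = #{φ : Y ↪ W | T ⊆ univ.map φ} := by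
    rw [← Fintype.card_subtype, ← Fintype.card_subtype]
    exact Fintype.card_congr
      ((Equiv.subtypeSubtypeEquivSubtypeInter _ _).symm.trans
        (Equiv.subtypeEquiv (fiberEquiv hYZ ρ₀) hbelow))
  have hfiber : #{ρ : Equiv.Perm α | profile Y Z ρ = profile Y Z ρ₀} = Fintype.card (Y ↪ W) := by
    rw [← Fintype.card_subtype]
    exact Fintype.card_congr (fiberEquiv hYZ ρ₀)
  rw [hcover, hfiber, ← hWcard, ← Fintype.card_coe W, ← hTcard,
    card_filter_subset_map_mul_descFactorial, Fintype.card_coe]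

lemma card_filter_below_profile_le (hYZ : Disjoint Y Z) {b : ℕ} (hb : b ≤ #(Y ∪ Z))
    {M : Equiv.Perm α → Prop}
    (hM : ∀ ρ σ : Equiv.Perm α, (∀ u ∈ Z, ∀ v ∈ Z, (ρ u < ρ v ↔ σ u < σ v)) → M ρ → M σ)
    (ρ₀ : Equiv.Perm α) :
    #{ρ ∈ {ρ : Equiv.Perm α | M ρ ∧ b ≤ #(belowAll ρ Y Z)} | profile Y Z ρ = profile Y Z ρ₀}
        * (#(Y ∪ Z)).descFactorial b
      ≤ (#Y).descFactorial b
          * #{ρ ∈ {ρ : Equiv.Perm α | M ρ} | profile Y Z ρ = profile Y Z ρ₀} := by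
  have hMiff : ∀ ρ, profile Y Z ρ = profile Y Z ρ₀ → (M ρ ↔ M ρ₀) := fun ρ h =>
    ⟨hM ρ ρ₀ (profile_eq_profile_iff.1 h).2,
      hM ρ₀ ρ fun u hu v hv => ((profile_eq_profile_iff.1 h).2 u hu v hv).symm⟩
  by_cases hM₀ : M ρ₀
  · refine le_of_eq ?_
    convert card_filter_profile_below_mul hYZ ρ₀ hb using 3
    · ext ρ
      simp only [filter_filter, mem_filter, mem_univ, true_and]
      exact ⟨fun h => ⟨h.2, h.1.2⟩, fun h => ⟨⟨(hMiff ρ h.1).2 hM₀, h.2⟩, h.1⟩⟩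
    · ext ρ
      simp only [filter_filter, mem_filter, mem_univ, true_and]
      exact ⟨fun h => h.2, fun h => ⟨(hMiff ρ h).2 hM₀, h⟩⟩
  · rw [filter_filter, filter_eq_empty_iff.2 fun ρ _ h => hM₀ ((hMiff ρ h.2).1 h.1.1),
      card_empty, zero_mul]
    exact Nat.zero_le _

theorem card_filter_below_le (b : ℕ) (hYZ : Disjoint Y Z) (M : Equiv.Perm α → Prop)
    (hM : ∀ ρ σ : Equiv.Perm α, (∀ u ∈ Z, ∀ v ∈ Z, (ρ u < ρ v ↔ σ u < σ v)) → M ρ → M σ) :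
    (#{ρ : Equiv.Perm α | M ρ ∧ b ≤ #(belowAll ρ Y Z)} : ℝ)
      ≤ (#Y).descFactorial b / (#(Y ∪ Z)).descFactorial b * #{ρ : Equiv.Perm α | M ρ} := by
  by_cases hb : b ≤ #(Y ∪ Z)
  swap
  · have hempty : #{ρ : Equiv.Perm α | M ρ ∧ b ≤ #(belowAll ρ Y Z)} = 0 :=
      card_eq_zero.2 <| filter_eq_empty_iff.2 fun ρ _ h => hb (h.2.trans
        ((card_belowAll_le ρ Y Z).trans (card_le_card subset_union_left)))
    rw [hempty, Nat.cast_zero]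
    positivity
  rw [div_mul_eq_mul_div, le_div_iff₀ (by exact_mod_cast Nat.descFactorial_pos.2 hb)]
  norm_cast
  have hfib := fun (s : Finset (Equiv.Perm α)) =>
    card_eq_sum_card_fiberwise (s := s) fun ρ _ => mem_image_of_mem (profile Y Z) (mem_univ ρ)
  rw [hfib, hfib, sum_mul, mul_sum]
  refine sum_le_sum fun c hc => ?_
  obtain ⟨ρ₀, -, rfl⟩ := mem_image.1 hc
  exact card_filter_below_profile_le hYZ hb hM ρ₀

end Conditioning

section Staircase

variable {α : Type*} [LinearOrder α]

def Staircase (b : ℕ) : ℕ → Finset α → Finset (Finset α) → Equiv.Perm α → Prop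
  | 0, _, _, _ => True
  | p + 1, C, K, ρ => ∃ τ ∈ K, b ≤ #(belowAll ρ (C ∩ τ) ((K.erase τ).sup id)) ∧
      Staircase b p (C ∩ τ) (K.erase τ) ρ

lemma Staircase.of_lt_iff {b p : ℕ} {C : Finset α} {K : Finset (Finset α)} {ρ σ : Equiv.Perm α}
    (h : ∀ u ∈ K.sup id, ∀ v ∈ K.sup id, (ρ u < ρ v ↔ σ u < σ v)) :
    Staircase b p C K ρ → Staircase b p C K σ := by
  induction p generalizing C K with
  | zero => exact fun _ => trivial
  | succ p ih =>
    rintro ⟨τ, hτ, hbelow, hrest⟩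
    have hsub : (K.erase τ).sup id ⊆ K.sup id := sup_mono (erase_subset τ K)
    refine ⟨τ, hτ, ?_, ih (fun u hu v hv => h u (hsub hu) v (hsub hv)) hrest⟩
    rwa [← belowAll_congr (Y := C ∩ τ) fun x hx z hz =>
      h x (le_sup (f := id) hτ (mem_inter.1 hx).2) z (hsub hz)]

lemma card_staircase_succ_le [Fintype α] (b p : ℕ) (C : Finset α) (K : Finset (Finset α)) :
    #{ρ : Equiv.Perm α | Staircase b (p + 1) C K ρ}
      ≤ ∑ τ ∈ K, #{ρ : Equiv.Perm α | Staircase b p (C ∩ τ) (K.erase τ) ρ ∧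
          b ≤ #(belowAll ρ ((C ∩ τ) \ (K.erase τ).sup id) ((K.erase τ).sup id))} := by
  refine (card_le_card fun ρ hρ => ?_).trans card_biUnion_le
  obtain ⟨τ, hτ, hbelow, hrest⟩ := (mem_filter.1 hρ).2
  exact mem_biUnion.2 ⟨τ, hτ, mem_filter.2 ⟨mem_univ ρ, hrest, by rwa [belowAll_sdiff]⟩⟩

theorem sum_card_exclusive_add_le (C : Finset α) (K : Finset (Finset α)) {τ : Finset α}
    (hτ : τ ∈ K) :
    ∑ σ ∈ K, #((C ∩ σ) \ (K.erase σ).sup id) + #(C ∩ τ ∩ (K.erase τ).sup id)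
      ≤ #(((C ∩ τ) \ (K.erase τ).sup id ∪ (K.erase τ).sup id) ∩ (C ∩ K.sup id)) := by
  set E : Finset α → Finset α := fun σ => (C ∩ σ) \ (K.erase σ).sup id
  have hother : ∀ σ ∈ K, ∀ σ' ∈ K, σ' ≠ σ → σ' ⊆ (K.erase σ).sup id := fun σ _ σ' hσ' hne =>
    le_sup (f := id) (mem_erase.2 ⟨hne, hσ'⟩)
  have hdisj : Set.PairwiseDisjoint (K : Set (Finset α)) E := fun σ hσ σ' hσ' hne =>
    disjoint_left.2 fun x hx hx' =>
      (mem_sdiff.1 hx).2 (hother σ hσ σ' hσ' hne.symm (mem_inter.1 (mem_sdiff.1 hx').1).2)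
  have hG : Disjoint (K.biUnion E) (C ∩ τ ∩ (K.erase τ).sup id) := by
    refine disjoint_left.2 fun x hx hxG => ?_
    obtain ⟨σ, hσ, hxσ⟩ := mem_biUnion.1 hx
    obtain ⟨hxCσ, hxnot⟩ := mem_sdiff.1 hxσ
    rcases eq_or_ne σ τ with rfl | hne
    · exact hxnot (mem_inter.1 hxG).2
    · exact hxnot (hother σ hσ τ hτ hne.symm (mem_inter.1 (mem_inter.1 hxG).1).2)
  rw [← card_biUnion hdisj, ← card_union_of_disjoint hG]
  refine card_le_card (union_subset (biUnion_subset.2 fun σ hσ x hx => ?_) fun x hx => ?_)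
  · obtain ⟨hxCσ, hxnot⟩ := mem_sdiff.1 hx
    refine mem_inter.2 ⟨?_, mem_inter.2 ⟨(mem_inter.1 hxCσ).1,
      le_sup (f := id) hσ (mem_inter.1 hxCσ).2⟩⟩
    rcases eq_or_ne σ τ with rfl | hne
    · exact mem_union_left _ hx
    · exact mem_union_right _ (hother τ hτ σ hσ hne (mem_inter.1 hxCσ).2)
  · obtain ⟨⟨hxC, hxτ⟩, hxrest⟩ := And.imp_left mem_inter.1 (mem_inter.1 hx)
    exact mem_inter.2 ⟨mem_union_right _ hxrest, mem_inter.2 ⟨hxC, le_sup (f := id) hτ hxτ⟩⟩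

lemma card_staircase_one_le [Fintype α] (b : ℕ) (C : Finset α) (K : Finset (Finset α)) :
    (#{ρ : Equiv.Perm α | Staircase b 1 C K ρ} : ℝ)
      ≤ Fintype.card (Equiv.Perm α) * badBound b 0 #(C ∩ K.sup id) := by
  by_cases h : b ≤ #(C ∩ K.sup id)
  · rw [badBound, if_pos h, mul_zero, pow_zero, mul_one]
    exact Nat.cast_le.2 (card_le_univ _)
  · have hempty : #{ρ : Equiv.Perm α | Staircase b 1 C K ρ} = 0 :=
      card_eq_zero.2 <| filter_eq_empty_iff.2 fun ρ _ ⟨τ, hτ, hbelow, _⟩ => h <|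
        hbelow.trans <| (card_belowAll_le _ _ _).trans <|
          card_le_card (inter_subset_inter_left (le_sup (f := id) hτ))
    rw [hempty, Nat.cast_zero]
    exact mul_nonneg (by positivity) (badBound_nonneg _ _ _)

lemma card_staircase_below_le [Fintype α] {b p : ℕ} {C τ : Finset α} {K : Finset (Finset α)}
    (hτ : τ ∈ K) {B : ℝ}
    (hB : (#{ρ : Equiv.Perm α | Staircase b p (C ∩ τ) (K.erase τ) ρ} : ℝ) ≤ B) :
    (#{ρ : Equiv.Perm α | Staircase b p (C ∩ τ) (K.erase τ) ρ ∧
        b ≤ #(belowAll ρ ((C ∩ τ) \ (K.erase τ).sup id) ((K.erase τ).sup id))} : ℝ)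
      ≤ ((#((C ∩ τ) \ (K.erase τ).sup id)).descFactorial b : ℝ)
          / (∑ σ ∈ K, #((C ∩ σ) \ (K.erase σ).sup id)
              + #(C ∩ τ ∩ (K.erase τ).sup id)).descFactorial b * B := by
  refine (card_filter_below_le b disjoint_sdiff_self_left _
    fun ρ σ h => Staircase.of_lt_iff h).trans ?_
  refine mul_le_mul (div_descFactorial_le_div_descFactorial ?_ ?_) hB (Nat.cast_nonneg _)
    (by positivity)
  · exact (single_le_sum (f := fun σ => #((C ∩ σ) \ (K.erase σ).sup id))
      (fun σ _ => Nat.zero_le _) hτ).trans (Nat.le_add_right _ _)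
  · exact (sum_card_exclusive_add_le C K hτ).trans (card_le_card inter_subset_left)

theorem card_staircase_le [Fintype α] {b : ℕ} (hb : 1 ≤ b) (p : ℕ) (C : Finset α)
    (K : Finset (Finset α)) :
    (#{ρ : Equiv.Perm α | Staircase b (p + 1) C K ρ} : ℝ)
      ≤ Fintype.card (Equiv.Perm α) * badBound b p #(C ∩ K.sup id) := by
  induction p generalizing C K with
  | zero => exact card_staircase_one_le b C K
  | succ p ih =>
    set N : ℝ := (Fintype.card (Equiv.Perm α) : ℝ)
    set q : Finset α → ℕ := fun τ => #((C ∩ τ) \ (K.erase τ).sup id)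
    set g : Finset α → ℕ := fun τ => #(C ∩ τ ∩ (K.erase τ).sup id)
    calc (#{ρ : Equiv.Perm α | Staircase b (p + 1 + 1) C K ρ} : ℝ)
        ≤ ∑ τ ∈ K, (#{ρ : Equiv.Perm α | Staircase b (p + 1) (C ∩ τ) (K.erase τ) ρ ∧
            b ≤ #(belowAll ρ ((C ∩ τ) \ (K.erase τ).sup id) ((K.erase τ).sup id))} : ℝ) := by
          exact_mod_cast card_staircase_succ_le b (p + 1) C K
      _ ≤ ∑ τ ∈ K, ((q τ).descFactorial b : ℝ) / (∑ σ ∈ K, q σ + g τ).descFactorial b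
            * (N * badBound b p (g τ)) :=
          sum_le_sum fun τ hτ => card_staircase_below_le hτ (ih _ _)
      _ = N * ∑ τ ∈ K, ((q τ).descFactorial b : ℝ) / (∑ σ ∈ K, q σ + g τ).descFactorial b
            * badBound b p (g τ) := by
          rw [mul_sum]
          exact sum_congr rfl fun τ _ => by ring
      _ ≤ N * badBound b (p + 1) #(C ∩ K.sup id) :=
          mul_le_mul_of_nonneg_left (sum_descFactorial_div_mul_badBound_le hb K q g
            fun τ hτ => (sum_card_exclusive_add_le C K hτ).trans (card_le_card inter_subset_right))
            (by positivity)

end Staircase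

section Extraction

variable {n k b r : ℕ} {ρ : Equiv.Perm (Fin n)} {i : Fin k → Fin n}

def tailSet (i : Fin k → Fin n) (a : ℕ) : Finset (Fin n) :=
  (univ.filter fun t : Fin k => a ≤ (t : ℕ)).image i

lemma apply_mem_tailSet {a : ℕ} {t : Fin k} (ht : a ≤ t) : i t ∈ tailSet i a :=
  mem_image_of_mem i (mem_filter.2 ⟨mem_univ t, ht⟩)

lemma symm_apply_mem_of_compatible {τ I : Finset (Fin n)} (h : Compatible ρ τ I) {x : Fin n}
    (hx : x ∈ I) : ρ.symm x ∈ τ := by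
  obtain ⟨u, hu, rfl⟩ := mem_image.1 (h.1 hx)
  rwa [Equiv.symm_apply_apply]

lemma lt_apply_of_compatible (hi : StrictMono i) {τ : Finset (Fin n)} {a : ℕ}
    (h : Compatible ρ τ (tailSet i a)) {t : Fin k} (ht : (t : ℕ) < a) {z : Fin n} (hz : z ∈ τ) :
    i t < ρ z := by
  obtain ⟨_, ht', hle⟩ := h.2 (ρ z) (mem_image_of_mem ρ hz)
  obtain ⟨t', ht'a, rfl⟩ := mem_image.1 ht'
  exact (hi (Fin.lt_def.2 (ht.trans_le (mem_filter.1 ht'a).2))).trans_le hle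

variable {T : ℕ → Finset (Fin n)}

lemma mul_add_lt_of_lt {s m : ℕ} (hk : k = r * b) (hs : s < r) (hm : m < b) : s * b + m < k := by
  subst hk
  nlinarith

lemma ne_of_compatible (hk : k = r * b) (hb : 1 ≤ b) (hi : StrictMono i)
    (hT : ∀ s < r, Compatible ρ (T s) (tailSet i (s * b))) {s s' : ℕ} (hs' : s' < r)
    (hss' : s < s') : T s ≠ T s' := by
  intro heq
  set t : Fin k := ⟨s * b, by simpa using mul_add_lt_of_lt hk (hss'.trans hs') hb⟩
  have hmem : ρ.symm (i t) ∈ T s' :=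
    heq ▸ symm_apply_mem_of_compatible (hT s (hss'.trans hs')) (apply_mem_tailSet le_rfl)
  have := lt_apply_of_compatible hi (hT s' hs') (t := t)
    (Nat.mul_lt_mul_of_pos_right hss' hb) hmem
  simp at this

lemma image_Ico_eq_insert {β : Type*} [DecidableEq β] (T : ℕ → β) {j r : ℕ} (hjr : j < r) :
    (Ico j r).image T = insert (T j) ((Ico (j + 1) r).image T) := by
  rw [← image_insert]
  congr 1
  ext s
  simp only [mem_insert, mem_Ico]
  omega

lemma le_card_belowAll_of_compatible (hk : k = r * b) (hi : StrictMono i)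
    (hT : ∀ s < r, Compatible ρ (T s) (tailSet i (s * b))) {j : ℕ} (hjr : j < r)
    {C : Finset (Fin n)} (hC : ∀ t : Fin k, j * b ≤ t → ρ.symm (i t) ∈ C) :
    b ≤ #(belowAll ρ (C ∩ T j) (((Ico (j + 1) r).image T).sup id)) := by
  have hlater : ∀ z ∈ ((Ico (j + 1) r).image T).sup id, ∀ t : Fin k, (t : ℕ) < (j + 1) * b →
      i t < ρ z := fun z hz t ht => by
    obtain ⟨τ, hτ, hzτ⟩ := mem_sup.1 hz
    obtain ⟨s, hs, rfl⟩ := mem_image.1 hτ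
    exact lt_apply_of_compatible hi (hT s (mem_Ico.1 hs).2)
      (ht.trans_le (Nat.mul_le_mul_right b (mem_Ico.1 hs).1)) hzτ
  set block : Fin b → Fin k := fun m => ⟨j * b + m, mul_add_lt_of_lt hk hjr m.2⟩
  calc b = #((univ : Finset (Fin b)).image fun m => ρ.symm (i (block m))) := by
        rw [card_image_of_injective _ fun m m' h => Fin.ext <| by
          simpa [block] using hi.injective (ρ.symm.injective h), card_univ, Fintype.card_fin]
    _ ≤ _ := card_le_card fun x hx => by
        obtain ⟨m, -, rfl⟩ := mem_image.1 hx
        refine mem_belowAll.2 ⟨mem_inter.2 ⟨hC _ (Nat.le_add_right _ _),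
          symm_apply_mem_of_compatible (hT j hjr) (apply_mem_tailSet (Nat.le_add_right _ _))⟩,
          fun z hz => ?_⟩
        rw [Equiv.apply_symm_apply]
        exact hlater z hz _ (by simp [block, Nat.succ_mul, m.2])

lemma staircase_image_Ico (hk : k = r * b) (hb : 1 ≤ b) (hi : StrictMono i)
    (hT : ∀ s < r, Compatible ρ (T s) (tailSet i (s * b))) (d : ℕ) :
    ∀ j, j + d = r → ∀ C : Finset (Fin n), (∀ t : Fin k, j * b ≤ t → ρ.symm (i t) ∈ C) →
      Staircase b d C ((Ico j r).image T) ρ := by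
  induction d with
  | zero => exact fun _ _ _ _ => trivial
  | succ d ih =>
    intro j hj C hC
    have hjr : j < r := by omega
    have hnot : T j ∉ (Ico (j + 1) r).image T := fun h => by
      obtain ⟨s, hs, hsj⟩ := mem_image.1 h
      exact ne_of_compatible hk hb hi hT (mem_Ico.1 hs).2 (Nat.lt_of_succ_le (mem_Ico.1 hs).1)
        hsj.symm
    rw [image_Ico_eq_insert T hjr]
    refine ⟨T j, mem_insert_self _ _, ?_, ?_⟩
    · rw [erase_insert hnot]
      exact le_card_belowAll_of_compatible hk hi hT hjr hC
    · rw [erase_insert hnot]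
      refine ih (j + 1) (by omega) _ fun t ht => mem_inter.2 ⟨hC t ?_, ?_⟩
      · nlinarith
      · exact symm_apply_mem_of_compatible (hT j hjr) (apply_mem_tailSet (by nlinarith))

theorem staircase_of_forall_exists_compatible (hk : k = r * b) (hb : 1 ≤ b) (hi : StrictMono i)
    {J : Finset (Finset (Fin n))} (hJ : #J = r)
    (h : ∀ s ∈ range r, ∃ τ ∈ J, Compatible ρ τ (tailSet i (s * b))) :
    Staircase b r univ J ρ := by
  have hex : ∀ s, ∃ τ, s < r → τ ∈ J ∧ Compatible ρ τ (tailSet i (s * b)) := fun s => by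
    by_cases hs : s < r
    · obtain ⟨τ, hτ, hc⟩ := h s (mem_range.2 hs)
      exact ⟨τ, fun _ => ⟨hτ, hc⟩⟩
    · exact ⟨∅, fun h => absurd h hs⟩
  choose T hT using hex
  have hJT : (Ico 0 r).image T = J := by
    refine eq_of_subset_of_card_le (fun τ hτ => ?_) ?_
    · obtain ⟨s, hs, rfl⟩ := mem_image.1 hτ
      exact (hT s (mem_Ico.1 hs).2).1
    · rw [hJ, card_image_of_injOn, Nat.card_Ico, Nat.sub_zero]
      intro s hs s' hs' hss'
      by_contra hne
      rcases lt_or_gt_of_ne hne with hlt | hlt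
      · exact ne_of_compatible hk hb hi (fun s hs => (hT s hs).2) (mem_Ico.1 hs').2 hlt hss'
      · exact ne_of_compatible hk hb hi (fun s hs => (hT s hs).2) (mem_Ico.1 hs).2 hlt hss'.symm
  rw [← hJT]
  exact staircase_image_Ico hk hb hi (fun s hs => (hT s hs).2) r 0 (zero_add r) univ
    fun _ _ => mem_univ _

end Extraction

end BadPermutation

open BadPermutation

theorem stmt14_general {n r b : ℕ} (hr : 2 ≤ r) (hb : 1 < b) (hbn : b < n)
    (k : ℕ) (hk : k = r * b)
    (J : Finset (Finset (Fin n)))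
    (hJcard : J.card = r) :
    ((Finset.univ.filter (fun ρ : Equiv.Perm (Fin n) =>
        ∃ i : Fin k → Fin n, StrictMono i ∧
          ∀ s ∈ Finset.range r, ∃ τ ∈ J, Compatible ρ τ
            ((Finset.univ.filter (fun t : Fin k => s * b ≤ (t : ℕ))).image i))).card : ℝ) ≤
      (n.factorial : ℝ) *
        (1 - ((b : ℝ) / (n : ℝ)) ^ ((1 : ℝ) / ((r : ℝ) - 1))) ^ (b * (r - 1)) := by
  calc _ ≤ (#{ρ : Equiv.Perm (Fin n) | Staircase b (r - 1 + 1) univ J ρ} : ℝ) := by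
        refine Nat.cast_le.2 (card_le_card (monotone_filter_right _ fun ρ _ ⟨i, hi, hcomp⟩ => ?_))
        rw [Nat.sub_add_cancel (by omega)]
        exact staircase_of_forall_exists_compatible hk hb.le hi hJcard hcomp
    _ ≤ Fintype.card (Equiv.Perm (Fin n)) * badBound b (r - 1) #(univ ∩ J.sup id) :=
        card_staircase_le hb.le _ _ _
    _ ≤ n.factorial * badBound b (r - 1) n := by
        rw [Fintype.card_perm, Fintype.card_fin]
        gcongr
        exact badBound_mono b (r - 1) ((card_le_univ _).trans (Fintype.card_fin n).le)
    _ = _ := by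
        rw [badBound, if_pos hbn.le, Nat.cast_sub (by omega : 1 ≤ r), Nat.cast_one]

/-- with `k = rb`, for any `r`-element subfamily `J` of the Venn diagram, the
number of permutations `ρ` of `[n]` that are "bad for `J`" — i.e. for which there exist
`i_1 < ⋯ < i_k` (encoded by a strictly monotone `i : Fin k → Fin n`, the `1`-indexed
position `s·b+1` being the `0`-indexed position `s·b`) such that for every
`s ∈ {1, b+1, …, (r−1)b+1}` some `τ ∈ J` is `ρ`-compatible with `{i_s, …, i_k}` — is at
most `n! · (1 − (b/n)^{1/(r−1)})^{b(r−1)}`. -/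
theorem stmt14 {S : Type*} {n r b : ℕ} (hr : 2 ≤ r) (hb : 1 < b) (hbn : b < n)
    (k : ℕ) (hk : k = r * b)
    (F : Fin n → Set S) {m : ℕ} (hm : (venn F).ncard = m)
    (J : Finset (Finset (Fin n))) (hJ : (J : Set (Finset (Fin n))) ⊆ venn F)
    (hJcard : J.card = r) :
    ((Finset.univ.filter (fun ρ : Equiv.Perm (Fin n) =>
        ∃ i : Fin k → Fin n, StrictMono i ∧
          ∀ s ∈ Finset.range r, ∃ τ ∈ J, Compatible ρ τ
            ((Finset.univ.filter (fun t : Fin k => s * b ≤ (t : ℕ))).image i))).card : ℝ) ≤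
      (n.factorial : ℝ) *
        (1 - ((b : ℝ) / (n : ℝ)) ^ ((1 : ℝ) / ((r : ℝ) - 1))) ^ (b * (r - 1)) :=
  stmt14_general hr hb hbn k hk J hJcard
end

section
/- Let L be a finite atomistic lattice with at least two elements whose set of atoms is identified with [n], and let F(L) = (F_a)_{a∈[n]} with F_a = {x ∈ L : a ≤ x}. Then among all IE-vectors for F(L), the unique IE-vector α supported on V(F(L)) has minimum ℓ1-norm: every IE-vector x for F(L) satisfies ‖x‖₁ ≥ ‖α‖₁, where α is the unique IE-vector with α_σ = 0 for all σ ∈ N(F(L)) \ V(F(L)). -/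
open Finset
open scoped Classical

variable {ι S : Type*}

/-- for the set system `F(L)` of a finite atomistic lattice `L` (with at least
two elements, atoms enumerated by `e : Fin n → L`, and `F_a = {x ∈ L : a ≤ x}`), the unique
IE-vector `α` supported on the Venn diagram has minimum `ℓ₁`-norm among all IE-vectors. -/
theorem stmt16 {L : Type*} [Lattice L] [OrderBot L] [Fintype L] [Nontrivial L]
    (hatomistic : ∀ x : L, ∃ s : Finset L, (∀ a ∈ s, IsAtom a) ∧ x = s.sup id)
    {n : ℕ} (e : Fin n → L) (he : ∀ i, IsAtom (e i))
    (hinj : Function.Injective e) (hsurj : ∀ a : L, IsAtom a → ∃ i, e i = a)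
    (F : Fin n → Set L) (hF : ∀ i, F i = {x | e i ≤ x})
    (α : Finset (Fin n) → ℝ) (hα : IsIEVector F α)
    (hsupp : ∀ σ, σ ∉ venn F → α σ = 0) :
    ∀ x : Finset (Fin n) → ℝ, IsIEVector F x →
      (∑ σ ∈ Finset.univ.filter (· ∈ nerve F), |α σ|) ≤
        ∑ σ ∈ Finset.univ.filter (· ∈ nerve F), |x σ| := by
  classical
  intro x hx
  -- the trace map: atoms below z
  set tl : L → Finset (Fin n) := fun z => Finset.univ.filter (fun i => e i ≤ z) with htl
  have hmemtl : ∀ (i : Fin n) (z : L), i ∈ tl z ↔ e i ≤ z := by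
    intro i z; simp [htl]
  have hsub : ∀ (σ : Finset (Fin n)) (z : L), σ ⊆ tl z ↔ σ.sup e ≤ z := by
    intro σ z
    constructor
    · intro h
      exact Finset.sup_le fun i hi => (hmemtl i z).mp (h hi)
    · intro h i hi
      exact (hmemtl i z).mpr (le_trans (Finset.le_sup hi) h)
  have hsupt : ∀ z : L, (tl z).sup e = z := by
    intro z
    apply le_antisymm
    · exact Finset.sup_le fun i hi => (hmemtl i z).mp hi
    · obtain ⟨s, hs, hz⟩ := hatomistic z
      conv_lhs => rw [hz]
      apply Finset.sup_le
      intro a ha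
      have haz : a ≤ z := by rw [hz]; exact Finset.le_sup (f := id) ha
      obtain ⟨i, hi⟩ := hsurj a (hs a ha)
      calc a = e i := hi.symm
        _ ≤ (tl z).sup e := Finset.le_sup ((hmemtl i z).mpr (hi ▸ haz))
  have hatombelow : ∀ z : L, z ≠ ⊥ → ∃ i, e i ≤ z := by
    intro z hz
    obtain ⟨s, hs, hzs⟩ := hatomistic z
    rcases s.eq_empty_or_nonempty with h | ⟨a, ha⟩
    · rw [h] at hzs; simp at hzs; exact absurd hzs hz
    · obtain ⟨i, hi⟩ := hsurj a (hs a ha)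
      refine ⟨i, ?_⟩
      rw [hi, hzs]
      exact Finset.le_sup (f := id) ha
  have hsupne : ∀ σ : Finset (Fin n), σ.Nonempty → σ.sup e ≠ ⊥ := by
    rintro σ ⟨i, hi⟩ h
    exact (he i).1 (le_bot_iff.mp (h ▸ Finset.le_sup hi))
  have htlne : ∀ z : L, z ≠ ⊥ → (tl z).Nonempty := by
    intro z hz
    obtain ⟨i, hi⟩ := hatombelow z hz
    exact ⟨i, (hmemtl i z).mpr hi⟩
  -- nerve = nonempty sets
  have hnerve : ∀ σ : Finset (Fin n), σ ∈ nerve F ↔ σ.Nonempty := by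
    intro σ
    constructor
    · exact fun h => h.1
    · intro h
      refine ⟨h, ⟨Finset.univ.sup id, ?_⟩⟩
      simp only [Set.mem_iInter, hF, Set.mem_setOf_eq]
      exact fun i _ => Finset.le_sup (f := id) (Finset.mem_univ _)
  -- regions are fibers of tl
  have hregion : ∀ (τ : Finset (Fin n)) (z : L), z ∈ region F τ ↔ tl z = τ := by
    intro τ z
    simp only [region, Set.mem_diff, Set.mem_iInter, Set.mem_iUnion, hF,
      Set.mem_setOf_eq, not_exists]
    constructor
    · rintro ⟨h1, h2⟩
      ext i
      rw [hmemtl]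
      constructor
      · intro hi
        by_contra hmem
        exact h2 i hmem hi
      · exact h1 i
    · intro h
      refine ⟨fun i hi => (hmemtl i z).mp (h ▸ hi : i ∈ tl z), fun i hi hle => hi ?_⟩
      exact h ▸ (hmemtl i z).mpr hle
  have hvenn : ∀ τ : Finset (Fin n), τ ∈ venn F ↔ ∃ z : L, z ≠ ⊥ ∧ tl z = τ := by
    intro τ
    constructor
    · rintro ⟨hne, z, hz⟩
      rw [hregion] at hz
      refine ⟨z, ?_, hz⟩
      rintro rfl
      obtain ⟨i, hi⟩ := hne
      have : e i ≤ (⊥ : L) := (hmemtl i ⊥).mp (hz ▸ hi : i ∈ tl ⊥)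
      exact (he i).1 (le_bot_iff.mp this)
    · rintro ⟨z, hz, rfl⟩
      exact ⟨htlne z hz, ⟨z, (hregion _ _).mpr rfl⟩⟩
  -- fibers and aggregated values
  set fib : L → Finset (Finset (Fin n)) :=
    fun z => Finset.univ.filter (fun σ => σ.Nonempty ∧ σ.sup e = z) with hfib
  set Y : (Finset (Fin n) → ℝ) → L → ℝ := fun f z => ∑ σ ∈ fib z, f σ with hY
  -- Claim A: constraint sums aggregate fiberwise
  have claimA : ∀ (f : Finset (Fin n) → ℝ) (z : L),
      (∑ σ ∈ (tl z).powerset.filter (· ∈ nerve F), f σ)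
        = ∑ w ∈ Finset.univ.filter (fun w : L => w ≠ ⊥ ∧ w ≤ z), Y f w := by
    intro f z
    have hset : (tl z).powerset.filter (· ∈ nerve F)
        = Finset.univ.filter (fun σ => σ.Nonempty ∧ σ.sup e ≤ z) := by
      ext σ
      simp only [Finset.mem_filter, Finset.mem_powerset, Finset.mem_univ, true_and, hnerve,
        hsub]
      tauto
    rw [hset]
    rw [← Finset.sum_fiberwise_of_maps_to (g := fun σ => σ.sup e)
      (t := Finset.univ.filter (fun w : L => w ≠ ⊥ ∧ w ≤ z)) ?_ f]
    · apply Finset.sum_congr rfl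
      intro w hw
      simp only [Finset.mem_filter, Finset.mem_univ, true_and] at hw
      apply Finset.sum_congr _ (fun _ _ => rfl)
      ext σ
      simp only [hfib, Finset.filter_filter, Finset.mem_filter, Finset.mem_univ, true_and]
      constructor
      · rintro ⟨⟨h1, _⟩, h3⟩; exact ⟨h1, h3⟩
      · rintro ⟨h1, h3⟩; exact ⟨⟨h1, h3 ▸ hw.2⟩, h3⟩
    · intro σ hσ
      simp only [Finset.mem_filter, Finset.mem_univ, true_and] at hσ ⊢
      exact ⟨hsupne σ hσ.1, hσ.2⟩
  -- Claim B: fibers of α reduce to the single venn element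
  have hmemfib : ∀ z : L, z ≠ ⊥ → tl z ∈ fib z := by
    intro z hz
    simp only [hfib, Finset.mem_filter, Finset.mem_univ, true_and]
    exact ⟨htlne z hz, hsupt z⟩
  have hfibzero : ∀ (z : L), ∀ σ ∈ fib z, σ ≠ tl z → α σ = 0 := by
    intro z σ hσ hne
    apply hsupp
    rw [hvenn]
    rintro ⟨w, hw, rfl⟩
    simp only [hfib, Finset.mem_filter, Finset.mem_univ, true_and] at hσ
    rw [hsupt w] at hσ
    exact hne (by rw [hσ.2])
  have claimB : ∀ z : L, z ≠ ⊥ → Y α z = α (tl z) := by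
    intro z hz
    apply Finset.sum_eq_single_of_mem _ (hmemfib z hz)
    exact fun σ hσ hne => hfibzero z σ hσ hne
  have claimB' : ∀ z : L, z ≠ ⊥ → (∑ σ ∈ fib z, |α σ|) = |α (tl z)| := by
    intro z hz
    apply Finset.sum_eq_single_of_mem _ (hmemfib z hz)
    exact fun σ hσ hne => by rw [hfibzero z σ hσ hne, abs_zero]
  -- Claim C: uniqueness via well-founded induction
  have hconstr : ∀ (f : Finset (Fin n) → ℝ), IsIEVector F f → ∀ z : L, z ≠ ⊥ →
      (∑ w ∈ Finset.univ.filter (fun w : L => w ≠ ⊥ ∧ w ≤ z), Y f w) = 1 := by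
    intro f hf z hz
    rw [← claimA]
    exact hf.2 (tl z) ((hvenn (tl z)).mpr ⟨z, hz, rfl⟩)
  have hsplit : ∀ z : L, z ≠ ⊥ →
      Finset.univ.filter (fun w : L => w ≠ ⊥ ∧ w ≤ z)
        = insert z (Finset.univ.filter (fun w : L => w ≠ ⊥ ∧ w < z)) := by
    intro z hz
    ext w
    simp only [Finset.mem_filter, Finset.mem_univ, true_and, Finset.mem_insert]
    constructor
    · rintro ⟨h1, h2⟩
      rcases eq_or_lt_of_le h2 with h | h
      · exact Or.inl h
      · exact Or.inr ⟨h1, h⟩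
    · rintro (rfl | ⟨h1, h2⟩)
      · exact ⟨hz, le_refl _⟩
      · exact ⟨h1, le_of_lt h2⟩
  have claimC : ∀ z : L, z ≠ ⊥ → Y x z = Y α z := by
    intro z
    apply WellFoundedLT.induction z
    intro z ih hz
    have h1 := hconstr x hx z hz
    have h2 := hconstr α hα z hz
    rw [hsplit z hz] at h1 h2
    have hzns : z ∉ Finset.univ.filter (fun w : L => w ≠ ⊥ ∧ w < z) := by
      simp
    rw [Finset.sum_insert hzns] at h1 h2
    have heq : (∑ w ∈ Finset.univ.filter (fun w : L => w ≠ ⊥ ∧ w < z), Y x w)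
        = ∑ w ∈ Finset.univ.filter (fun w : L => w ≠ ⊥ ∧ w < z), Y α w := by
      apply Finset.sum_congr rfl
      intro w hw
      simp only [Finset.mem_filter, Finset.mem_univ, true_and] at hw
      exact ih w hw.2 hw.1
    have := h1.trans h2.symm
    rw [heq] at this
    linarith
  -- final computation
  have hfiber : ∀ f : Finset (Fin n) → ℝ,
      (∑ σ ∈ Finset.univ.filter (· ∈ nerve F), |f σ|)
        = ∑ z ∈ Finset.univ.filter (fun z : L => z ≠ ⊥), ∑ σ ∈ fib z, |f σ| := by
    intro f
    have hset : (Finset.univ.filter (· ∈ nerve F) : Finset (Finset (Fin n)))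
        = Finset.univ.filter (fun σ => σ.Nonempty) := by
      ext σ; simp [hnerve]
    rw [hset]
    rw [← Finset.sum_fiberwise_of_maps_to (g := fun σ => σ.sup e)
      (t := Finset.univ.filter (fun z : L => z ≠ ⊥)) ?_ (fun σ => |f σ|)]
    · apply Finset.sum_congr rfl
      intro z _
      apply Finset.sum_congr _ (fun _ _ => rfl)
      ext σ
      simp [hfib, Finset.filter_filter]
    · intro σ hσ
      simp only [Finset.mem_filter, Finset.mem_univ, true_and] at hσ ⊢
      exact hsupne σ hσ
  rw [hfiber α, hfiber x]
  apply Finset.sum_le_sum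
  intro z hz
  simp only [Finset.mem_filter, Finset.mem_univ, true_and] at hz
  calc (∑ σ ∈ fib z, |α σ|) = |α (tl z)| := claimB' z hz
    _ = |Y α z| := by rw [claimB z hz]
    _ = |Y x z| := by rw [claimC z hz]
    _ ≤ ∑ σ ∈ fib z, |x σ| := Finset.abs_sum_le_sum_abs _ _
end

section
/- Let L be a finite atomistic lattice with atom set identified with [n] and let F(L) = (F_a)_{a∈[n]} with F_a = {x ∈ L : a ≤ x}. Then for every σ ∈ N(F(L)) there exists ν ∈ V(F(L)) such that for every τ ∈ V(F(L)): σ ⊆ τ if and only if ν ⊆ τ. -/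
open Finset
open scoped Classical

variable {ι S : Type*}

/-- for the set system `F(L)` of a finite atomistic lattice `L` (atoms
enumerated by `e : Fin n → L`, `F_a = {x ∈ L : a ≤ x}`), every face `σ` of the nerve has a
companion `ν` in the Venn diagram contained in exactly the same Venn-diagram cells. -/
theorem stmt17 {L : Type*} [Lattice L] [OrderBot L] [Fintype L]
    (hatomistic : ∀ x : L, ∃ s : Finset L, (∀ a ∈ s, IsAtom a) ∧ x = s.sup id)
    {n : ℕ} (e : Fin n → L) (he : ∀ i, IsAtom (e i))
    (hinj : Function.Injective e) (hsurj : ∀ a : L, IsAtom a → ∃ i, e i = a)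
    (F : Fin n → Set L) (hF : ∀ i, F i = {x | e i ≤ x}) :
    ∀ σ ∈ nerve F, ∃ ν ∈ venn F, ∀ τ ∈ venn F, (σ ⊆ τ ↔ ν ⊆ τ) := by
  intro σ hσ
  obtain ⟨hne, _⟩ := hσ
  set y : L := σ.sup e with hy
  set ν : Finset (Fin n) := Finset.univ.filter (fun i => e i ≤ y) with hν
  have hmemν : ∀ i, i ∈ ν ↔ e i ≤ y := by
    intro i; simp [hν]
  have hσν : σ ⊆ ν := fun i hi => (hmemν i).2 (Finset.le_sup hi)
  have hyreg : y ∈ region F ν := by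
    constructor
    · simp only [Set.mem_iInter]
      intro i hi
      rw [hF]; exact (hmemν i).1 hi
    · simp only [Set.mem_iUnion]
      rintro ⟨i, hi, hmem⟩
      rw [hF] at hmem
      exact hi ((hmemν i).2 hmem)
  refine ⟨ν, ⟨hne.mono hσν, y, hyreg⟩, ?_⟩
  intro τ hτ
  constructor
  · intro hστ
    obtain ⟨-, z, hz⟩ := hτ
    have hyz : y ≤ z := by
      apply Finset.sup_le
      intro i hi
      have := Set.mem_iInter.1 hz.1 i
      simp only [Set.mem_iInter] at this
      have := this (hστ hi)
      rwa [hF] at this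
    intro i hi
    by_contra hiτ
    exact hz.2 (Set.mem_iUnion.2 ⟨i, Set.mem_iUnion.2 ⟨hiτ, by rw [hF]; exact le_trans ((hmemν i).1 hi) hyz⟩⟩)
  · exact fun h => hσν.trans h
end

section
/- Let q be a prime power, d ≥ 1, and let L be the lattice of all F_q-linear subspaces of F_q^{d+1}, whose atoms are the one-dimensional subspaces; form the family F(L) = (F_a)_{a∈At} indexed by the set At of atoms, with F_a = {x ∈ L : a ≤ x}, and let α be the unique IE-vector for F(L) supported on V(F(L)). Then V(F(L)) = {At_W : W a nonzero subspace of F_q^{d+1}}, where At_W = {a ∈ At : a ≤ W}, and for every subspace W with dim_{F_q} W = k+1 (0 ≤ k ≤ d) one has α_{At_W} = (−1)^k · q^{k(k+1)/2}. -/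
open Finset
open scoped Classical

variable {ι S : Type*}

/-- The atoms of the lattice `L` of all `F_q`-linear subspaces of `F_q^{d+1}`, i.e. the
one-dimensional subspaces. -/
noncomputable instance atomsFintype (K : Type) [Field K] [Fintype K] (d : ℕ) :
    Fintype {W : Submodule K (Fin (d + 1) → K) // IsAtom W} :=
  have : Finite (Submodule K (Fin (d + 1) → K)) :=
    Finite.of_injective _ SetLike.coe_injective
  Fintype.ofFinite _

section AuxCounting

open Finset Module

variable {K : Type} [Field K] [Fintype K]

lemma natCard_module' (V : Type*) [AddCommGroup V] [Module K V] [Finite V] :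
    Nat.card V = Fintype.card K ^ finrank K V := by
  have := Fintype.ofFinite V
  rw [Nat.card_eq_fintype_card]
  exact card_eq_pow_finrank

omit [Fintype K] in
lemma finrank_atom' {M : Type*} [AddCommGroup M] [Module K M] {A : Submodule K M}
    (hA : IsAtom A) : finrank K A = 1 := by
  obtain ⟨v, hv, rfl⟩ := (atom_iff_nonzero_span A).mp hA
  exact finrank_span_singleton hv

lemma card_isCompl_atom' (E : Type*) [AddCommGroup E] [Module K E] [Finite E]
    (p : Submodule K E) (hp : finrank K p = 1) :
    Nat.card {q : Submodule K E // IsCompl p q} = Fintype.card K ^ (finrank K E - 1) := by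
  haveI : FiniteDimensional K E := (Module.finite_iff_finite (R := K)).mpr inferInstance
  haveI : Finite (E →ₗ[K] ↥p) := Finite.of_injective _ DFunLike.coe_injective
  obtain ⟨q₀, hq₀⟩ := Submodule.exists_isCompl p
  set f₀ : {f : E →ₗ[K] ↥p // ∀ x : ↥p, f x = x} := p.isComplEquivProj ⟨q₀, hq₀⟩ with hf₀
  set res : (E →ₗ[K] ↥p) →ₗ[K] (↥p →ₗ[K] ↥p) := LinearMap.domRestrict' p with hres
  have hres_apply : ∀ (f : E →ₗ[K] ↥p) (x : ↥p), res f x = f x := fun f x => rfl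
  have e2 : {f : E →ₗ[K] ↥p // ∀ x : ↥p, f x = x} ≃ LinearMap.ker res :=
    { toFun := fun f => ⟨f.1 - f₀.1, by
        rw [LinearMap.mem_ker]
        ext x
        simp [hres_apply, f.2 x, f₀.2 x]⟩
      invFun := fun g => ⟨g.1 + f₀.1, fun x => by
        have hg : res g.1 = 0 := g.2
        have hgx : res g.1 x = 0 := by rw [hg]; rfl
        rw [hres_apply] at hgx
        simp [hgx, f₀.2 x]⟩
      left_inv := fun f => by ext1; simp
      right_inv := fun g => by ext1; simp }
  have hsurj : LinearMap.range res = ⊤ := by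
    rw [LinearMap.range_eq_top]
    intro h
    refine ⟨h.comp f₀.1, ?_⟩
    ext x
    simp [hres_apply, f₀.2 x]
  have hrk : finrank K (LinearMap.ker res) = finrank K E - 1 := by
    have h1 := LinearMap.finrank_range_add_finrank_ker res
    rw [hsurj, finrank_top] at h1
    rw [Module.finrank_linearMap, Module.finrank_linearMap, hp] at h1
    have hpE : finrank K ↥p ≤ finrank K E := p.finrank_le
    omega
  rw [Nat.card_congr ((p.isComplEquivProj).trans e2),
    natCard_module' (K := K) ↥(LinearMap.ker res), hrk]

variable {M : Type} [AddCommGroup M] [Module K M] [Fintype M] [Fintype (Submodule K M)]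

lemma card_compl_filter' (A U : Submodule K M) (hA : IsAtom A) (hAU : A ≤ U) :
    (univ.filter (fun V : Submodule K M => V ⊓ A = ⊥ ∧ V ⊔ A = U)).card =
      Fintype.card K ^ (finrank K U - 1) := by
  have hinj : Function.Injective U.subtype := U.injective_subtype
  set p : Submodule K ↥U := A.comap U.subtype with hpdef
  have hpA : p.map U.subtype = A := by
    rw [Submodule.map_comap_subtype, inf_of_le_right hAU]
  have hp : finrank K ↥p = 1 := by
    rw [(Submodule.comapSubtypeEquivOfLe hAU).finrank_eq]
    exact finrank_atom' hA
  have e : {q : Submodule K ↥U // IsCompl p q} ≃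
      {V : Submodule K M // V ⊓ A = ⊥ ∧ V ⊔ A = U} := by
    refine
      { toFun := fun q => ⟨q.1.map U.subtype, ?_, ?_⟩
        invFun := fun V => ⟨V.1.comap U.subtype, ?_⟩
        left_inv := fun q => ?_
        right_inv := fun V => ?_ }
    · rw [← hpA, ← Submodule.map_inf _ hinj, inf_comm, q.2.inf_eq_bot, Submodule.map_bot]
    · rw [← hpA, ← Submodule.map_sup, sup_comm, q.2.sup_eq_top, Submodule.map_top,
        Submodule.range_subtype]
    · have hVU : V.1 ≤ U := le_sup_left.trans (le_of_eq V.2.2)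
      have hmapV : (V.1.comap U.subtype).map U.subtype = V.1 := by
        rw [Submodule.map_comap_subtype, inf_of_le_right hVU]
      have hmi : Function.Injective (Submodule.map U.subtype) :=
        Submodule.map_injective_of_injective hinj
      rw [isCompl_iff, disjoint_iff, codisjoint_iff]
      constructor
      · apply hmi
        rw [Submodule.map_inf _ hinj, hpA, hmapV, Submodule.map_bot, inf_comm, V.2.1]
      · apply hmi
        rw [Submodule.map_sup, hpA, hmapV, Submodule.map_top, Submodule.range_subtype,
          sup_comm, V.2.2]
    · ext1
      simp only
      rw [Submodule.comap_map_eq, Submodule.ker_subtype, sup_bot_eq]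
    · ext1
      simp only
      have hVU : V.1 ≤ U := le_sup_left.trans (le_of_eq V.2.2)
      rw [Submodule.map_comap_subtype, inf_of_le_right hVU]
  rw [← Fintype.card_subtype, ← Nat.card_eq_fintype_card, ← Nat.card_congr e,
    card_isCompl_atom' ↥U p hp]

noncomputable def sfun (q : ℕ) (n : ℕ) : ℝ := (-1) ^ n * (q : ℝ) ^ (n.choose 2)

lemma sfun_succ (q n : ℕ) : sfun q (n + 1) = -(q : ℝ) ^ n * sfun q n := by
  have h : (n + 1).choose 2 = n + n.choose 2 := by
    rw [show (2 : ℕ) = 1 + 1 from rfl, Nat.choose_succ_succ, Nat.choose_one_right]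
  unfold sfun
  rw [h, pow_add, pow_succ]
  ring

lemma sum_sfun' (W : Submodule K M) (hW : W ≠ ⊥) :
    ∑ V ∈ univ.filter (· ≤ W), sfun (Fintype.card K) (finrank K V) = 0 := by
  haveI : FiniteDimensional K M := (Module.finite_iff_finite (R := K)).mpr inferInstance
  obtain ⟨v, hvW, hv⟩ := (Submodule.ne_bot_iff W).mp hW
  set A := Submodule.span K {v} with hAdef
  have hA : IsAtom A := nonzero_span_atom v hv
  have hAW : A ≤ W := (Submodule.span_singleton_le_iff_mem v W).mpr hvW
  rw [← Finset.sum_fiberwise_of_maps_to (g := fun V => V ⊔ A)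
    (t := univ.filter fun U => A ≤ U ∧ U ≤ W)
    (fun V hV => by
      simp only [mem_filter, mem_univ, true_and] at hV ⊢
      exact ⟨le_sup_right, sup_le hV hAW⟩)]
  apply Finset.sum_eq_zero
  intro U hU
  simp only [mem_filter, mem_univ, true_and] at hU
  obtain ⟨hAU, hUW⟩ := hU
  have hUne : U ≠ ⊥ := fun h => hA.1 (le_bot_iff.mp (h ▸ hAU))
  have hUrk : finrank K U ≠ 0 := by
    rwa [ne_eq, Submodule.finrank_eq_zero]
  obtain ⟨m, hm⟩ : ∃ m, finrank K U = m + 1 := ⟨finrank K U - 1, by omega⟩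
  have hset : (univ.filter (· ≤ W)).filter (fun V => V ⊔ A = U)
      = insert U (univ.filter fun V : Submodule K M => V ⊓ A = ⊥ ∧ V ⊔ A = U) := by
    ext V
    simp only [mem_filter, mem_univ, true_and, mem_insert]
    constructor
    · rintro ⟨hVW, hVU⟩
      by_cases hAV : A ≤ V
      · left; rw [← hVU, sup_eq_left.mpr hAV]
      · right
        refine ⟨?_, hVU⟩
        have hlt : V ⊓ A < A := lt_of_le_of_ne inf_le_right (fun h => hAV (h ▸ inf_le_left))
        exact hA.2 _ hlt
    · rintro (rfl | ⟨h1, h2⟩)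
      · exact ⟨hUW, sup_eq_left.mpr hAU⟩
      · have hVU : V ≤ U := h2 ▸ le_sup_left
        exact ⟨hVU.trans hUW, h2⟩
  have hUnotmem : U ∉ univ.filter (fun V : Submodule K M => V ⊓ A = ⊥ ∧ V ⊔ A = U) := by
    simp only [mem_filter, mem_univ, true_and, not_and]
    intro h
    rw [inf_of_le_right hAU] at h
    exact absurd h hA.1
  rw [hset, Finset.sum_insert hUnotmem]
  have hconst : ∀ V ∈ univ.filter (fun V : Submodule K M => V ⊓ A = ⊥ ∧ V ⊔ A = U),
      sfun (Fintype.card K) (finrank K V) = sfun (Fintype.card K) m := by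
    intro V hV
    simp only [mem_filter, mem_univ, true_and] at hV
    have hh := Submodule.finrank_sup_add_finrank_inf_eq V A
    rw [hV.1, hV.2, finrank_bot] at hh
    have hA1 : finrank K A = 1 := finrank_atom' hA
    congr 1
    omega
  rw [Finset.sum_congr rfl hconst, Finset.sum_const, card_compl_filter' A U hA hAU, hm]
  simp only [Nat.add_sub_cancel, nsmul_eq_mul, Nat.cast_pow]
  rw [sfun_succ]
  ring

lemma sum_g' (W : Submodule K M) (hW : W ≠ ⊥) :
    ∑ V ∈ univ.filter (fun V : Submodule K M => V ≠ ⊥ ∧ V ≤ W),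
      (-sfun (Fintype.card K) (finrank K V)) = 1 := by
  have h := sum_sfun' W hW
  have hsplit : univ.filter (fun V : Submodule K M => V ≤ W)
      = insert ⊥ (univ.filter fun V : Submodule K M => V ≠ ⊥ ∧ V ≤ W) := by
    ext V
    simp only [mem_filter, mem_univ, true_and, mem_insert]
    constructor
    · intro hVW
      by_cases hb : V = ⊥
      exacts [Or.inl hb, Or.inr ⟨hb, hVW⟩]
    · rintro (rfl | ⟨-, hle⟩)
      exacts [bot_le, hle]
  rw [hsplit, Finset.sum_insert (by simp)] at h
  rw [finrank_bot] at h
  have h0 : sfun (Fintype.card K) 0 = 1 := by simp [sfun]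
  rw [Finset.sum_neg_distrib]
  linarith

end AuxCounting

/-- for the lattice `L` of subspaces of `F_q^{d+1}` (the finite field `F_q`
being modelled by a finite field `K` with `q = |K|` elements) and the family
`F_a = {x ∈ L : a ≤ x}` indexed by the atoms of `L`, the Venn diagram consists exactly of
the sets `At_W = {a : a ≤ W}` for nonzero subspaces `W`, and the unique IE-vector `α`
supported on the Venn diagram satisfies `α_{At_W} = (−1)^k q^{k(k+1)/2}` whenever
`dim W = k + 1` with `0 ≤ k ≤ d`. -/
theorem stmt18 (K : Type) [Field K] [Fintype K] (d : ℕ) (hd : 1 ≤ d)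
    (F : {W : Submodule K (Fin (d + 1) → K) // IsAtom W} →
      Set (Submodule K (Fin (d + 1) → K)))
    (hF : ∀ a, F a = {x | a.val ≤ x})
    (AtW : Submodule K (Fin (d + 1) → K) →
      Finset {W : Submodule K (Fin (d + 1) → K) // IsAtom W})
    (hAtW : ∀ W, AtW W = Finset.univ.filter (fun a => a.val ≤ W))
    (α : Finset {W : Submodule K (Fin (d + 1) → K) // IsAtom W} → ℝ)
    (hα : IsIEVector F α) (hsupp : ∀ σ, σ ∉ venn F → α σ = 0) :
    venn F = {τ | ∃ W : Submodule K (Fin (d + 1) → K), W ≠ ⊥ ∧ τ = AtW W} ∧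
    ∀ (W : Submodule K (Fin (d + 1) → K)) (k : ℕ), k ≤ d →
      Module.finrank K W = k + 1 →
      α (AtW W) = (-1 : ℝ) ^ k * (Fintype.card K : ℝ) ^ (k * (k + 1) / 2) := by
    classical
  haveI : Fintype (Submodule K (Fin (d + 1) → K)) :=
    have : Finite (Submodule K (Fin (d + 1) → K)) :=
      Finite.of_injective _ SetLike.coe_injective
    Fintype.ofFinite _
  haveI : FiniteDimensional K (Fin (d + 1) → K) := inferInstance
  have hmem : ∀ (a : {W : Submodule K (Fin (d + 1) → K) // IsAtom W})
      (W : Submodule K (Fin (d + 1) → K)), a ∈ AtW W ↔ a.val ≤ W := by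
    intro a W
    rw [hAtW]
    simp
  have hatom : ∀ W : Submodule K (Fin (d + 1) → K), W ≠ ⊥ →
      ∃ a : {W : Submodule K (Fin (d + 1) → K) // IsAtom W}, a.val ≤ W := by
    intro W hW
    obtain ⟨v, hvW, hv⟩ := (Submodule.ne_bot_iff W).mp hW
    exact ⟨⟨Submodule.span K {v}, nonzero_span_atom v hv⟩,
      (Submodule.span_singleton_le_iff_mem v W).mpr hvW⟩
  have hle_of_subset : ∀ V W : Submodule K (Fin (d + 1) → K), AtW V ⊆ AtW W → V ≤ W := by
    intro V W h
    conv_lhs => rw [← sSup_atoms_le_eq V]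
    apply sSup_le
    rintro b ⟨hb, hbV⟩
    exact (hmem ⟨b, hb⟩ W).mp (h ((hmem ⟨b, hb⟩ V).mpr hbV))
  have hsubset_of_le : ∀ V W : Submodule K (Fin (d + 1) → K), V ≤ W → AtW V ⊆ AtW W := by
    intro V W h a ha
    exact (hmem a W).mpr (((hmem a V).mp ha).trans h)
  have hvenn : venn F = {τ | ∃ W : Submodule K (Fin (d + 1) → K), W ≠ ⊥ ∧ τ = AtW W} := by
    ext τ
    constructor
    · rintro ⟨hne, x, hx1, hx2⟩
      have hin : ∀ a ∈ τ, a.val ≤ x := by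
        intro a ha
        have h := Set.mem_iInter₂.mp hx1 a ha
        rwa [hF, Set.mem_setOf_eq] at h
      have hout : ∀ a, a ∉ τ → ¬ a.val ≤ x := by
        intro a ha hax
        exact hx2 (Set.mem_iUnion₂.mpr ⟨a, ha, by rw [hF]; exact hax⟩)
      refine ⟨x, ?_, ?_⟩
      · obtain ⟨a, ha⟩ := hne
        intro hbot
        exact a.2.1 (le_bot_iff.mp (hbot ▸ hin a ha))
      · ext a
        rw [hmem]
        constructor
        · exact fun h => hin a h
        · intro h
          by_contra hc
          exact hout a hc h
    · rintro ⟨W, hWbot, rfl⟩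
      obtain ⟨a, haW⟩ := hatom W hWbot
      refine ⟨⟨a, (hmem a W).mpr haW⟩, W, ?_, ?_⟩
      · exact Set.mem_iInter₂.mpr fun b hb => by
          rw [hF]; exact (hmem b W).mp hb
      · intro hc
        obtain ⟨b, hb, hbW⟩ := Set.mem_iUnion₂.mp hc
        rw [hF, Set.mem_setOf_eq] at hbW
        exact hb ((hmem b W).mpr hbW)
  refine ⟨hvenn, ?_⟩
  have hnerve : ∀ σ : Finset {W : Submodule K (Fin (d + 1) → K) // IsAtom W},
      σ ∈ nerve F ↔ σ.Nonempty := by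
    intro σ
    refine ⟨fun h => h.1, fun h => ⟨h, ⟨(⊤ : Submodule K (Fin (d + 1) → K)), ?_⟩⟩⟩
    exact Set.mem_iInter₂.mpr fun a _ => by simp [hF]
  have hgAt : ∀ V : Submodule K (Fin (d + 1) → K),
      sSup (Subtype.val '' ((AtW V : Finset {W : Submodule K (Fin (d + 1) → K) // IsAtom W})
        : Set {W : Submodule K (Fin (d + 1) → K) // IsAtom W})) = V := by
    intro V
    have himg : Subtype.val '' ((AtW V : Finset _) :
        Set {W : Submodule K (Fin (d + 1) → K) // IsAtom W})
        = {b : Submodule K (Fin (d + 1) → K) | IsAtom b ∧ b ≤ V} := by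
      ext b
      simp only [Set.mem_image, Set.mem_setOf_eq, Finset.mem_coe]
      constructor
      · rintro ⟨a, ha, rfl⟩
        exact ⟨a.2, (hmem a V).mp ha⟩
      · rintro ⟨hb, hbV⟩
        exact ⟨⟨b, hb⟩, (hmem ⟨b, hb⟩ V).mpr hbV, rfl⟩
    rw [himg, sSup_atoms_le_eq]
  have hEq : ∀ W : Submodule K (Fin (d + 1) → K), W ≠ ⊥ →
      ∑ V ∈ univ.filter (fun V : Submodule K (Fin (d + 1) → K) => V ≠ ⊥ ∧ V ≤ W),
        α (AtW V) = 1 := by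
    intro W hW
    have h1 := hα.2 (AtW W) (by rw [hvenn]; exact ⟨W, hW, rfl⟩)
    have h2 : ∑ σ ∈ (AtW W).powerset.filter (fun σ => σ ∈ venn F), α σ = 1 := by
      rw [← h1]
      apply Finset.sum_subset
      · intro σ hσ
        simp only [mem_filter, mem_powerset] at hσ ⊢
        exact ⟨hσ.1, (hnerve σ).mpr hσ.2.1⟩
      · intro σ hσ hσP
        apply hsupp
        intro hc
        simp only [mem_filter, mem_powerset] at hσ
        exact hσP (by simp only [mem_filter, mem_powerset]; exact ⟨hσ.1, hc⟩)
    rw [← h2]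
    refine Finset.sum_bij' (fun V _ => AtW V)
      (fun σ _ => sSup (Subtype.val '' (σ : Set {W : Submodule K (Fin (d + 1) → K) // IsAtom W})))
      ?_ ?_ ?_ ?_ ?_
    · intro V hV
      simp only [mem_filter, mem_univ, true_and] at hV
      simp only [mem_filter, mem_powerset]
      exact ⟨hsubset_of_le _ _ hV.2, by rw [hvenn]; exact ⟨V, hV.1, rfl⟩⟩
    · intro σ hσ
      simp only [mem_filter, mem_powerset] at hσ
      obtain ⟨hsub, hv⟩ := hσ
      rw [hvenn] at hv
      obtain ⟨V, hVne, rfl⟩ := hv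
      simp only [mem_filter, mem_univ, true_and]
      rw [hgAt]
      exact ⟨hVne, hle_of_subset _ _ hsub⟩
    · intro V hV
      exact hgAt V
    · intro σ hσ
      simp only [mem_filter, mem_powerset] at hσ
      obtain ⟨hsub, hv⟩ := hσ
      rw [hvenn] at hv
      obtain ⟨V, hVne, rfl⟩ := hv
      simp only [hgAt]
    · intro V hV
      rfl
  have hmain : ∀ (n : ℕ) (W : Submodule K (Fin (d + 1) → K)), W ≠ ⊥ →
      Module.finrank K ↥W = n → α (AtW W) = -sfun (Fintype.card K) n := by
    intro n
    induction n using Nat.strong_induction_on with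
    | _ n ih =>
      intro W hW hrk
      have hD : W ∈ univ.filter (fun V : Submodule K (Fin (d + 1) → K) => V ≠ ⊥ ∧ V ≤ W) := by
        simp [hW]
      have h1 := hEq W hW
      have h2 := sum_g' W hW
      rw [← Finset.add_sum_erase _ _ hD] at h1 h2
      have h3 : ∀ V ∈ (univ.filter (fun V : Submodule K (Fin (d + 1) → K) =>
          V ≠ ⊥ ∧ V ≤ W)).erase W,
          α (AtW V) = -sfun (Fintype.card K) (Module.finrank K ↥V) := by
        intro V hV
        simp only [mem_erase, mem_filter, mem_univ, true_and] at hV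
        have hlt : V < W := lt_of_le_of_ne hV.2.2 hV.1
        exact ih (Module.finrank K ↥V) (hrk ▸ Submodule.finrank_lt_finrank_of_lt hlt)
          V hV.2.1 rfl
      rw [Finset.sum_congr rfl h3] at h1
      rw [hrk] at h2
      linarith
  intro W k hk hrkW
  have hWne : W ≠ ⊥ := by
    intro h
    rw [h, finrank_bot] at hrkW
    omega
  rw [hmain (k + 1) W hWne hrkW]
  unfold sfun
  rw [Nat.choose_two_right, Nat.add_sub_cancel, mul_comm (k + 1) k, pow_succ]
  ring
end
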